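/- arXiv:2203.13942 — 8 statements merged into one kernel-verified Lean document; each statement's English description precedes it below -/
import Mathlib

section
/- Let p be a real number and let ω be a complex number with strictly positive imaginary part. Then the principal value integral (1/(2πi)) ∫_{-∞}^{∞} e^{ips}/(s-ω) ds, defined as the limit as T → ∞ of (1/(2πi)) ∫_{-T}^{T} e^{ips}/(s-ω) ds, exists and equals H(p)·e^{ipω}. -/
open Complex Filter Set intervalIntegral MeasureTheory


lemma log_sub_log_neg {u : ℂ} (hu : 0 < u.im) :
    Complex.log u - Complex.log (-u) = Real.pi * I := by
  rw [Complex.log, Complex.log, norm_neg, Complex.arg_neg_eq_arg_sub_pi_of_im_pos hu]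
  push_cast
  ring

lemma log_neg_sub_log {v : ℂ} (hv : v.im < 0) :
    Complex.log (-v) - Complex.log v = Real.pi * I := by
  rw [Complex.log, Complex.log, norm_neg, Complex.arg_neg_eq_arg_add_pi_of_im_neg hv]
  push_cast
  ring


lemma neg_I_mul_mul_I (w : ℂ) : -I * (w * I) = w := by
  rw [mul_comm w I, ← mul_assoc, neg_mul, Complex.I_mul_I, neg_neg, one_mul]

lemma neg_I_mul_mul_neg_I (w : ℂ) : -I * (w * -I) = -w := by
  rw [mul_comm w (-I), ← mul_assoc]
  simp [Complex.I_mul_I]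

lemma horizFTC (ω : ℂ) (c : ℝ) (hc : c ≠ ω.im) (a b : ℝ) :
    ∫ x in a..b, ((x : ℂ) + c * I - ω)⁻¹ =
      Complex.log ((b : ℂ) + c * I - ω) - Complex.log ((a : ℂ) + c * I - ω) := by
  have hmem : ∀ x : ℝ, ((x : ℂ) + c * I - ω) ∈ Complex.slitPlane := by
    intro x
    rw [Complex.mem_slitPlane_iff]
    right
    simp [sub_ne_zero, hc]
  have hne : ∀ x : ℝ, ((x : ℂ) + c * I - ω) ≠ 0 := fun x => slitPlane_ne_zero (hmem x)
  have key : ∀ x : ℝ, HasDerivAt (fun t : ℝ => Complex.log ((t : ℂ) + c * I - ω))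
      (((x : ℂ) + c * I - ω)⁻¹) x := by
    intro x
    have h1 : HasDerivAt (fun z : ℂ => Complex.log (z + c * I - ω))
        (((x : ℂ) + c * I - ω)⁻¹) (x : ℂ) := by
      have hin : HasDerivAt (fun z : ℂ => z + c * I - ω) 1 (x : ℂ) :=
        ((hasDerivAt_id _).add_const _).sub_const _
      have := (Complex.hasDerivAt_log (hmem x)).comp (x : ℂ) hin
      simp only [mul_one] at this
      exact this
    exact h1.comp_ofReal
  refine integral_eq_sub_of_hasDerivAt (fun x _ => key x) ?_
  refine (ContinuousOn.inv₀ ?_ ?_).intervalIntegrable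
  · exact (((Complex.continuous_ofReal.add continuous_const).sub continuous_const)).continuousOn
  · exact fun x _ => hne x

lemma vertFTC (ω : ℂ) (r : ℝ) (hr : ω.re < r) (a b : ℝ) :
    ∫ y in a..b, ((r : ℂ) + y * I - ω)⁻¹ =
      -I * (Complex.log ((r : ℂ) + b * I - ω) - Complex.log ((r : ℂ) + a * I - ω)) := by
  have hmem : ∀ y : ℝ, ((r : ℂ) + y * I - ω) ∈ Complex.slitPlane := by
    intro y
    rw [Complex.mem_slitPlane_iff]
    left
    simp [hr]
  have hne : ∀ y : ℝ, ((r : ℂ) + y * I - ω) ≠ 0 := fun y => slitPlane_ne_zero (hmem y)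
  have key : ∀ y : ℝ, HasDerivAt (fun t : ℝ => -I * Complex.log ((r : ℂ) + t * I - ω))
      (((r : ℂ) + y * I - ω)⁻¹) y := by
    intro y
    have h1 : HasDerivAt (fun z : ℂ => -I * Complex.log ((r : ℂ) + z * I - ω))
        (((r : ℂ) + y * I - ω)⁻¹) (y : ℂ) := by
      have hin : HasDerivAt (fun z : ℂ => (r : ℂ) + z * I - ω) I (y : ℂ) := by
        simpa using (((hasDerivAt_id ((y:ℝ) : ℂ)).mul_const I).const_add ((r : ℝ) : ℂ)).sub_const ω
      have h2 := ((Complex.hasDerivAt_log (hmem y)).comp ((y:ℝ) : ℂ) hin).const_mul (-I)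
      refine h2.congr_deriv ?_
      exact neg_I_mul_mul_I _
    exact h1.comp_ofReal
  have hint : IntervalIntegrable (fun y : ℝ => ((r : ℂ) + y * I - ω)⁻¹) MeasureTheory.volume a b := by
    refine (ContinuousOn.inv₀ ?_ ?_).intervalIntegrable
    · exact ((continuous_const.add (Complex.continuous_ofReal.mul continuous_const)).sub
        continuous_const).continuousOn
    · exact fun y _ => hne y
  rw [integral_eq_sub_of_hasDerivAt (fun y _ => key y) hint]
  ring

lemma vertFTC' (ω : ℂ) (r : ℝ) (hr : r < ω.re) (a b : ℝ) :
    ∫ y in a..b, ((r : ℂ) + y * I - ω)⁻¹ =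
      -I * (Complex.log (ω - ((r : ℂ) + b * I)) - Complex.log (ω - ((r : ℂ) + a * I))) := by
  have hmem : ∀ y : ℝ, (ω - ((r : ℂ) + y * I)) ∈ Complex.slitPlane := by
    intro y
    rw [Complex.mem_slitPlane_iff]
    left
    simp [hr, sub_pos]
  have hne : ∀ y : ℝ, ((r : ℂ) + y * I - ω) ≠ 0 := by
    intro y h
    apply slitPlane_ne_zero (hmem y)
    rw [← neg_eq_zero, neg_sub] at h
    exact h
  have key : ∀ y : ℝ, HasDerivAt (fun t : ℝ => -I * Complex.log (ω - ((r : ℂ) + t * I)))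
      (((r : ℂ) + y * I - ω)⁻¹) y := by
    intro y
    have h1 : HasDerivAt (fun z : ℂ => -I * Complex.log (ω - ((r : ℂ) + z * I)))
        (((r : ℂ) + y * I - ω)⁻¹) (y : ℂ) := by
      have hin : HasDerivAt (fun z : ℂ => ω - ((r : ℂ) + z * I)) (-I) (y : ℂ) := by
        simpa using (((hasDerivAt_id ((y:ℝ) : ℂ)).mul_const I).const_add ((r : ℝ) : ℂ)).const_sub ω
      have h2 := ((Complex.hasDerivAt_log (hmem y)).comp ((y:ℝ) : ℂ) hin).const_mul (-I)
      refine h2.congr_deriv ?_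
      rw [neg_I_mul_mul_neg_I, ← inv_neg, neg_sub]
    exact h1.comp_ofReal
  have hint : IntervalIntegrable (fun y : ℝ => ((r : ℂ) + y * I - ω)⁻¹) MeasureTheory.volume a b := by
    refine (ContinuousOn.inv₀ ?_ ?_).intervalIntegrable
    · exact ((continuous_const.add (Complex.continuous_ofReal.mul continuous_const)).sub
        continuous_const).continuousOn
    · exact fun y _ => hne y
  rw [integral_eq_sub_of_hasDerivAt (fun y _ => key y) hint]
  ring


lemma tendsto_inv_ofReal : Tendsto (fun T : ℝ => ((T : ℂ))⁻¹) atTop (nhds 0) := by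
  have h := (Complex.continuous_ofReal.tendsto 0).comp tendsto_inv_atTop_zero
  simpa [Function.comp_def] using h

lemma tendsto_one_add_div (a : ℂ) : Tendsto (fun T : ℝ => 1 + a / (T : ℂ)) atTop (nhds 1) := by
  have h : Tendsto (fun T : ℝ => a / (T : ℂ)) atTop (nhds 0) := by
    simp only [div_eq_mul_inv]
    simpa using tendsto_const_nhds.mul tendsto_inv_ofReal
  simpa using tendsto_const_nhds.add h

lemma abs_ofReal_add_pos {a : ℂ} {T : ℝ} (hT : ‖a‖ < T) (hT0 : 0 < T) :
    0 < ‖((T : ℂ) + a)‖ := by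
  have h1 : (T : ℝ) ≤ ‖((T : ℂ) + a)‖ + ‖a‖ := by
    calc (T : ℝ) = ‖((T : ℂ))‖ := by simp [abs_of_pos hT0]
    _ = ‖(((T : ℂ) + a) + (-a))‖ := by ring_nf
    _ ≤ ‖((T : ℂ) + a)‖ + ‖(-a)‖ := norm_add_le _ _
    _ = ‖((T : ℂ) + a)‖ + ‖a‖ := by rw [norm_neg]
  linarith

lemma tendsto_arg_ofReal_add (a : ℂ) :
    Tendsto (fun T : ℝ => Complex.arg ((T : ℂ) + a)) atTop (nhds 0) := by
  have hc : ContinuousAt Complex.arg 1 := Complex.continuousAt_arg (by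
    rw [Complex.mem_slitPlane_iff]; left; norm_num)
  have h := hc.tendsto.comp (tendsto_one_add_div a)
  rw [Complex.arg_one] at h
  apply h.congr'
  filter_upwards [eventually_gt_atTop 0] with T hT
  have hT0 : (T : ℂ) ≠ 0 := by exact_mod_cast hT.ne'
  have : (T : ℂ) + a = (T : ℝ) * (1 + a / (T : ℂ)) := by field_simp
  rw [Function.comp_apply, ← Complex.arg_real_mul _ hT, ← this]

lemma tendsto_log_sub_log (a b : ℂ) :
    Tendsto (fun T : ℝ => Complex.log ((T : ℂ) + a) - Complex.log ((T : ℂ) + b))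
      atTop (nhds 0) := by
  have habs : Tendsto (fun T : ℝ =>
      Real.log (‖((T : ℂ) + a)‖) - Real.log (‖((T : ℂ) + b)‖))
      atTop (nhds 0) := by
    have hq : Tendsto (fun T : ℝ => (1 + a / (T : ℂ)) / (1 + b / (T : ℂ))) atTop (nhds 1) := by
      simpa [Pi.div_def] using (tendsto_one_add_div a).div (tendsto_one_add_div b) one_ne_zero
    have hl : Tendsto (fun T : ℝ =>
        Real.log (‖((1 + a / (T : ℂ)) / (1 + b / (T : ℂ)))‖)) atTop (nhds 0) := by
      have := (Real.continuousAt_log (by norm_num)).tendsto.comp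
        ((continuous_norm.tendsto 1).comp hq)
      simpa only [Function.comp_def, norm_one, Real.log_one] using this
    apply hl.congr'
    filter_upwards [eventually_gt_atTop (max (‖a‖) (‖b‖)),
      eventually_gt_atTop 0] with T hT hT0
    have hTa : 0 < ‖((T : ℂ) + a)‖ :=
      abs_ofReal_add_pos (lt_of_le_of_lt (le_max_left _ _) hT) hT0
    have hTb : 0 < ‖((T : ℂ) + b)‖ :=
      abs_ofReal_add_pos (lt_of_le_of_lt (le_max_right _ _) hT) hT0
    have hT0' : (T : ℂ) ≠ 0 := by exact_mod_cast hT0.ne'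
    have hTbne : (T : ℂ) + b ≠ 0 := by
      intro h; rw [h] at hTb; simp at hTb
    have e1 : 1 + a / (T : ℂ) = ((T : ℂ) + a) / T := by field_simp
    have e2 : 1 + b / (T : ℂ) = ((T : ℂ) + b) / T := by field_simp
    rw [e1, e2, div_div_div_comm, div_self hT0', div_one, norm_div,
      Real.log_div hTa.ne' hTb.ne']
  have harg : Tendsto (fun T : ℝ =>
      Complex.arg ((T : ℂ) + a) - Complex.arg ((T : ℂ) + b)) atTop (nhds 0) := by
    simpa using (tendsto_arg_ofReal_add a).sub (tendsto_arg_ofReal_add b)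
  have key : ∀ T : ℝ,
      Complex.log ((T : ℂ) + a) - Complex.log ((T : ℂ) + b) =
        ((Real.log (‖((T : ℂ) + a)‖) - Real.log (‖((T : ℂ) + b)‖) : ℝ) : ℂ)
          + ((Complex.arg ((T : ℂ) + a) - Complex.arg ((T : ℂ) + b) : ℝ) : ℂ) * I := by
    intro T
    rw [Complex.log, Complex.log]
    push_cast
    ring
  simp only [key]
  have h1 := (Complex.continuous_ofReal.tendsto 0).comp habs
  have h2 := ((Complex.continuous_ofReal.tendsto 0).comp harg).mul_const I
  simpa only [Function.comp_def, Complex.ofReal_zero, zero_mul, add_zero] using h1.add h2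


lemma integral_exp_eq (c : ℝ) (hc : c ≠ 0) (a b : ℝ) :
    ∫ y in a..b, Real.exp (c * y) = (Real.exp (c * b) - Real.exp (c * a)) / c := by
  have key : ∀ y : ℝ, HasDerivAt (fun t : ℝ => Real.exp (c * t) / c) (Real.exp (c * y)) y := by
    intro y
    have h := (((hasDerivAt_id y).const_mul c).exp).div_const c
    refine h.congr_deriv ?_
    simp [hc]
  rw [integral_eq_sub_of_hasDerivAt (fun y _ => key y) ((Real.continuous_exp.comp (continuous_const.mul continuous_id)).intervalIntegrable _ _)]
  ring

lemma norm_exp_div (p : ℝ) (ω z : ℂ) :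
    ‖Complex.exp (I * p * z) / (z - ω)‖ = Real.exp (-(p * z.im)) / ‖(z - ω)‖ := by
  rw [norm_div, Complex.norm_exp]
  congr 2
  simp [Complex.mul_re]

lemma diff_exp_div (p : ℝ) (ω : ℂ) {z : ℂ} (hz : z ≠ ω) :
    DifferentiableAt ℂ (fun z : ℂ => Complex.exp (I * p * z) / (z - ω)) z := by
  apply DifferentiableAt.div
  · exact (Complex.differentiable_exp.comp ((differentiable_id.const_mul (I * p)))).differentiableAt
  · exact differentiableAt_id.sub (differentiableAt_const ω)
  · exact sub_ne_zero.mpr hz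

lemma diff_dslope_exp (p : ℝ) (ω : ℂ) :
    Differentiable ℂ (dslope (fun z : ℂ => Complex.exp (I * p * z)) ω) := by
  intro z
  rcases eq_or_ne z ω with rfl | hz
  · have hga : AnalyticAt ℂ (fun z : ℂ => Complex.exp (I * p * z)) z :=
      (Complex.differentiable_exp.comp ((differentiable_id.const_mul (I * p)))).analyticAt z
    rcases hga with ⟨q, hq⟩
    exact hq.has_fpower_series_dslope_fslope.analyticAt.differentiableAt
  · exact (differentiableAt_dslope_of_ne hz).mpr
      ((Complex.differentiable_exp.comp ((differentiable_id.const_mul (I * p)))).differentiableAt)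

lemma case_zero (ω : ℂ) (hω : 0 < ω.im) :
    Tendsto (fun T : ℝ => ∫ s in (-T)..T, ((s : ℂ) - ω)⁻¹) atTop
      (nhds (Real.pi * I)) := by
  have key : ∀ T : ℝ, (∫ s in (-T)..T, ((s : ℂ) - ω)⁻¹) =
      (Complex.log ((T : ℂ) + -ω) - Complex.log ((T : ℂ) + ω)) + Real.pi * I := by
    intro T
    have h := horizFTC ω 0 hω.ne (-T) T
    simp only [Complex.ofReal_zero, zero_mul, add_zero] at h
    rw [h]
    have hu : Complex.log ((T : ℂ) + ω) - Complex.log (-((T : ℂ) + ω)) = Real.pi * I :=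
      log_sub_log_neg (by simpa using hω)
    rw [show ((-T : ℝ) : ℂ) - ω = -((T : ℂ) + ω) by push_cast; ring,
      show ((T : ℝ) : ℂ) - ω = (T : ℂ) + -ω by ring]
    linear_combination hu
  simp only [key]
  simpa using (tendsto_log_sub_log (-ω) ω).add_const ((Real.pi : ℂ) * I)

lemma case_neg (p : ℝ) (ω : ℂ) (hω : 0 < ω.im) (hp : p < 0) :
    Tendsto (fun T : ℝ => ∫ s in (-T)..T, Complex.exp (I * p * s) / ((s : ℂ) - ω))
      atTop (nhds 0) := by
  have hmp : (0:ℝ) < -p := by linarith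
  apply squeeze_zero_norm'
    (a := fun T : ℝ => 2 * Real.exp (p * T) + ((1/(-p)) * (2/T) + (1/(-p)) * (2/T)))
  · filter_upwards [eventually_ge_atTop (2 * (‖ω‖ + 1))] with T hT
    have habs : (0:ℝ) ≤ ‖ω‖ := norm_nonneg ω
    have hT0 : 0 < T := by linarith
    have hhalf : ‖ω‖ + 1 ≤ T / 2 := by linarith
    -- rectangle contour
    have hrect := Complex.integral_boundary_rect_eq_zero_of_differentiableOn
        (fun z : ℂ => Complex.exp (I * p * z) / (z - ω))
        (((-T : ℝ) : ℂ) + ((-T : ℝ) : ℂ) * I) ((T : ℝ) : ℂ) ?_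
    swap
    · intro z hz
      apply (diff_exp_div p ω ?_).differentiableWithinAt
      intro h
      rw [Complex.mem_reProdIm] at hz
      have h2 := hz.2
      simp only [Complex.add_im, Complex.ofReal_im, Complex.mul_im, Complex.I_im,
        Complex.I_re, Complex.ofReal_re, mul_zero, mul_one, zero_add, zero_mul, add_zero,
        Complex.neg_im, Complex.neg_re] at h2
      rw [Set.uIcc_of_le (by linarith : (-T:ℝ) ≤ 0), h] at h2
      exact absurd h2.2 (by linarith)
    simp only [Complex.add_re, Complex.add_im, Complex.ofReal_re, Complex.ofReal_im,
      Complex.mul_re, Complex.mul_im, Complex.I_re, Complex.I_im, mul_zero, mul_one,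
      zero_mul, sub_zero, add_zero, zero_add, zero_sub, smul_eq_mul, neg_zero, neg_neg,
      Complex.neg_re, Complex.neg_im, Complex.ofReal_zero, Complex.ofReal_neg] at hrect
    have hA : (∫ s in (-T)..T, Complex.exp (I * p * s) / ((s : ℂ) - ω)) =
        (∫ x in (-T)..T, Complex.exp (I * p * ((x : ℂ) + -(T:ℂ) * I)) / ((x : ℂ) + -(T:ℂ) * I - ω))
        + I * (∫ y in (-T)..(0:ℝ), Complex.exp (I * p * ((T : ℂ) + (y:ℂ) * I)) / ((T : ℂ) + (y:ℂ) * I - ω))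
        - I * (∫ y in (-T)..(0:ℝ), Complex.exp (I * p * (-(T : ℂ) + (y:ℂ) * I)) / (-(T : ℂ) + (y:ℂ) * I - ω)) := by
      linear_combination -hrect
    rw [hA]
    have hB : ‖∫ x in (-T)..T, Complex.exp (I * p * ((x : ℂ) + -(T:ℂ) * I)) /
        ((x : ℂ) + -(T:ℂ) * I - ω)‖ ≤ 2 * Real.exp (p * T) := by
      have hb := intervalIntegral.norm_integral_le_of_norm_le_const
        (C := Real.exp (p * T) / T)
        (f := fun x : ℝ => Complex.exp (I * p * ((x : ℂ) + -(T:ℂ) * I)) / ((x : ℂ) + -(T:ℂ) * I - ω))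
        (a := -T) (b := T) ?_
      · calc _ ≤ Real.exp (p*T)/T * |T - (-T)| := hb
        _ = 2 * Real.exp (p * T) := by rw [abs_of_pos (by linarith)]; field_simp; ring
      · intro x _
        rw [norm_exp_div]
        have him : ((x : ℂ) + -(T:ℂ) * I).im = -T := by simp
        rw [him, show -(p * -T) = p * T by ring]
        have hd : T ≤ ‖((x : ℂ) + -(T:ℂ) * I - ω)‖ := by
          refine le_trans ?_ (Complex.abs_im_le_norm _)
          have : ((x : ℂ) + -(T:ℂ) * I - ω).im = -T - ω.im := by simp
          rw [this, abs_of_neg (by linarith)]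
          linarith
        gcongr
    have hre := abs_le.mp (le_trans (Complex.abs_re_le_norm ω) (by linarith : ‖ω‖ ≤ T/2))
    have hside : ∀ r : ℝ, (T/2 ≤ |r - ω.re|) →
        ‖∫ y in (-T)..(0:ℝ), Complex.exp (I * p * ((r : ℂ) + (y:ℂ) * I)) /
          ((r : ℂ) + (y:ℂ) * I - ω)‖ ≤ (1/(-p)) * (2/T) := by
      intro r hr
      have hd : ∀ y : ℝ, T/2 ≤ ‖((r : ℂ) + (y:ℂ) * I - ω)‖ := by
        intro y
        refine le_trans ?_ (Complex.abs_re_le_norm _)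
        have : ((r : ℂ) + (y:ℂ) * I - ω).re = r - ω.re := by simp
        rw [this]
        exact hr
      refine le_trans (intervalIntegral.norm_integral_le_of_norm_le
        (g := fun y : ℝ => Real.exp (-p * y) / (T/2)) (by linarith) ?_ ?_) ?_
      · refine Filter.Eventually.of_forall fun y _ => ?_
        rw [norm_exp_div]
        have him : ((r : ℂ) + (y:ℂ) * I).im = y := by simp
        rw [him, show -(p*y) = -p*y by ring]
        exact div_le_div_of_nonneg_left (Real.exp_nonneg _) (by linarith) (hd y)
      · exact ((Real.continuous_exp.comp (continuous_const.mul continuous_id)).div_const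
          _).intervalIntegrable _ _
      · rw [intervalIntegral.integral_div, integral_exp_eq (-p) hmp.ne', mul_zero,
          Real.exp_zero, show -p * -T = p * T by ring]
        have he1 : Real.exp (p * T) ≤ 1 := Real.exp_le_one_iff.mpr (by nlinarith)
        have he0 := Real.exp_pos (p*T)
        calc (1 - Real.exp (p*T))/(-p)/(T/2) ≤ 1/(-p)/(T/2) := by gcongr <;> linarith
        _ = 1/(-p) * (2/T) := by field_simp
    have hR := hside T (by rw [_root_.abs_of_nonneg (by linarith [hre.2])]; linarith [hre.2])
    have hL' : T/2 ≤ |(-T) - ω.re| := by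
      rw [abs_sub_comm, _root_.abs_of_nonneg (by linarith [hre.1])]
      linarith [hre.1]
    have hL := hside (-T) hL'
    push_cast at hL
    calc ‖((∫ x in (-T)..T, Complex.exp (I * p * ((x : ℂ) + -(T:ℂ) * I)) / ((x : ℂ) + -(T:ℂ) * I - ω))
        + I * (∫ y in (-T)..(0:ℝ), Complex.exp (I * p * ((T : ℂ) + (y:ℂ) * I)) / ((T : ℂ) + (y:ℂ) * I - ω)))
        - I * (∫ y in (-T)..(0:ℝ), Complex.exp (I * p * (-(T : ℂ) + (y:ℂ) * I)) / (-(T : ℂ) + (y:ℂ) * I - ω))‖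
        ≤ ‖(∫ x in (-T)..T, Complex.exp (I * p * ((x : ℂ) + -(T:ℂ) * I)) / ((x : ℂ) + -(T:ℂ) * I - ω))
        + I * (∫ y in (-T)..(0:ℝ), Complex.exp (I * p * ((T : ℂ) + (y:ℂ) * I)) / ((T : ℂ) + (y:ℂ) * I - ω))‖
        + ‖I * (∫ y in (-T)..(0:ℝ), Complex.exp (I * p * (-(T : ℂ) + (y:ℂ) * I)) / (-(T : ℂ) + (y:ℂ) * I - ω))‖ :=
          norm_sub_le _ _
    _ ≤ (‖(∫ x in (-T)..T, Complex.exp (I * p * ((x : ℂ) + -(T:ℂ) * I)) / ((x : ℂ) + -(T:ℂ) * I - ω))‖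
        + ‖I * (∫ y in (-T)..(0:ℝ), Complex.exp (I * p * ((T : ℂ) + (y:ℂ) * I)) / ((T : ℂ) + (y:ℂ) * I - ω))‖)
        + ‖I * (∫ y in (-T)..(0:ℝ), Complex.exp (I * p * (-(T : ℂ) + (y:ℂ) * I)) / (-(T : ℂ) + (y:ℂ) * I - ω))‖ := by
          gcongr
          exact norm_add_le _ _
    _ ≤ 2 * Real.exp (p * T) + ((1/(-p)) * (2/T) + (1/(-p)) * (2/T)) := by
          rw [norm_mul, norm_mul, Complex.norm_I, one_mul, one_mul]
          have := hB
          linarith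
  · have hexp : Tendsto (fun T : ℝ => Real.exp (p*T)) atTop (nhds 0) := by
      have h1 : Tendsto (fun T : ℝ => -p*T) atTop atTop :=
        Tendsto.const_mul_atTop hmp tendsto_id
      have h2 : Tendsto (fun T : ℝ => p*T) atTop atBot := by
        have h3 := tendsto_neg_atTop_atBot.comp h1
        refine h3.congr fun T => by simp [Function.comp]
      exact Real.tendsto_exp_atBot.comp h2
    have hinv : Tendsto (fun T : ℝ => 2/T) atTop (nhds 0) :=
      tendsto_const_nhds.div_atTop tendsto_id
    have := (hexp.const_mul 2).add ((hinv.const_mul (1/(-p))).add (hinv.const_mul (1/(-p))))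
    simpa using this

lemma I_mul_negI_mul (w : ℂ) : I * (-I * w) = w := by
  rw [← mul_assoc, mul_neg, Complex.I_mul_I, neg_neg, one_mul]

lemma edge_split (p : ℝ) (ω : ℂ) (φ : ℝ → ℂ) (a b : ℝ) (hφ : Continuous φ)
    (h : ∀ t ∈ Set.uIcc a b, φ t ≠ ω) :
    ∫ t in a..b, dslope (fun z : ℂ => Complex.exp (I * p * z)) ω (φ t) =
      (∫ t in a..b, Complex.exp (I * p * (φ t)) / (φ t - ω)) -
        Complex.exp (I * p * ω) * ∫ t in a..b, (φ t - ω)⁻¹ := by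
  have hsub : ∀ t ∈ Set.uIcc a b, φ t - ω ≠ 0 := fun t ht => sub_ne_zero.mpr (h t ht)
  have hcont1 : ContinuousOn (fun t => Complex.exp (I * p * (φ t)) / (φ t - ω)) (Set.uIcc a b) :=
    ((Complex.continuous_exp.comp (continuous_const.mul hφ)).continuousOn).div
      ((hφ.sub continuous_const).continuousOn) hsub
  have hcont2 : ContinuousOn (fun t : ℝ => (φ t - ω)⁻¹) (Set.uIcc a b) :=
    ((hφ.sub continuous_const).continuousOn).inv₀ hsub
  have heq : Set.EqOn (fun t => dslope (fun z : ℂ => Complex.exp (I * p * z)) ω (φ t))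
      (fun t => Complex.exp (I * p * (φ t)) / (φ t - ω)
        - Complex.exp (I * p * ω) * (φ t - ω)⁻¹) (Set.uIcc a b) := by
    intro t ht
    simp only
    rw [dslope_of_ne _ (h t ht), slope_def_field]
    field_simp [hsub t ht]
  rw [intervalIntegral.integral_congr heq,
    intervalIntegral.integral_sub hcont1.intervalIntegrable
      (hcont2.intervalIntegrable.const_mul _),
    intervalIntegral.integral_const_mul]

lemma case_pos (p : ℝ) (ω : ℂ) (hω : 0 < ω.im) (hp : 0 < p) :
    Tendsto (fun T : ℝ => ∫ s in (-T)..T, Complex.exp (I * p * s) / ((s : ℂ) - ω))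
      atTop (nhds (2 * Real.pi * I * Complex.exp (I * p * ω))) := by
  have key : ∀ᶠ T in atTop,
      (∫ s in (-T)..T, Complex.exp (I * p * s) / ((s : ℂ) - ω)) =
      (((∫ x in (-T)..T, Complex.exp (I * p * ((x:ℂ) + (T:ℂ)*I)) / ((x:ℂ) + (T:ℂ)*I - ω))
       - I * (∫ y in (0:ℝ)..T, Complex.exp (I * p * ((T:ℂ) + (y:ℂ)*I)) / ((T:ℂ) + (y:ℂ)*I - ω)))
       + I * (∫ y in (0:ℝ)..T, Complex.exp (I * p * (-(T:ℂ) + (y:ℂ)*I)) / (-(T:ℂ) + (y:ℂ)*I - ω)))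
      + Complex.exp (I * p * ω) * (2 * Real.pi * I) := by
    filter_upwards [eventually_ge_atTop (2 * (‖ω‖ + 1))] with T hT
    have habs : (0:ℝ) ≤ ‖ω‖ := norm_nonneg ω
    have hT0 : 0 < T := by linarith
    have hhalf : ‖ω‖ + 1 ≤ T / 2 := by linarith
    have him : ω.im < T := by
      have := Complex.abs_im_le_norm ω
      have := le_abs_self ω.im
      linarith
    have hre := abs_le.mp (le_trans (Complex.abs_re_le_norm ω) (by linarith : ‖ω‖ ≤ T/2))
    have hrect := Complex.integral_boundary_rect_eq_zero_of_differentiableOn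
        (dslope (fun z : ℂ => Complex.exp (I * p * z)) ω)
        (((-T : ℝ) : ℂ)) (((T : ℝ) : ℂ) + ((T : ℝ) : ℂ) * I)
        ((diff_dslope_exp p ω).differentiableOn)
    simp only [Complex.add_re, Complex.add_im, Complex.ofReal_re, Complex.ofReal_im,
      Complex.mul_re, Complex.mul_im, Complex.I_re, Complex.I_im, mul_zero, mul_one,
      zero_mul, sub_zero, add_zero, zero_add, zero_sub, smul_eq_mul, neg_zero, neg_neg,
      Complex.neg_re, Complex.neg_im, Complex.ofReal_zero, Complex.ofReal_neg] at hrect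
    -- edge splits
    have hBot : (∫ x in (-T)..T, dslope (fun z : ℂ => Complex.exp (I * p * z)) ω ((x:ℂ))) =
        (∫ x in (-T)..T, Complex.exp (I * p * ((x:ℂ))) / ((x:ℂ) - ω)) -
          Complex.exp (I * p * ω) * ∫ x in (-T)..T, ((x:ℂ) - ω)⁻¹ :=
      edge_split p ω (fun x : ℝ => (x:ℂ)) (-T) T Complex.continuous_ofReal
        (fun t _ => by
          intro hEq
          have h2 := congrArg Complex.im hEq
          simp only [Complex.ofReal_im] at h2
          linarith)
    have hTopE : (∫ x in (-T)..T, dslope (fun z : ℂ => Complex.exp (I * p * z)) ω ((x:ℂ) + (T:ℂ)*I)) =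
        (∫ x in (-T)..T, Complex.exp (I * p * ((x:ℂ) + (T:ℂ)*I)) / ((x:ℂ) + (T:ℂ)*I - ω)) -
          Complex.exp (I * p * ω) * ∫ x in (-T)..T, ((x:ℂ) + (T:ℂ)*I - ω)⁻¹ :=
      edge_split p ω (fun x : ℝ => (x:ℂ) + (T:ℂ)*I) (-T) T
        (Complex.continuous_ofReal.add continuous_const)
        (fun t _ => by
          intro hEq
          have h2 := congrArg Complex.im hEq
          simp only [Complex.add_im, Complex.ofReal_im, Complex.mul_im, Complex.I_im,
            Complex.I_re, Complex.ofReal_re, mul_zero, mul_one, zero_add, zero_mul,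
            add_zero] at h2
          linarith)
    have hRE : (∫ y in (0:ℝ)..T, dslope (fun z : ℂ => Complex.exp (I * p * z)) ω ((T:ℂ) + (y:ℂ)*I)) =
        (∫ y in (0:ℝ)..T, Complex.exp (I * p * ((T:ℂ) + (y:ℂ)*I)) / ((T:ℂ) + (y:ℂ)*I - ω)) -
          Complex.exp (I * p * ω) * ∫ y in (0:ℝ)..T, ((T:ℂ) + (y:ℂ)*I - ω)⁻¹ :=
      edge_split p ω (fun y : ℝ => (T:ℂ) + (y:ℂ)*I) 0 T
        (continuous_const.add (Complex.continuous_ofReal.mul continuous_const))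
        (fun t _ => by
          intro hEq
          have h2 := congrArg Complex.re hEq
          simp only [Complex.add_re, Complex.ofReal_re, Complex.mul_re, Complex.I_re,
            Complex.I_im, Complex.ofReal_im, mul_zero, mul_one, zero_mul, sub_zero,
            add_zero, zero_sub] at h2
          linarith [hre.2])
    have hLE : (∫ y in (0:ℝ)..T, dslope (fun z : ℂ => Complex.exp (I * p * z)) ω (-(T:ℂ) + (y:ℂ)*I)) =
        (∫ y in (0:ℝ)..T, Complex.exp (I * p * (-(T:ℂ) + (y:ℂ)*I)) / (-(T:ℂ) + (y:ℂ)*I - ω)) -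
          Complex.exp (I * p * ω) * ∫ y in (0:ℝ)..T, (-(T:ℂ) + (y:ℂ)*I - ω)⁻¹ :=
      edge_split p ω (fun y : ℝ => -(T:ℂ) + (y:ℂ)*I) 0 T
        (continuous_const.add (Complex.continuous_ofReal.mul continuous_const))
        (fun t _ => by
          intro hEq
          have h2 := congrArg Complex.re hEq
          simp only [Complex.add_re, Complex.ofReal_re, Complex.mul_re, Complex.I_re,
            Complex.I_im, Complex.ofReal_im, Complex.neg_re, mul_zero, mul_one, zero_mul,
            sub_zero, add_zero, zero_sub] at h2
          linarith [hre.1])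
    -- FTC computations
    have hB2 : (∫ x in (-T)..T, ((x:ℂ) - ω)⁻¹) =
        Complex.log ((T:ℂ) - ω) - Complex.log (-(T:ℂ) - ω) := by
      have h := horizFTC ω 0 hω.ne (-T) T
      simp only [Complex.ofReal_zero, zero_mul, add_zero, Complex.ofReal_neg] at h
      exact h
    have hT2 : (∫ x in (-T)..T, ((x:ℂ) + (T:ℂ)*I - ω)⁻¹) =
        Complex.log ((T:ℂ) + (T:ℂ)*I - ω) - Complex.log (-(T:ℂ) + (T:ℂ)*I - ω) := by
      have h := horizFTC ω T him.ne' (-T) T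
      simp only [Complex.ofReal_neg] at h
      exact h
    have hR2' : I * (∫ y in (0:ℝ)..T, ((T:ℂ) + (y:ℂ)*I - ω)⁻¹) =
        Complex.log ((T:ℂ) + (T:ℂ)*I - ω) - Complex.log ((T:ℂ) - ω) := by
      have h := vertFTC ω T (by linarith [hre.2]) 0 T
      simp only [Complex.ofReal_zero, zero_mul, add_zero] at h
      rw [h, I_mul_negI_mul]
    have hL2' : I * (∫ y in (0:ℝ)..T, (-(T:ℂ) + (y:ℂ)*I - ω)⁻¹) =
        Complex.log (ω - (-(T:ℂ) + (T:ℂ)*I)) - Complex.log (ω + (T:ℂ)) := by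
      have h := vertFTC' ω (-T) (by linarith [hre.1]) 0 T
      simp only [Complex.ofReal_zero, zero_mul, add_zero, Complex.ofReal_neg,
        sub_neg_eq_add] at h
      rw [h, I_mul_negI_mul]
    -- pi identities
    have hu : Complex.log (ω + (T:ℂ)) - Complex.log (-(T:ℂ) - ω) = Real.pi * I := by
      have h := log_sub_log_neg (u := ω + (T:ℂ)) (by simpa using hω)
      rw [show -(ω + (T:ℂ)) = -(T:ℂ) - ω by ring] at h
      exact h
    have hv : Complex.log (-(T:ℂ) + (T:ℂ)*I - ω) - Complex.log (ω - (-(T:ℂ) + (T:ℂ)*I)) =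
        Real.pi * I := by
      have h := log_neg_sub_log (v := ω - (-(T:ℂ) + (T:ℂ)*I)) (by
        simp only [Complex.sub_im, Complex.add_im, Complex.neg_im, Complex.ofReal_im,
          Complex.mul_im, Complex.I_im, Complex.I_re, Complex.ofReal_re, mul_zero, mul_one,
          zero_mul, add_zero, zero_add, neg_zero]
        linarith)
      rw [show -(ω - (-(T:ℂ) + (T:ℂ)*I)) = -(T:ℂ) + (T:ℂ)*I - ω by ring] at h
      exact h
    linear_combination -hBot + hrect + hTopE - I*hRE + I*hLE +
      Complex.exp (I * p * ω) * (hR2' - hL2' - hT2 + hB2 + hu + hv)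
  -- limits of error terms
  have h1 : Tendsto (fun T : ℝ =>
      ∫ x in (-T)..T, Complex.exp (I * p * ((x:ℂ) + (T:ℂ)*I)) / ((x:ℂ) + (T:ℂ)*I - ω))
      atTop (nhds 0) := by
    apply squeeze_zero_norm' (a := fun T : ℝ => 4 * Real.exp (-(p * T)))
    · filter_upwards [eventually_ge_atTop (2 * (‖ω‖ + 1))] with T hT
      have habs : (0:ℝ) ≤ ‖ω‖ := norm_nonneg ω
      have hT0 : 0 < T := by linarith
      have him : ω.im ≤ T/2 := by
        have := Complex.abs_im_le_norm ω
        have := le_abs_self ω.im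
        linarith
      have hb := intervalIntegral.norm_integral_le_of_norm_le_const
        (C := Real.exp (-(p * T)) / (T/2))
        (f := fun x : ℝ => Complex.exp (I * p * ((x:ℂ) + (T:ℂ)*I)) / ((x:ℂ) + (T:ℂ)*I - ω))
        (a := -T) (b := T) ?_
      · calc _ ≤ Real.exp (-(p*T))/(T/2) * |T - (-T)| := hb
        _ = 4 * Real.exp (-(p * T)) := by
          rw [abs_of_pos (by linarith)]
          field_simp
          ring
      · intro x _
        rw [norm_exp_div]
        have himx : ((x : ℂ) + (T:ℂ) * I).im = T := by simp
        rw [himx]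
        have hd : T/2 ≤ ‖((x : ℂ) + (T:ℂ) * I - ω)‖ := by
          refine le_trans ?_ (Complex.abs_im_le_norm _)
          have : ((x : ℂ) + (T:ℂ) * I - ω).im = T - ω.im := by simp
          rw [this, _root_.abs_of_nonneg (by linarith)]
          linarith
        gcongr
    · have hexp : Tendsto (fun T : ℝ => Real.exp (-(p*T))) atTop (nhds 0) := by
        have hmul : Tendsto (fun T : ℝ => p*T) atTop atTop :=
          Tendsto.const_mul_atTop hp tendsto_id
        have h2 := tendsto_neg_atTop_atBot.comp hmul
        exact Real.tendsto_exp_atBot.comp h2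
      simpa using hexp.const_mul 4
  have hside : ∀ (σ : ℝ → ℝ), (∀ᶠ T in atTop, T/2 ≤ |σ T - ω.re|) →
      Tendsto (fun T : ℝ =>
        ∫ y in (0:ℝ)..T, Complex.exp (I * p * ((σ T :ℂ) + (y:ℂ)*I)) / ((σ T:ℂ) + (y:ℂ)*I - ω))
        atTop (nhds 0) := by
    intro σ hσ
    apply squeeze_zero_norm' (a := fun T : ℝ => 1/p * (2/T))
    · filter_upwards [eventually_ge_atTop (2 * (‖ω‖ + 1)), hσ] with T hT hσT
      have habs : (0:ℝ) ≤ ‖ω‖ := norm_nonneg ω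
      have hT0 : 0 < T := by linarith
      have hd : ∀ y : ℝ, T/2 ≤ ‖((σ T : ℂ) + (y:ℂ) * I - ω)‖ := by
        intro y
        refine le_trans ?_ (Complex.abs_re_le_norm _)
        have : ((σ T : ℂ) + (y:ℂ) * I - ω).re = σ T - ω.re := by simp
        rw [this]
        exact hσT
      refine le_trans (intervalIntegral.norm_integral_le_of_norm_le
        (g := fun y : ℝ => Real.exp (-p * y) / (T/2)) (by linarith) ?_ ?_) ?_
      · refine Filter.Eventually.of_forall fun y _ => ?_
        rw [norm_exp_div]
        have himy : ((σ T : ℂ) + (y:ℂ) * I).im = y := by simp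
        rw [himy, show -(p*y) = -p*y by ring]
        exact div_le_div_of_nonneg_left (Real.exp_nonneg _) (by linarith) (hd y)
      · exact ((Real.continuous_exp.comp (continuous_const.mul continuous_id)).div_const
          _).intervalIntegrable _ _
      · rw [intervalIntegral.integral_div, integral_exp_eq (-p) (by linarith) , mul_zero,
          Real.exp_zero, show -p * T = -(p*T) by ring]
        have he1 : Real.exp (-(p * T)) ≤ 1 := Real.exp_le_one_iff.mpr (by nlinarith)
        have he0 := Real.exp_pos (-(p*T))
        calc (Real.exp (-(p*T)) - 1) / -p / (T/2) = (1 - Real.exp (-(p*T)))/p/(T/2) := by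
              ring
        _ ≤ 1/p/(T/2) := by gcongr <;> linarith
        _ = 1/p * (2/T) := by field_simp
    · have hinv : Tendsto (fun T : ℝ => 2/T) atTop (nhds 0) :=
        tendsto_const_nhds.div_atTop tendsto_id
      simpa using hinv.const_mul (1/p)
  have h2 := hside (fun T => T) (by
    filter_upwards [eventually_ge_atTop (2 * (‖ω‖ + 1))] with T hT
    have hre := abs_le.mp (le_trans (Complex.abs_re_le_norm ω)
      (by linarith [norm_nonneg ω] : ‖ω‖ ≤ T/2))
    rw [_root_.abs_of_nonneg (by linarith [hre.2])]
    linarith [hre.2])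
  have h3 := hside (fun T => -T) (by
    filter_upwards [eventually_ge_atTop (2 * (‖ω‖ + 1))] with T hT
    have hre := abs_le.mp (le_trans (Complex.abs_re_le_norm ω)
      (by linarith [norm_nonneg ω] : ‖ω‖ ≤ T/2))
    rw [abs_sub_comm, _root_.abs_of_nonneg (by linarith [hre.1])]
    linarith [hre.1])
  push_cast at h3
  have hcomb := ((h1.sub (h2.const_mul I)).add (h3.const_mul I)).add_const
    (Complex.exp (I * p * ω) * (2 * Real.pi * I))
  rw [show (2 * (Real.pi:ℂ) * I * Complex.exp (I * p * ω)) =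
    ((0 - I * 0) + I * 0) + Complex.exp (I * p * ω) * (2 * Real.pi * I) by ring]
  exact Tendsto.congr' (key.mono fun T h => h.symm) hcomb


/-- The Heaviside step function: `1` for positive argument, `1/2` at `0`, `0` otherwise. -/
noncomputable def heaviside (x : ℝ) : ℝ :=
  if 0 < x then 1 else if x = 0 then 1/2 else 0

/-- The principal value integral `(1/(2πi)) ∫_{-∞}^{∞} e^{ips}/(s-ω) ds` equals
`H(p) e^{ipω}` when `Im ω > 0`. -/
theorem fourier_heaviside_representation (p : ℝ) (ω : ℂ) (hω : 0 < ω.im) :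
    Filter.Tendsto
      (fun T : ℝ => (1 / (2 * (Real.pi : ℂ) * Complex.I)) *
        ∫ s in (-T)..T, Complex.exp (Complex.I * p * s) / ((s : ℂ) - ω))
      Filter.atTop
      (nhds ((heaviside p : ℂ) * Complex.exp (Complex.I * p * ω))) := by
  have hπ : ((Real.pi : ℝ) : ℂ) ≠ 0 := Complex.ofReal_ne_zero.mpr Real.pi_ne_zero
  rcases lt_trichotomy p 0 with hp | hp | hp
  · have h0 : ((heaviside p : ℝ) : ℂ) = 0 := by
      simp [heaviside, hp.not_gt, hp.ne]
    rw [h0, zero_mul]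
    have h := (case_neg p ω hω hp).const_mul (1 / (2 * (Real.pi : ℂ) * Complex.I))
    simpa using h
  · subst hp
    have h0 : ((heaviside 0 : ℝ) : ℂ) = 1/2 := by
      norm_num [heaviside]
    rw [h0]
    have h := (case_zero ω hω).const_mul (1 / (2 * (Real.pi : ℂ) * Complex.I))
    have hval : (1 / (2 * (Real.pi : ℂ) * Complex.I)) * (Real.pi * Complex.I) =
        1/2 * Complex.exp (Complex.I * (0:ℝ) * ω) := by
      rw [show Complex.I * ((0:ℝ):ℂ) * ω = 0 by push_cast; ring, Complex.exp_zero]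
      field_simp [Complex.I_ne_zero]
    rw [← hval]
    refine Tendsto.congr (fun T => ?_) h
    congr 1
    apply intervalIntegral.integral_congr
    intro s _
    simp
  · have h0 : ((heaviside p : ℝ) : ℂ) = 1 := by
      simp [heaviside, hp]
    rw [h0, one_mul]
    have h := (case_pos p ω hω hp).const_mul (1 / (2 * (Real.pi : ℂ) * Complex.I))
    have hval : (1 / (2 * (Real.pi : ℂ) * Complex.I)) *
        (2 * Real.pi * Complex.I * Complex.exp (Complex.I * p * ω)) =
        Complex.exp (Complex.I * p * ω) := by
      field_simp [Complex.I_ne_zero]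
    rw [← hval]
    exact h
end

section
/- Let −∞ < a < b < ∞ and let f : ℝ → ℝ be measurable, Lebesgue integrable on (−∞,a] and Lebesgue integrable on [b,∞). Fix x ∈ (a,b). Then lim_{A→−∞, B→∞} ∫_A^B e^{ixs} ( ∫_{-∞}^{∞} e^{-ist} f(t) χ_{(−∞,a]∪[b,∞)}(t) dt ) ds = 0, where χ_{(−∞,a]∪[b,∞)} is the indicator function of (−∞,a] ∪ [b,∞), and the double limit means: for every ε > 0 there exist M > 0 such that the integral has modulus less than ε whenever A < −M and B > M. -/
open MeasureTheory Filter Complex Set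
open scoped Real FourierTransform

/-- The contribution of the tails: for `f` integrable on `(-∞,a] ∪ [b,∞)` and `x ∈ (a,b)`,
`lim_{A→-∞, B→∞} ∫_A^B e^{ixs} (∫_{-∞}^{∞} e^{-ist} f(t) χ_{(-∞,a]∪[b,∞)}(t) dt) ds = 0`. -/
theorem fourier_inversion_tail_vanishes (a b : ℝ) (hab : a < b) (f : ℝ → ℝ)
    (hmeas : Measurable f)
    (hint1 : MeasureTheory.IntegrableOn f (Set.Iic a))
    (hint2 : MeasureTheory.IntegrableOn f (Set.Ici b))
    (x : ℝ) (hx : x ∈ Set.Ioo a b) :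
    Filter.Tendsto
      (fun P : ℝ × ℝ =>
        ∫ s in P.1..P.2, Complex.exp (Complex.I * x * s) *
          (∫ t : ℝ, Complex.exp (-(Complex.I * s * t)) *
            (((Set.Iic a ∪ Set.Ici b).indicator f t : ℝ) : ℂ)))
      (Filter.atBot ×ˢ Filter.atTop)
      (nhds 0) := by
  set S : Set ℝ := Set.Iic a ∪ Set.Ici b with hS
  have hSm : MeasurableSet S := measurableSet_Iic.union measurableSet_Ici
  set g : ℝ → ℂ := fun t => ((S.indicator f t : ℝ) : ℂ) with hgdef
  have hgmeas : Measurable g := Complex.measurable_ofReal.comp (hmeas.indicator hSm)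
  have hgint : Integrable g := by
    have : Integrable (S.indicator f) := by
      rw [integrable_indicator_iff hSm]
      exact hint1.union hint2
    exact this.ofReal
  -- g vanishes on (a,b)
  have hgx : ∀ t : ℝ, a < t → t < b → g t = 0 := by
    intro t h1 h2
    have : t ∉ S := by
      simp only [hS, Set.mem_union, Set.mem_Iic, Set.mem_Ici, not_or, not_le]
      exact ⟨h1, h2⟩
    simp [hgdef, Set.indicator_of_notMem this]
  set δ : ℝ := min (x - a) (b - x) with hδdef
  have hδ : 0 < δ := lt_min (by linarith [hx.1]) (by linarith [hx.2])
  set h : ℝ → ℂ := fun t => g t / (Complex.I * (x - t)) with hhdef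
  have hhmeas : Measurable h := by
    apply hgmeas.div
    fun_prop
  have hkey : ∀ t : ℝ, δ ≤ |x - t| → ‖h t‖ ≤ δ⁻¹ * ‖g t‖ := by
    intro t hxt
    have hxt' : (0:ℝ) < |x - t| := hδ.trans_le hxt
    have hne : ‖h t‖ = ‖g t‖ / |x - t| := by
      rw [hhdef]
      simp only [norm_div, norm_mul, Complex.norm_I, one_mul]
      congr 1
      rw [show ((x:ℂ) - t) = ((x - t : ℝ) : ℂ) by push_cast; ring]
      rw [Complex.norm_real, Real.norm_eq_abs]
    rw [hne, div_le_iff₀ hxt']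
    calc ‖g t‖ = δ⁻¹ * ‖g t‖ * δ := by field_simp
      _ ≤ δ⁻¹ * ‖g t‖ * |x - t| := by
          apply mul_le_mul_of_nonneg_left hxt
          positivity
  have hbound : ∀ t : ℝ, ‖h t‖ ≤ δ⁻¹ * ‖g t‖ := by
    intro t
    rcases le_or_gt t a with ht | ht
    · apply hkey
      rw [abs_of_pos (by linarith [hx.1])]
      have := min_le_left (x - a) (b - x); linarith
    · rcases le_or_gt b t with ht2 | ht2
      · apply hkey
        rw [abs_of_nonpos (by linarith [hx.2])]
        have := min_le_right (x - a) (b - x); linarith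
      · have hz : g t = 0 := hgx t ht ht2
        rw [hhdef]
        simp only [hz, zero_div, norm_zero]
        positivity
  have hhint : Integrable h :=
    Integrable.mono' (hgint.norm.const_mul δ⁻¹) hhmeas.aestronglyMeasurable
      (Filter.Eventually.of_forall hbound)
  -- norm of purely imaginary exponentials
  have hnorm1 : ∀ (u v : ℝ), ‖Complex.exp (Complex.I * u * v)‖ = 1 := by
    intro u v
    rw [Complex.norm_exp]
    have : (Complex.I * u * v).re = 0 := by simp [Complex.mul_re]
    rw [this, Real.exp_zero]
  have hnorm2 : ∀ (u v : ℝ), ‖Complex.exp (-(Complex.I * u * v))‖ = 1 := by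
    intro u v
    rw [Complex.norm_exp]
    have : (-(Complex.I * u * v)).re = 0 := by simp [Complex.mul_re]
    rw [this, Real.exp_zero]
  -- T : the Riemann-Lebesgue transform of h
  set T : ℝ → ℂ := fun w => ∫ t : ℝ, Complex.exp (-(Complex.I * w * t)) * h t with hTdef
  have hT : Tendsto T (cocompact ℝ) (nhds 0) := by
    have hrl := Real.zero_at_infty_fourier h
    have hmap : Tendsto (fun w : ℝ => w / (2 * π)) (cocompact ℝ) (cocompact ℝ) := by
      rw [cocompact_eq_atBot_atTop]
      apply Tendsto.sup_sup
      · exact (tendsto_id.atBot_div_const (by positivity))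
      · exact (tendsto_id.atTop_div_const (by positivity))
    have := hrl.comp hmap
    apply this.congr
    intro w
    rw [Function.comp_apply, Real.fourier_real_eq_integral_exp_smul]
    apply integral_congr_ae
    filter_upwards with t
    rw [smul_eq_mul]
    congr 1
    congr 1
    push_cast
    have hπ : (π:ℂ) ≠ 0 := by exact_mod_cast Real.pi_ne_zero
    field_simp
  have hTtop : Tendsto T atTop (nhds 0) :=
    hT.mono_left (by rw [cocompact_eq_atBot_atTop]; exact le_sup_right)
  have hTbot : Tendsto T atBot (nhds 0) :=
    hT.mono_left (by rw [cocompact_eq_atBot_atTop]; exact le_sup_left)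
  set U : ℝ → ℂ := fun w => Complex.exp (Complex.I * w * x) * T w with hUdef
  have hnormU : ∀ w, ‖U w‖ ≤ ‖T w‖ := by
    intro w
    rw [hUdef]
    simp only [norm_mul, hnorm1, one_mul, le_refl]
  have hUtop : Tendsto U atTop (nhds 0) :=
    squeeze_zero_norm hnormU (tendsto_zero_iff_norm_tendsto_zero.mp hTtop)
  have hUbot : Tendsto U atBot (nhds 0) :=
    squeeze_zero_norm hnormU (tendsto_zero_iff_norm_tendsto_zero.mp hTbot)
  have hexpmeas : ∀ w : ℝ, Measurable fun t : ℝ => Complex.exp (-(Complex.I * w * t)) :=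
    fun w => Complex.measurable_exp.comp ((measurable_const.mul Complex.measurable_ofReal).neg)
  have hTint : ∀ w : ℝ, Integrable (fun t : ℝ => Complex.exp (-(Complex.I * w * t)) * h t) :=
    fun w => hhint.bdd_mul (hexpmeas w).aestronglyMeasurable (c := 1) (Filter.Eventually.of_forall fun t => (hnorm2 w t).le)
  -- the main identity
  have hmain : ∀ A B : ℝ, A ≤ B →
      (∫ s in A..B, Complex.exp (Complex.I * x * s) *
          (∫ t : ℝ, Complex.exp (-(Complex.I * s * t)) * g t)) = U B - U A := by
    intro A B hAB
    have hFint : Integrable (Function.uncurry fun (s t : ℝ) =>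
        Complex.exp (Complex.I * x * s) * (Complex.exp (-(Complex.I * s * t)) * g t))
        ((volume.restrict (Set.Ioc A B)).prod volume) := by
      have h1 : Integrable (fun p : ℝ × ℝ => (1:ℂ) * g p.2)
          ((volume.restrict (Set.Ioc A B)).prod volume) :=
        (integrable_const (1:ℂ)).mul_prod hgint
      have h2 : Integrable (fun p : ℝ × ℝ => g p.2)
          ((volume.restrict (Set.Ioc A B)).prod volume) := by simpa using h1
      have m1 : Measurable fun p : ℝ × ℝ => Complex.exp (Complex.I * x * p.1) :=
        Complex.measurable_exp.comp
          (measurable_const.mul (Complex.measurable_ofReal.comp measurable_fst))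
      have m2 : Measurable fun p : ℝ × ℝ => Complex.exp (-(Complex.I * p.1 * p.2)) :=
        Complex.measurable_exp.comp
          (((measurable_const.mul (Complex.measurable_ofReal.comp measurable_fst)).mul
            (Complex.measurable_ofReal.comp measurable_snd)).neg)
      have m3 : Measurable fun p : ℝ × ℝ => g p.2 := hgmeas.comp measurable_snd
      apply Integrable.mono' h2.norm ((m1.mul (m2.mul m3)).aestronglyMeasurable)
      filter_upwards with p
      simp only [Function.uncurry, Pi.mul_apply, norm_mul, hnorm1, hnorm2, one_mul, le_refl, norm_norm]
    calc (∫ s in A..B, Complex.exp (Complex.I * x * s) *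
          (∫ t : ℝ, Complex.exp (-(Complex.I * s * t)) * g t))
        = ∫ s in A..B, ∫ t : ℝ, Complex.exp (Complex.I * x * s) *
            (Complex.exp (-(Complex.I * s * t)) * g t) := by
          apply intervalIntegral.integral_congr
          intro s _
          simp only [integral_const_mul]
      _ = ∫ s in Set.Ioc A B, ∫ t : ℝ, Complex.exp (Complex.I * x * s) *
            (Complex.exp (-(Complex.I * s * t)) * g t) := by
          rw [intervalIntegral.integral_of_le hAB]
      _ = ∫ t : ℝ, ∫ s in Set.Ioc A B, Complex.exp (Complex.I * x * s) *
            (Complex.exp (-(Complex.I * s * t)) * g t) := by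
          exact integral_integral_swap hFint
      _ = ∫ t : ℝ, (∫ s in A..B, Complex.exp ((Complex.I * ((x:ℂ) - t)) * s)) * g t := by
          apply integral_congr_ae
          filter_upwards with t
          rw [intervalIntegral.integral_of_le hAB]
          rw [← integral_mul_const]
          apply integral_congr_ae
          filter_upwards with s
          rw [← mul_assoc, ← Complex.exp_add]
          congr 1
          ring
      _ = ∫ t : ℝ, (Complex.exp (Complex.I * B * x) * (Complex.exp (-(Complex.I * B * t)) * h t)
            - Complex.exp (Complex.I * A * x) * (Complex.exp (-(Complex.I * A * t)) * h t)) := by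
          apply integral_congr_ae
          filter_upwards with t
          by_cases htx : x = t
          · have hgt : g t = 0 := hgx t (htx ▸ hx.1) (htx ▸ hx.2)
            have hht : h t = 0 := by rw [hhdef]; simp [hgt]
            simp [hgt, hht]
          · have hc : (Complex.I * ((x:ℂ) - t)) ≠ 0 := by
              apply mul_ne_zero Complex.I_ne_zero
              rw [sub_ne_zero]
              exact_mod_cast htx
            rw [integral_exp_mul_complex hc]
            have hht : h t = g t / (Complex.I * ((x:ℂ) - t)) := rfl
            have e1 : Complex.exp ((Complex.I * ((x:ℂ) - t)) * B)
                = Complex.exp (Complex.I * B * x) * Complex.exp (-(Complex.I * B * t)) := by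
              rw [← Complex.exp_add]; congr 1; ring
            have e2 : Complex.exp ((Complex.I * ((x:ℂ) - t)) * A)
                = Complex.exp (Complex.I * A * x) * Complex.exp (-(Complex.I * A * t)) := by
              rw [← Complex.exp_add]; congr 1; ring
            rw [e1, e2, hht]
            field_simp
      _ = U B - U A := by
          rw [integral_sub (((hTint B).const_mul _)) (((hTint A).const_mul _)),
            integral_const_mul, integral_const_mul]
  have hev : (fun P : ℝ × ℝ => U P.2 - U P.1) =ᶠ[atBot ×ˢ atTop]
      (fun P : ℝ × ℝ =>
        ∫ s in P.1..P.2, Complex.exp (Complex.I * x * s) *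
          (∫ t : ℝ, Complex.exp (-(Complex.I * s * t)) * g t)) := by
    have h1 : ∀ᶠ P : ℝ × ℝ in atBot ×ˢ atTop, P.1 ≤ 0 :=
      tendsto_fst.eventually (eventually_le_atBot (0:ℝ))
    have h2 : ∀ᶠ P : ℝ × ℝ in atBot ×ˢ atTop, (0:ℝ) ≤ P.2 :=
      tendsto_snd.eventually (eventually_ge_atTop (0:ℝ))
    filter_upwards [h1, h2] with P hp1 hp2
    exact (hmain P.1 P.2 (hp1.trans hp2)).symm
  have hfinal : Tendsto (fun P : ℝ × ℝ => U P.2 - U P.1) (atBot ×ˢ atTop) (nhds 0) := by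
    have := (hUtop.comp tendsto_snd).sub (hUbot.comp tendsto_fst)
    simpa using this
  exact hfinal.congr' hev
end

section
/- Let f : ℝ → ℝ be of bounded variation on ℝ (finite total variation over ℝ) with lim_{|x|→∞} f(x) = 0. Then for each real s ≠ 0 the improper integral f̂(s) = lim_{X→−∞, Y→∞} ∫_X^Y e^{-ist} f(t) dt exists (as a finite complex number). -/
open MeasureTheory Filter Set intervalIntegral Topology


lemma normE (s t : ℝ) : ‖Complex.exp (-(Complex.I * s * t))‖ = 1 := by
  rw [Complex.norm_exp]
  simp

lemma EBND {s : ℝ} (hs : s ≠ 0) (a b : ℝ) :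
    ‖∫ t in a..b, Complex.exp (-(Complex.I * s * t))‖ ≤ 2 / |s| := by
  have hc : -(Complex.I * s) ≠ 0 := by
    simp [Complex.I_ne_zero, Complex.ofReal_eq_zero, hs]
  have h : (∫ t in a..b, Complex.exp (-(Complex.I * s * t)))
      = (Complex.exp (-(Complex.I * s) * b) - Complex.exp (-(Complex.I * s) * a)) / (-(Complex.I * s)) := by
    rw [← integral_exp_mul_complex hc]
    congr 1 with t
    ring_nf
  rw [h, norm_div]
  have h1 : ‖Complex.exp (-(Complex.I * s) * b) - Complex.exp (-(Complex.I * s) * a)‖ ≤ 2 := by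
    refine (norm_sub_le _ _).trans ?_
    have e1 : ‖Complex.exp (-(Complex.I * s) * (b:ℂ))‖ = 1 := by
      have := normE s b; rw [← this]; congr 1; ring
    have e2 : ‖Complex.exp (-(Complex.I * s) * (a:ℂ))‖ = 1 := by
      have := normE s a; rw [← this]; congr 1; ring
    rw [e1, e2]; norm_num
  have h2 : ‖-(Complex.I * (s:ℂ))‖ = |s| := by
    simp
  rw [h2]
  gcongr

lemma ae_eq_rightLim {u : ℝ → ℝ} (hu : Monotone u) :
    ∀ᵐ t, u t = hu.stieltjesFunction t := by
  have hcount : Set.Countable {x | ¬ContinuousAt u x} := hu.countable_not_continuousAt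
  rw [ae_iff]
  refine measure_mono_null ?_ (hcount.measure_zero volume)
  intro x hx
  simp only [mem_setOf_eq] at hx ⊢
  intro hcont
  apply hx
  rw [hu.stieltjesFunction_eq]
  exact (rightLim_eq_of_tendsto (hcont.continuousWithinAt.tendsto)).symm

lemma key {u : ℝ → ℝ} (hu : Monotone u) {c : ℝ}
    (hb : Tendsto u atBot (𝓝 c)) (ht : Tendsto u atTop (𝓝 0))
    {s : ℝ} (hs : s ≠ 0) {Y Y' : ℝ} (hYY' : Y ≤ Y') :
    ‖∫ t in Y..Y', Complex.exp (-(Complex.I * s * t)) * u t‖ ≤ 2 / |s| * |u Y| := by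
  set E : ℝ → ℂ := fun t => Complex.exp (-(Complex.I * s * t)) with hE
  set S := hu.stieltjesFunction with hSdef
  have hle1 : ∀ x, u x ≤ S x := fun x => by
    rw [hSdef, hu.stieltjesFunction_eq]; exact hu.le_rightLim le_rfl
  have hle2 : ∀ x, S x ≤ u (x + 1) := fun x => by
    rw [hSdef, hu.stieltjesFunction_eq]; exact hu.rightLim_le (lt_add_one x)
  have haux : Tendsto (fun x : ℝ => u (x + 1)) atTop (𝓝 0) :=
    ht.comp (tendsto_atTop_add_const_right _ 1 tendsto_id)
  have haux' : Tendsto (fun x : ℝ => u (x + 1)) atBot (𝓝 c) :=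
    hb.comp (tendsto_atBot_add_const_right _ 1 tendsto_id)
  have hSt : Tendsto S atTop (𝓝 0) :=
    tendsto_of_tendsto_of_tendsto_of_le_of_le ht haux hle1 hle2
  have hSb : Tendsto S atBot (𝓝 c) :=
    tendsto_of_tendsto_of_tendsto_of_le_of_le hb haux' hle1 hle2
  have hu0 : ∀ x, u x ≤ 0 := fun x =>
    ge_of_tendsto ht (eventually_atTop.2 ⟨x, fun y hy => hu hy⟩)
  have hS0 : ∀ x, S x ≤ 0 := fun x => (hle2 x).trans (hu0 _)
  set μ := S.measure with hμ
  haveI : IsFiniteMeasure μ := S.isFiniteMeasure hSb hSt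
  have hIoi : ∀ x, μ (Ioi x) = ENNReal.ofReal (-(S x)) := by
    intro x
    have hcS : c ≤ S x :=
      le_of_tendsto hSb (eventually_atBot.2 ⟨x, fun y hy => S.mono hy⟩)
    have h1 : μ (Iic x) = ENNReal.ofReal (S x - c) := S.measure_Iic hSb x
    have h2 : μ univ = ENNReal.ofReal (0 - c) := S.measure_univ hSb hSt
    rw [show -(S x) = (0 - c) - (S x - c) by ring,
      ENNReal.ofReal_sub _ (by linarith), ← h1, ← h2, ← compl_Iic,
      measure_compl measurableSet_Iic (measure_ne_top μ _)]
  have step1 : (∫ t in Y..Y', E t * u t) = ∫ t in Y..Y', E t * (S t : ℝ) := by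
    apply intervalIntegral.integral_congr_ae
    filter_upwards [ae_eq_rightLim hu] with t htt _
    rw [htt]
  rw [step1, intervalIntegral.integral_of_le hYY']
  set ν := μ.restrict (Ioi Y) with hν
  have hνIoi : ∀ t, Y < t → ν (Ioi t) = ENNReal.ofReal (-(S t)) := by
    intro t htY
    rw [hν, Measure.restrict_apply measurableSet_Ioi,
      inter_eq_self_of_subset_left (Ioi_subset_Ioi htY.le), hIoi]
  set F : ℝ → ℝ → ℂ := fun t x => (Ioi t).indicator (fun _ => E t) x with hF
  have hEcont : Continuous E := by
    apply Complex.continuous_exp.comp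
    continuity
  have hFint : Integrable (Function.uncurry F) ((volume.restrict (Ioc Y Y')).prod ν) := by
    have hmeas : Measurable (Function.uncurry F) := by
      have heq : Function.uncurry F = {q : ℝ × ℝ | q.1 < q.2}.indicator (fun q => E q.1) := by
        ext ⟨t, x⟩
        by_cases h : t < x <;>
          simp [Function.uncurry, hF, indicator, h, mem_Ioi, Set.mem_setOf_eq]
      rw [heq]
      exact (hEcont.measurable.comp measurable_fst).indicator
        (measurableSet_lt measurable_fst measurable_snd)
    refine Integrable.mono' (integrable_const 1) hmeas.aestronglyMeasurable ?_
    refine ae_of_all _ fun p => ?_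
    show ‖Function.uncurry F p‖ ≤ 1
    simp only [Function.uncurry, hF]
    exact (norm_indicator_le_norm_self _ _).trans_eq (normE s p.1)
  have swap := MeasureTheory.integral_integral_swap hFint
  have inner1 : ∀ t ∈ Ioc Y Y', (∫ x, F t x ∂ν) = (-(S t)) • E t := by
    intro t htmem
    rw [hF]
    simp only
    rw [integral_indicator_const (E t) measurableSet_Ioi, measureReal_def, hνIoi t htmem.1,
      ENNReal.toReal_ofReal (by linarith [hS0 t])]
  have lhs_eq : (∫ t in Ioc Y Y', E t * (S t : ℝ)) = -∫ t in Ioc Y Y', ∫ x, F t x ∂ν := by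
    rw [← MeasureTheory.integral_neg]
    apply setIntegral_congr_fun measurableSet_Ioc
    intro t htmem
    dsimp only
    rw [inner1 t htmem, Complex.real_smul]
    push_cast
    ring
  rw [lhs_eq, swap, norm_neg]
  have hbound : ∀ x, ‖∫ t in Ioc Y Y', F t x‖ ≤ 2 / |s| := by
    intro x
    have hFx : ∀ t, F t x = (Iio x).indicator E t := by
      intro t
      by_cases h : t < x <;> simp [hF, indicator, h, mem_Ioi, mem_Iio]
    simp only [hFx]
    rw [setIntegral_indicator measurableSet_Iio]
    rcases le_or_gt x Y with hxY | hYx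
    · have : Ioc Y Y' ∩ Iio x = ∅ := by
        ext t; simp only [mem_inter_iff, mem_Ioc, mem_Iio, mem_empty_iff_false, iff_false]
        rintro ⟨⟨h1, _⟩, h2⟩; exact absurd (h2.trans_le hxY) (not_lt.2 h1.le)
      rw [this]
      simp [div_nonneg (by norm_num : (0:ℝ) ≤ 2) (abs_nonneg s)]
    · rcases le_or_gt x Y' with hxY' | hY'x
      · have : Ioc Y Y' ∩ Iio x = Ioo Y x := by
          ext t
          simp only [mem_inter_iff, mem_Ioc, mem_Iio, mem_Ioo]
          exact ⟨fun ⟨⟨h1, _⟩, h2⟩ => ⟨h1, h2⟩, fun ⟨h1, h2⟩ => ⟨⟨h1, h2.le.trans hxY'⟩, h2⟩⟩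
        rw [this, setIntegral_congr_set Ioo_ae_eq_Ioc,
          ← intervalIntegral.integral_of_le hYx.le]
        exact EBND hs Y x
      · have : Ioc Y Y' ∩ Iio x = Ioc Y Y' := by
          apply inter_eq_self_of_subset_left
          intro t htm; exact htm.2.trans_lt hY'x
        rw [this, ← intervalIntegral.integral_of_le hYY']
        exact EBND hs Y Y'
  haveI : IsFiniteMeasure ν := by
    constructor
    rw [hν, Measure.restrict_apply_univ]
    exact measure_lt_top μ _
  calc ‖∫ x, (∫ t in Ioc Y Y', F t x) ∂ν‖
      ≤ 2 / |s| * (ν univ).toReal :=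
        norm_integral_le_of_norm_le_const (ae_of_all _ hbound)
    _ ≤ 2 / |s| * |u Y| := by
        apply mul_le_mul_of_nonneg_left _ (div_nonneg (by norm_num) (abs_nonneg s))
        rw [hν, Measure.restrict_apply_univ, hIoi,
          ENNReal.toReal_ofReal (by linarith [hS0 Y])]
        rw [abs_of_nonpos (hu0 Y)]
        linarith [hle1 Y]

lemma intInt {u : ℝ → ℝ} (hm : Measurable u) {C : ℝ} (hC : ∀ x, |u x| ≤ C) (s a b : ℝ) :
    IntervalIntegrable (fun t => Complex.exp (-(Complex.I * s * t)) * (u t : ℂ)) volume a b := by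
  rw [intervalIntegrable_iff]
  refine Integrable.mono' (g := fun _ => C) ?_ ?_ ?_
  · exact integrableOn_const measure_Ioc_lt_top.ne
  · refine AEStronglyMeasurable.mul ?_ ?_
    · exact (Complex.continuous_exp.comp (by continuity)).aestronglyMeasurable
    · exact (Complex.measurable_ofReal.comp hm).aestronglyMeasurable
  · refine ae_of_all _ fun t => ?_
    rw [norm_mul, normE, one_mul, Complex.norm_real, Real.norm_eq_abs]
    exact hC t

lemma monoBound {u : ℝ → ℝ} (hu : Monotone u) {c d : ℝ}
    (hb : Tendsto u atBot (𝓝 c)) (ht : Tendsto u atTop (𝓝 d)) :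
    ∀ x, |u x| ≤ |c| + |d| + |u 0| := by
  intro x
  rcases le_total x 0 with h | h
  · have h1 : c ≤ u x := le_of_tendsto hb (eventually_atBot.2 ⟨x, fun y hy => hu hy⟩)
    have h2 : u x ≤ u 0 := hu h
    rw [abs_le]
    constructor
    · have := neg_abs_le c
      have := abs_nonneg d
      have := abs_nonneg (u 0)
      linarith
    · have := le_abs_self (u 0)
      have := abs_nonneg d
      have := abs_nonneg c
      linarith
  · have h1 : u 0 ≤ u x := hu h
    have h2 : u x ≤ d := ge_of_tendsto ht (eventually_atTop.2 ⟨x, fun y hy => hu hy⟩)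
    rw [abs_le]
    constructor
    · have := neg_abs_le (u 0)
      have := abs_nonneg d
      have := abs_nonneg c
      linarith
    · have := le_abs_self d
      have := abs_nonneg (u 0)
      have := abs_nonneg c
      linarith

lemma conv {u : ℝ → ℝ} (hu : Monotone u) {c : ℝ}
    (hb : Tendsto u atBot (𝓝 c)) (ht : Tendsto u atTop (𝓝 0))
    {s : ℝ} (hs : s ≠ 0) :
    ∃ A : ℂ, Tendsto (fun Y : ℝ => ∫ t in (0:ℝ)..Y,
      Complex.exp (-(Complex.I * s * t)) * (u t : ℂ)) atTop (𝓝 A) := by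
  set F : ℝ → ℂ := fun Y => ∫ t in (0:ℝ)..Y, Complex.exp (-(Complex.I * s * t)) * (u t : ℂ)
    with hFdef
  have hub := monoBound hu hb ht
  have hii : ∀ a b : ℝ, IntervalIntegrable
      (fun t => Complex.exp (-(Complex.I * s * t)) * (u t : ℂ)) volume a b :=
    fun a b => intInt hu.measurable hub s a b
  have hsub : ∀ {a b : ℝ}, a ≤ b → ‖F b - F a‖ ≤ 2 / |s| * |u a| := by
    intro a b hab
    have : F b - F a = ∫ t in a..b, Complex.exp (-(Complex.I * s * t)) * (u t : ℂ) :=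
      integral_interval_sub_left (hii 0 b) (hii 0 a)
    rw [this]
    exact key hu hb ht hs hab
  rw [← cauchy_map_iff_exists_tendsto]
  rw [Metric.cauchy_iff]
  refine ⟨map_neBot, fun ε hε => ?_⟩
  have hδ : (0:ℝ) < ε * |s| / 8 := by
    have := abs_pos.2 hs; positivity
  obtain ⟨T, hT⟩ := (Metric.tendsto_atTop.1 ht (ε * |s| / 8) hδ)
  refine ⟨F '' Ici T, image_mem_map (Ici_mem_atTop T), ?_⟩
  rintro _ ⟨Y, hY, rfl⟩ _ ⟨Y', hY', rfl⟩
  have habs : ∀ Z, Z ∈ Ici T → |u Z| < ε * |s| / 8 := by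
    intro Z hZ
    have := hT Z hZ
    rwa [Real.dist_eq, sub_zero] at this
  have h8 : ∀ {a b : ℝ}, a ∈ Ici T → a ≤ b → dist (F b) (F a) < ε := by
    intro a b haT hab
    rw [dist_eq_norm]
    calc ‖F b - F a‖ ≤ 2 / |s| * |u a| := hsub hab
      _ < 2 / |s| * (ε * |s| / 8) := by
          have h2s : 0 < 2 / |s| := by have := abs_pos.2 hs; positivity
          exact mul_lt_mul_of_pos_left (habs a haT) h2s
      _ ≤ ε := by
          have hs' : (0:ℝ) < |s| := abs_pos.2 hs
          rw [div_mul_eq_mul_div, div_le_iff₀ hs']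
          have : 2 * (ε * |s| / 8) = ε * |s| / 4 := by ring
          nlinarith
  rcases le_total Y Y' with h | h
  · rw [dist_comm]; exact h8 hY h
  · exact h8 hY' h

/-- difference of two monotone functions with limits: one-sided convergence -/
lemma half {g p q : ℝ → ℝ} (hp : Monotone p) (hq : Monotone q)
    (hpq : ∀ x, g x = p x - q x)
    {P P₀ Q Q₀ : ℝ}
    (hpt : Tendsto p atTop (𝓝 P)) (hpb : Tendsto p atBot (𝓝 P₀))
    (hqt : Tendsto q atTop (𝓝 Q)) (hqb : Tendsto q atBot (𝓝 Q₀))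
    (hg : Tendsto g atTop (𝓝 0)) {s : ℝ} (hs : s ≠ 0) :
    ∃ A : ℂ, Tendsto (fun Y : ℝ => ∫ t in (0:ℝ)..Y,
      Complex.exp (-(Complex.I * s * t)) * (g t : ℂ)) atTop (𝓝 A) := by
  have hPQ : P - Q = 0 := by
    have h1 : Tendsto g atTop (𝓝 (P - Q)) := by
      have := hpt.sub hqt
      apply this.congr
      intro x; exact (hpq x).symm
    exact tendsto_nhds_unique h1 hg
  set u : ℝ → ℝ := fun x => p x - P with hudef
  set v : ℝ → ℝ := fun x => q x - Q with hvdef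
  have hu : Monotone u := fun a b hab => by simp only [hudef]; linarith [hp hab]
  have hv : Monotone v := fun a b hab => by simp only [hvdef]; linarith [hq hab]
  have hut : Tendsto u atTop (𝓝 0) := by
    have := hpt.sub_const P; simpa using this
  have hub : Tendsto u atBot (𝓝 (P₀ - P)) := hpb.sub_const P
  have hvt : Tendsto v atTop (𝓝 0) := by
    have := hqt.sub_const Q; simpa using this
  have hvb : Tendsto v atBot (𝓝 (Q₀ - Q)) := hqb.sub_const Q
  obtain ⟨A₁, hA₁⟩ := conv hu hub hut hs
  obtain ⟨A₂, hA₂⟩ := conv hv hvb hvt hs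
  refine ⟨A₁ - A₂, ?_⟩
  have := hA₁.sub hA₂
  apply this.congr
  intro Y
  rw [← intervalIntegral.integral_sub (intInt hu.measurable (monoBound hu hub hut) s 0 Y)
    (intInt hv.measurable (monoBound hv hvb hvt) s 0 Y)]
  apply intervalIntegral.integral_congr
  intro t _
  dsimp only
  have : g t = u t - v t := by simp only [hudef, hvdef]; rw [hpq t]; linarith
  rw [this]
  push_cast
  ring

/-- If `f : ℝ → ℝ` is of bounded variation on `ℝ` and tends to `0` at `±∞`, then for each
`s ≠ 0` the improper integral `f̂(s) = lim_{X→-∞, Y→∞} ∫_X^Y e^{-ist} f(t) dt` exists. -/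
theorem fourier_transform_exists_of_BV_vanishing (f : ℝ → ℝ)
    (hbv : BoundedVariationOn f Set.univ)
    (htop : Filter.Tendsto f Filter.atTop (nhds 0))
    (hbot : Filter.Tendsto f Filter.atBot (nhds 0))
    (s : ℝ) (hs : s ≠ 0) :
    ∃ L : ℂ, Filter.Tendsto
      (fun P : ℝ × ℝ =>
        ∫ t in P.1..P.2, Complex.exp (-(Complex.I * s * t)) * ((f t : ℝ) : ℂ))
      (Filter.atBot ×ˢ Filter.atTop)
      (nhds L) := by
  have hlbv := hbv.locallyBoundedVariationOn
  set p : ℝ → ℝ := fun x => variationOnFromTo f Set.univ 0 x with hpdef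
  have hpmono : Monotone p :=
    monotoneOn_univ.1 (variationOnFromTo.monotoneOn hlbv (mem_univ 0))
  set q : ℝ → ℝ := fun x => p x - f x with hqdef
  have hqmono : Monotone q := by
    have h := variationOnFromTo.sub_self_monotoneOn hlbv (mem_univ (0:ℝ))
    refine monotoneOn_univ.1 (fun a _ b _ hab => ?_)
    have := h (mem_univ a) (mem_univ b) hab
    simpa [hqdef, hpdef] using this
  have hfpq : ∀ x, f x = p x - q x := fun x => by simp [hqdef]
  set V : ℝ := (eVariationOn f Set.univ).toReal with hV
  have hpbdd : ∀ x, |p x| ≤ V := by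
    intro x
    rcases le_total 0 x with h | h
    · rw [hpdef]; dsimp only
      rw [variationOnFromTo.eq_of_le f Set.univ h, abs_of_nonneg ENNReal.toReal_nonneg]
      exact ENNReal.toReal_mono hbv (eVariationOn.mono f inter_subset_left)
    · rw [hpdef]; dsimp only
      rw [variationOnFromTo.eq_of_ge f Set.univ h, abs_neg,
        abs_of_nonneg ENNReal.toReal_nonneg]
      exact ENNReal.toReal_mono hbv (eVariationOn.mono f inter_subset_left)
  have hfbdd : ∀ x, |f x| ≤ V + |f 0| := by
    intro x
    have hd := hbv.dist_le (mem_univ x) (mem_univ 0)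
    rw [Real.dist_eq] at hd
    have := abs_sub_abs_le_abs_sub (f x) (f 0)
    rw [hV]
    linarith
  have hqbdd : ∀ x, |q x| ≤ V + (V + |f 0|) := by
    intro x
    calc |q x| = |p x - f x| := by rw [hqdef]
      _ ≤ |p x| + |f x| := abs_sub _ _
      _ ≤ V + (V + |f 0|) := add_le_add (hpbdd x) (hfbdd x)
  have hpA : BddAbove (range p) := ⟨V, by rintro _ ⟨x, rfl⟩; exact (abs_le.1 (hpbdd x)).2⟩
  have hpB : BddBelow (range p) := ⟨-V, by rintro _ ⟨x, rfl⟩; exact (abs_le.1 (hpbdd x)).1⟩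
  have hqA : BddAbove (range q) :=
    ⟨V + (V + |f 0|), by rintro _ ⟨x, rfl⟩; exact (abs_le.1 (hqbdd x)).2⟩
  have hqB : BddBelow (range q) :=
    ⟨-(V + (V + |f 0|)), by rintro _ ⟨x, rfl⟩; exact (abs_le.1 (hqbdd x)).1⟩
  have hptop : Tendsto p atTop (𝓝 (⨆ x, p x)) := tendsto_atTop_ciSup hpmono hpA
  have hpbot : Tendsto p atBot (𝓝 (⨅ x, p x)) := tendsto_atBot_ciInf hpmono hpB
  have hqtop : Tendsto q atTop (𝓝 (⨆ x, q x)) := tendsto_atTop_ciSup hqmono hqA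
  have hqbot : Tendsto q atBot (𝓝 (⨅ x, q x)) := tendsto_atBot_ciInf hqmono hqB
  -- A side
  obtain ⟨A, hA⟩ := half hpmono hqmono hfpq hptop hpbot hqtop hqbot htop hs
  -- B side
  have hs' : (-s : ℝ) ≠ 0 := neg_ne_zero.2 hs
  set g : ℝ → ℝ := fun x => f (-x) with hgdef
  set p' : ℝ → ℝ := fun x => -q (-x) with hp'def
  set q' : ℝ → ℝ := fun x => -p (-x) with hq'def
  have hp'mono : Monotone p' := fun a b hab => by
    simp only [hp'def]; have := hqmono (neg_le_neg hab); linarith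
  have hq'mono : Monotone q' := fun a b hab => by
    simp only [hq'def]; have := hpmono (neg_le_neg hab); linarith
  have hg' : ∀ x, g x = p' x - q' x := fun x => by
    simp only [hgdef, hp'def, hq'def]; rw [hfpq (-x)]; ring
  have hp't : Tendsto p' atTop (𝓝 (-(⨅ x, q x))) :=
    (hqbot.comp tendsto_neg_atTop_atBot).neg
  have hp'b : Tendsto p' atBot (𝓝 (-(⨆ x, q x))) :=
    (hqtop.comp tendsto_neg_atBot_atTop).neg
  have hq't : Tendsto q' atTop (𝓝 (-(⨅ x, p x))) :=
    (hpbot.comp tendsto_neg_atTop_atBot).neg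
  have hq'b : Tendsto q' atBot (𝓝 (-(⨆ x, p x))) :=
    (hptop.comp tendsto_neg_atBot_atTop).neg
  have hgt : Tendsto g atTop (𝓝 0) := hbot.comp tendsto_neg_atTop_atBot
  obtain ⟨B, hB⟩ := half hp'mono hq'mono hg' hp't hp'b hq't hq'b hgt hs'
  -- convert B side to atBot
  have hconv : ∀ Y : ℝ, (∫ t in (0:ℝ)..Y, Complex.exp (-(Complex.I * (-s : ℝ) * t)) * (g t : ℂ))
      = ∫ t in (-Y)..(0:ℝ), Complex.exp (-(Complex.I * s * t)) * ((f t : ℝ) : ℂ) := by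
    intro Y
    have hcn := intervalIntegral.integral_comp_neg (a := 0) (b := Y)
      (fun t : ℝ => Complex.exp (-(Complex.I * s * t)) * ((f t : ℝ) : ℂ))
    rw [neg_zero] at hcn
    rw [← hcn]
    apply intervalIntegral.integral_congr
    intro t _
    dsimp only [hgdef]
    push_cast
    congr 1
    congr 1
    ring
  have hBside : Tendsto (fun X : ℝ => ∫ t in X..(0:ℝ),
      Complex.exp (-(Complex.I * s * t)) * ((f t : ℝ) : ℂ)) atBot (𝓝 B) := by
    have comp1 : Tendsto (fun X : ℝ => (-X : ℝ)) atBot atTop := tendsto_neg_atBot_atTop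
    have := hB.comp comp1
    apply this.congr
    intro X
    dsimp only [Function.comp]
    rw [hconv (-X), neg_neg]
  -- assemble
  refine ⟨B + A, ?_⟩
  have hii : ∀ a b : ℝ, IntervalIntegrable
      (fun t => Complex.exp (-(Complex.I * s * t)) * ((f t : ℝ) : ℂ)) volume a b := by
    intro a b
    have hfm : Measurable f := by
      have : f = fun x => p x - q x := funext fun x => hfpq x
      rw [this]
      exact hpmono.measurable.sub hqmono.measurable
    exact intInt hfm hfbdd s a b
  have hsplit : ∀ P : ℝ × ℝ,
      (∫ t in P.1..P.2, Complex.exp (-(Complex.I * s * t)) * ((f t : ℝ) : ℂ))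
      = (∫ t in P.1..(0:ℝ), Complex.exp (-(Complex.I * s * t)) * ((f t : ℝ) : ℂ))
        + ∫ t in (0:ℝ)..P.2, Complex.exp (-(Complex.I * s * t)) * ((f t : ℝ) : ℂ) :=
    fun P => (intervalIntegral.integral_add_adjacent_intervals (hii P.1 0) (hii 0 P.2)).symm
  have hfinal := (hBside.comp (tendsto_fst (f := (atBot : Filter ℝ)) (g := (atTop : Filter ℝ)))).add
    (hA.comp (tendsto_snd (f := (atBot : Filter ℝ)) (g := (atTop : Filter ℝ))))
  apply hfinal.congr
  intro P
  exact (hsplit P).symm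
end

section
/- Let c ∈ ℝ, δ > 0, and let f : ℝ → ℝ be measurable, odd about c (i.e., f(c+t) = −f(c−t) for all t), and satisfy ∫_c^{c+δ} |f(t)|·|t−c| dt < ∞. For s ∈ ℝ define the principal value Fourier transform f̂(s) = −2i e^{-isc} ∫_0^δ sin(st) f(c+t) dt (a Lebesgue integral, which exists since |sin(st)| ≤ |s|t; it equals lim_{ε→0⁺} ∫_{ε<|t−c|<δ} e^{-ist} f(t) dt). Fix x ∉ [c−δ, c+δ] and set T_n = (2n+1)π/(2|x−c|) for n ∈ ℕ. Then lim_{n→∞, S→0⁺} ∫_{S<|s|<T_n} e^{ixs} f̂(s) ds = 0, where the double limit means: for every ε > 0 there exist N ∈ ℕ and η > 0 such that the modulus of the integral over {s : S < |s| < T_n} is less than ε whenever n ≥ N and 0 < S < η. -/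
open MeasureTheory Filter Real intervalIntegral Set FourierTransform

/- ### Auxiliary lemmas -/

lemma RL_cos (φ : ℝ → ℝ) (hφ : Integrable φ) :
    Tendsto (fun T : ℝ => ∫ t : ℝ, φ t * Real.cos (T * t)) atTop (nhds 0) := by
  have hF : Integrable (fun t : ℝ => (φ t : ℂ)) := hφ.ofReal
  have key : ∀ w : ℝ, (𝓕 (fun t : ℝ => (φ t : ℂ)) w).re
      = ∫ t : ℝ, φ t * Real.cos (2 * Real.pi * w * t) := by
    intro w
    rw [Real.fourier_real_eq_integral_exp_smul]
    have hInt : Integrable (fun v : ℝ =>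
        Complex.exp (↑(-2 * Real.pi * v * w) * Complex.I) • (φ v : ℂ)) := by
      refine hφ.abs.mono' ?_ ?_
      · exact (Complex.continuous_exp.comp
          (by continuity : Continuous fun v : ℝ => ((-2 * Real.pi * v * w : ℝ) : ℂ) * Complex.I)).aestronglyMeasurable.smul hF.aestronglyMeasurable
      · filter_upwards with v
        rw [smul_eq_mul, norm_mul, Complex.norm_exp_ofReal_mul_I]
        simp
    rw [← RCLike.re_to_complex, ← integral_re hInt]
    congr 1
    ext v
    rw [RCLike.re_to_complex, smul_eq_mul, Complex.mul_re, Complex.exp_ofReal_mul_I_re]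
    simp [Real.cos_neg]
    ring_nf
  have h1 : Tendsto (fun w : ℝ => (𝓕 (fun t : ℝ => (φ t : ℂ)) w).re)
      (Filter.cocompact ℝ) (nhds 0) := by
    have := Real.zero_at_infty_fourier (fun t : ℝ => (φ t : ℂ))
    simpa [Function.comp_def] using (Complex.continuous_re.tendsto 0).comp this
  have h2 : Tendsto (fun T : ℝ => T / (2 * Real.pi)) atTop (Filter.cocompact ℝ) := by
    have ht : Tendsto (fun T : ℝ => T / (2 * Real.pi)) atTop atTop :=
      tendsto_id.atTop_div_const (by positivity)
    exact ht.mono_right (by rw [cocompact_eq_atBot_atTop]; exact le_sup_right)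
  have := (h1.comp h2)
  refine this.congr fun T => ?_
  simp only [Function.comp_apply]
  rw [key]
  congr 1; ext t
  congr 2
  field_simp

noncomputable def FF (a t r : ℝ) : ℝ :=
  (Real.sin ((a - t) * r) / (a - t) - Real.sin ((a + t) * r) / (a + t)) / 2

lemma integral_sin_mul_sin (a t S T : ℝ) (h1 : a - t ≠ 0) (h2 : a + t ≠ 0) :
    ∫ s in S..T, Real.sin (a * s) * Real.sin (t * s) = FF a t T - FF a t S := by
  apply intervalIntegral.integral_eq_sub_of_hasDerivAt
  · intro s _
    have d1 : HasDerivAt (fun r => Real.sin ((a - t) * r)) (Real.cos ((a - t) * s) * (a - t)) s := by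
      simpa [Function.comp_def] using (Real.hasDerivAt_sin ((a - t) * s)).comp s
        (((hasDerivAt_id s).const_mul (a - t)) : HasDerivAt (fun y => (a - t) * y) ((a-t)*1) s)
    have d2 : HasDerivAt (fun r => Real.sin ((a + t) * r)) (Real.cos ((a + t) * s) * (a + t)) s := by
      simpa [Function.comp_def] using (Real.hasDerivAt_sin ((a + t) * s)).comp s
        (((hasDerivAt_id s).const_mul (a + t)) : HasDerivAt (fun y => (a + t) * y) ((a+t)*1) s)
    have d := ((d1.div_const (a - t)).sub (d2.div_const (a + t))).div_const 2
    refine d.congr_deriv (Eq.symm ?_)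
    rw [mul_div_cancel_right₀ _ h1, mul_div_cancel_right₀ _ h2, Real.cos_sub_cos]
    have e1 : ((a - t) * s + (a + t) * s) / 2 = a * s := by ring
    have e2 : ((a - t) * s - (a + t) * s) / 2 = -(t * s) := by ring
    rw [e1, e2, Real.sin_neg]
    ring
  · exact (Continuous.mul (by continuity) (by continuity)).intervalIntegrable S T

lemma FF_small (a t S : ℝ) (hS : 0 ≤ S) (ht : 0 ≤ t) (h1 : a - t ≠ 0) (h2 : a + t ≠ 0) :
    |FF a t S| ≤ t * S ^ 2 / 2 := by
  have h0 : FF a t S = ∫ s in (0:ℝ)..S, Real.sin (a * s) * Real.sin (t * s) := by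
    rw [integral_sin_mul_sin a t 0 S h1 h2]; simp [FF]
  rw [h0]
  have hi1 : IntervalIntegrable (fun s => |Real.sin (a * s) * Real.sin (t * s)|) volume 0 S :=
    ((Continuous.mul (by continuity) (by continuity)).abs).intervalIntegrable 0 S
  have hi2 : IntervalIntegrable (fun s => t * s) volume 0 S :=
    (continuous_const.mul continuous_id).intervalIntegrable 0 S
  calc |∫ s in (0:ℝ)..S, Real.sin (a * s) * Real.sin (t * s)|
      ≤ ∫ s in (0:ℝ)..S, |Real.sin (a * s) * Real.sin (t * s)| :=
        intervalIntegral.abs_integral_le_integral_abs hS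
    _ ≤ ∫ s in (0:ℝ)..S, t * s := by
        refine intervalIntegral.integral_mono_on hS hi1 hi2 fun s hs => ?_
        rw [abs_mul]
        calc |Real.sin (a * s)| * |Real.sin (t * s)| ≤ 1 * |t * s| :=
              mul_le_mul (Real.abs_sin_le_one _) (Real.abs_sin_le_abs) (abs_nonneg _) zero_le_one
          _ = t * s := by rw [one_mul, abs_mul, abs_of_nonneg ht, abs_of_nonneg hs.1]
    _ = t * S ^ 2 / 2 := by rw [intervalIntegral.integral_const_mul, integral_id]; ring

lemma FF_T (a t T : ℝ) (hc : Real.cos (a * T) = 0) (h1 : a - t ≠ 0) (h2 : a + t ≠ 0) :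
    FF a t T = Real.sin (a * T) * (Real.cos (T * t) * (t / (a ^ 2 - t ^ 2))) := by
  have e1 : (a - t) * T = a * T - t * T := by ring
  have e2 : (a + t) * T = a * T + t * T := by ring
  rw [FF, e1, e2, Real.sin_sub, Real.sin_add, hc]
  have ha2 : a ^ 2 - t ^ 2 = (a - t) * (a + t) := by ring
  rw [ha2]
  field_simp
  ring_nf

lemma cos_aT (a : ℝ) (ha : a ≠ 0) (n : ℕ) :
    Real.cos (a * ((2 * (n:ℝ) + 1) * Real.pi / (2 * |a|))) = 0 := by
  rcases lt_or_gt_of_ne ha with h | h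
  · rw [abs_of_neg h, Real.cos_eq_zero_iff]
    refine ⟨-(n:ℤ) - 1, ?_⟩
    push_cast
    field_simp
    ring
  · rw [abs_of_pos h, Real.cos_eq_zero_iff]
    refine ⟨(n:ℤ), ?_⟩
    push_cast
    field_simp

lemma abs_sin_aT (a T : ℝ) (hcT : Real.cos (a * T) = 0) : |Real.sin (a * T)| = 1 := by
  have h2 : Real.sin (a * T) ^ 2 = 1 := by nlinarith [Real.sin_sq_add_cos_sq (a * T)]
  rw [← Real.sqrt_sq_eq_abs, h2, Real.sqrt_one]

lemma hat1 {δ a t : ℝ} (ha : δ < |a|) (ht : t ∈ Set.Ioc 0 δ) : a - t ≠ 0 := by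
  intro h
  have : a = t := sub_eq_zero.mp h
  subst this
  rw [abs_of_pos ht.1] at ha
  linarith [ht.2]

lemma hat2 {δ a t : ℝ} (ha : δ < |a|) (ht : t ∈ Set.Ioc 0 δ) : a + t ≠ 0 := by
  intro h
  have : a = -t := by linarith
  subst this
  rw [abs_neg, abs_of_pos ht.1] at ha
  linarith [ht.2]

lemma hsq {δ a t : ℝ} (hδ : 0 ≤ δ) (ha : δ < |a|) (ht : t ∈ Set.Ioc 0 δ) :
    0 < a ^ 2 - δ ^ 2 ∧ a ^ 2 - δ ^ 2 ≤ a ^ 2 - t ^ 2 := by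
  have h1 := sq_abs a
  constructor <;> nlinarith [ht.1, ht.2]

lemma Icont {δ : ℝ} (hδ : 0 < δ) {g : ℝ → ℝ} (hgm : Measurable g)
    (hw : IntegrableOn (fun t => |g t| * t) (Set.Ioc 0 δ)) :
    Continuous (fun s : ℝ => ∫ t in (0:ℝ)..δ, Real.sin (s * t) * g t) := by
  have heq : (fun s : ℝ => ∫ t in (0:ℝ)..δ, Real.sin (s * t) * g t)
      = fun s : ℝ => ∫ t in Set.Ioc 0 δ, Real.sin (s * t) * g t := by
    funext s; exact intervalIntegral.integral_of_le hδ.le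
  rw [heq, continuous_iff_continuousAt]
  intro s₀
  refine continuousAt_of_dominated (F := fun (s : ℝ) (t : ℝ) => Real.sin (s * t) * g t)
    (bound := fun t => (|s₀| + 1) * (|g t| * t)) ?_ ?_ ?_ ?_
  · filter_upwards with s
    exact ((Real.measurable_sin.comp (measurable_id.const_mul s)).mul hgm).aestronglyMeasurable
  · filter_upwards [Metric.ball_mem_nhds s₀ one_pos] with s hs
    rw [ae_restrict_iff' measurableSet_Ioc]
    filter_upwards with t ht
    have hsb : |s| ≤ |s₀| + 1 := by
      have h1 := abs_sub_abs_le_abs_sub s s₀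
      have h2 : |s - s₀| < 1 := by
        have := Metric.mem_ball.mp hs
        rwa [Real.dist_eq] at this
      linarith
    have h3 : |Real.sin (s * t)| ≤ |s| * t := by
      have h := Real.abs_sin_le_abs (x := s * t)
      rwa [abs_mul, abs_of_pos ht.1] at h
    rw [Real.norm_eq_abs, abs_mul]
    have ht0 := ht.1.le
    calc |Real.sin (s * t)| * |g t| ≤ (|s| * t) * |g t| :=
          mul_le_mul_of_nonneg_right h3 (abs_nonneg _)
      _ ≤ ((|s₀| + 1) * t) * |g t| := by
          have := mul_le_mul_of_nonneg_right
            (mul_le_mul_of_nonneg_right hsb ht0) (abs_nonneg (g t))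
          linarith
      _ = (|s₀| + 1) * (|g t| * t) := by ring
  · exact hw.const_mul _
  · filter_upwards with t
    exact ((Real.continuous_sin.comp (continuous_id.mul continuous_const)).mul
      continuous_const).continuousAt

lemma FF_meas (a r : ℝ) : Measurable fun t => FF a t r := by
  unfold FF
  fun_prop

lemma int_gFF_T {δ : ℝ} (hδ : 0 < δ) {g : ℝ → ℝ} (hgm : Measurable g)
    (hw : IntegrableOn (fun t => |g t| * t) (Set.Ioc 0 δ))
    {a : ℝ} (ha : δ < |a|) (T : ℝ) (hcT : Real.cos (a * T) = 0) :
    IntegrableOn (fun t => g t * FF a t T) (Set.Ioc 0 δ) := by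
  refine Integrable.mono' (hw.const_mul ((a ^ 2 - δ ^ 2)⁻¹)) ?_ ?_
  · exact (hgm.mul (FF_meas a T)).aestronglyMeasurable
  · rw [ae_restrict_iff' measurableSet_Ioc]
    filter_upwards with t ht
    have h1 := hat1 ha ht
    have h2 := hat2 ha ht
    obtain ⟨hq1, hq2⟩ := hsq hδ.le ha ht
    rw [Real.norm_eq_abs, abs_mul, FF_T a t T hcT h1 h2]
    have hFFb : |Real.sin (a*T) * (Real.cos (T*t) * (t / (a^2 - t^2)))| ≤ (a^2 - δ^2)⁻¹ * t := by
      rw [abs_mul, abs_mul]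
      have hd : |t / (a ^ 2 - t ^ 2)| ≤ (a ^ 2 - δ ^ 2)⁻¹ * t := by
        rw [abs_div, abs_of_pos ht.1, abs_of_pos (show (0:ℝ) < a ^ 2 - t ^ 2 by linarith)]
        rw [div_le_iff₀ (by linarith)]
        rw [inv_mul_eq_div, div_mul_eq_mul_div, le_div_iff₀ (by linarith)]
        nlinarith [ht.1.le]
      calc |Real.sin (a*T)| * (|Real.cos (T*t)| * |t / (a^2 - t^2)|)
          ≤ 1 * (1 * ((a ^ 2 - δ ^ 2)⁻¹ * t)) := by
            refine mul_le_mul (Real.abs_sin_le_one _) ?_ (by positivity) zero_le_one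
            exact mul_le_mul (Real.abs_cos_le_one _) hd (abs_nonneg _) zero_le_one
        _ = (a ^ 2 - δ ^ 2)⁻¹ * t := by ring
    calc |g t| * |Real.sin (a*T) * (Real.cos (T*t) * (t / (a^2 - t^2)))|
        ≤ |g t| * ((a ^ 2 - δ ^ 2)⁻¹ * t) := mul_le_mul_of_nonneg_left hFFb (abs_nonneg _)
      _ = (a ^ 2 - δ ^ 2)⁻¹ * (|g t| * t) := by ring

lemma int_gFF_S {δ : ℝ} {g : ℝ → ℝ} (hgm : Measurable g)
    (hw : IntegrableOn (fun t => |g t| * t) (Set.Ioc 0 δ))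
    {a : ℝ} (ha : δ < |a|) (S : ℝ) (hS : 0 ≤ S) :
    IntegrableOn (fun t => g t * FF a t S) (Set.Ioc 0 δ) := by
  refine Integrable.mono' (hw.const_mul (S ^ 2 / 2)) ?_ ?_
  · exact (hgm.mul (FF_meas a S)).aestronglyMeasurable
  · rw [ae_restrict_iff' measurableSet_Ioc]
    filter_upwards with t ht
    have hb := FF_small a t S hS ht.1.le (hat1 ha ht) (hat2 ha ht)
    rw [Real.norm_eq_abs, abs_mul]
    calc |g t| * |FF a t S| ≤ |g t| * (t * S ^ 2 / 2) :=
          mul_le_mul_of_nonneg_left hb (abs_nonneg _)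
      _ = S ^ 2 / 2 * (|g t| * t) := by ring

lemma sum_eq_ofReal (Iδ : ℝ → ℝ) (hIcont : Continuous Iδ)
    (hIneg : ∀ s, Iδ (-s) = - Iδ s) (a x c : ℝ) (hxc : x - c = a) (S T : ℝ) :
    (∫ s in (-T)..(-S), Complex.exp (Complex.I * x * s) *
        ((-2 : ℂ) * Complex.I * Complex.exp (-(Complex.I * s * c)) * ((Iδ s : ℝ) : ℂ)))
      + (∫ s in S..T, Complex.exp (Complex.I * x * s) *
        ((-2 : ℂ) * Complex.I * Complex.exp (-(Complex.I * s * c)) * ((Iδ s : ℝ) : ℂ)))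
    = ((∫ s in S..T, 4 * Real.sin (a * s) * Iδ s : ℝ) : ℂ) := by
  have c2 : Continuous fun s : ℝ => -(Complex.I * (s : ℂ) * (c : ℂ)) :=
    ((continuous_const.mul Complex.continuous_ofReal).mul continuous_const).neg
  have hHcont : Continuous fun s : ℝ => Complex.exp (Complex.I * x * s) *
      ((-2 : ℂ) * Complex.I * Complex.exp (-(Complex.I * s * c)) * ((Iδ s : ℝ) : ℂ)) := by
    refine Continuous.mul (Complex.continuous_exp.comp ?_) ?_
    · exact continuous_const.mul Complex.continuous_ofReal
    · exact (continuous_const.mul (Complex.continuous_exp.comp c2)).mul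
        (Complex.continuous_ofReal.comp hIcont)
  have key3 : ∀ s : ℝ, (Complex.exp (Complex.I * x * (-s : ℝ)) *
        ((-2 : ℂ) * Complex.I * Complex.exp (-(Complex.I * (-s : ℝ) * c)) * ((Iδ (-s) : ℝ) : ℂ)))
      + (Complex.exp (Complex.I * x * s) *
        ((-2 : ℂ) * Complex.I * Complex.exp (-(Complex.I * s * c)) * ((Iδ s : ℝ) : ℂ)))
      = ((4 * Real.sin (a * s) * Iδ s : ℝ) : ℂ) := by
    intro s
    have ep : Complex.exp (Complex.I * x * s) * Complex.exp (-(Complex.I * s * c))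
        = Complex.cos (a * s) + Complex.sin (a * s) * Complex.I := by
      rw [← Complex.exp_add]
      have e : Complex.I * x * s + -(Complex.I * s * c) = ((a * s : ℝ) : ℂ) * Complex.I := by
        rw [← hxc]; push_cast; ring
      rw [e, Complex.exp_mul_I]
      norm_cast
    have em : Complex.exp (Complex.I * x * ((-s : ℝ) : ℂ)) *
          Complex.exp (-(Complex.I * ((-s : ℝ) : ℂ) * c))
        = Complex.cos (a * s) - Complex.sin (a * s) * Complex.I := by
      rw [← Complex.exp_add]
      have e : Complex.I * x * ((-s : ℝ) : ℂ) + -(Complex.I * ((-s : ℝ) : ℂ) * c)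
          = ((-(a * s) : ℝ) : ℂ) * Complex.I := by
        rw [← hxc]; push_cast; ring
      rw [e]
      push_cast
      rw [Complex.exp_mul_I, Complex.cos_neg, Complex.sin_neg]
      ring
    rw [hIneg s]
    calc Complex.exp (Complex.I * x * (-s : ℝ)) *
          ((-2 : ℂ) * Complex.I * Complex.exp (-(Complex.I * (-s : ℝ) * c)) * ((- Iδ s : ℝ) : ℂ))
        + Complex.exp (Complex.I * x * s) *
          ((-2 : ℂ) * Complex.I * Complex.exp (-(Complex.I * s * c)) * ((Iδ s : ℝ) : ℂ))
        = (Complex.exp (Complex.I * x * ((-s : ℝ) : ℂ)) *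
            Complex.exp (-(Complex.I * ((-s : ℝ) : ℂ) * c))) * ((-2 : ℂ) * Complex.I * (-(Iδ s : ℂ)))
          + (Complex.exp (Complex.I * x * s) * Complex.exp (-(Complex.I * s * c)))
            * ((-2 : ℂ) * Complex.I * ((Iδ s : ℝ) : ℂ)) := by push_cast; ring
      _ = ((4 * Real.sin (a * s) * Iδ s : ℝ) : ℂ) := by
          rw [em, ep]
          have hsin : Complex.sin ((a : ℂ) * (s : ℂ)) = ((Real.sin (a * s) : ℝ) : ℂ) := by
            push_cast; ring
          push_cast
          rw [hsin]
          linear_combination (-4 * ((Real.sin (a*s) : ℝ) : ℂ) * ((Iδ s : ℝ) : ℂ)) * Complex.I_mul_I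
  have hi1 : IntervalIntegrable (fun s : ℝ => Complex.exp (Complex.I * x * (-s : ℝ)) *
      ((-2 : ℂ) * Complex.I * Complex.exp (-(Complex.I * (-s : ℝ) * c)) * ((Iδ (-s) : ℝ) : ℂ)))
      volume S T :=
    (hHcont.comp continuous_neg).intervalIntegrable S T
  calc (∫ s in (-T)..(-S), Complex.exp (Complex.I * x * s) *
        ((-2 : ℂ) * Complex.I * Complex.exp (-(Complex.I * s * c)) * ((Iδ s : ℝ) : ℂ)))
      + (∫ s in S..T, Complex.exp (Complex.I * x * s) *
        ((-2 : ℂ) * Complex.I * Complex.exp (-(Complex.I * s * c)) * ((Iδ s : ℝ) : ℂ)))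
      = (∫ s in S..T, Complex.exp (Complex.I * x * (-s : ℝ)) *
        ((-2 : ℂ) * Complex.I * Complex.exp (-(Complex.I * (-s : ℝ) * c)) * ((Iδ (-s) : ℝ) : ℂ)))
      + (∫ s in S..T, Complex.exp (Complex.I * x * s) *
        ((-2 : ℂ) * Complex.I * Complex.exp (-(Complex.I * s * c)) * ((Iδ s : ℝ) : ℂ))) := by
        rw [intervalIntegral.integral_comp_neg (a := S) (b := T)
          (f := fun s => Complex.exp (Complex.I * x * s) *
            ((-2 : ℂ) * Complex.I * Complex.exp (-(Complex.I * s * c)) * ((Iδ s : ℝ) : ℂ)))]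
    _ = ∫ s in S..T, (Complex.exp (Complex.I * x * (-s : ℝ)) *
        ((-2 : ℂ) * Complex.I * Complex.exp (-(Complex.I * (-s : ℝ) * c)) * ((Iδ (-s) : ℝ) : ℂ))
        + Complex.exp (Complex.I * x * s) *
        ((-2 : ℂ) * Complex.I * Complex.exp (-(Complex.I * s * c)) * ((Iδ s : ℝ) : ℂ))) := by
        rw [← intervalIntegral.integral_add hi1 (hHcont.intervalIntegrable S T)]
    _ = ∫ s in S..T, ((4 * Real.sin (a * s) * Iδ s : ℝ) : ℂ) :=
        intervalIntegral.integral_congr (fun s _ => key3 s)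
    _ = ((∫ s in S..T, 4 * Real.sin (a * s) * Iδ s : ℝ) : ℂ) := intervalIntegral.integral_ofReal

lemma real_side (δ : ℝ) (hδ : 0 < δ) (g : ℝ → ℝ) (hgm : Measurable g)
    (hw : IntegrableOn (fun t => |g t| * t) (Set.Ioc 0 δ))
    (a : ℝ) (ha : δ < |a|)
    (S T : ℝ) (hS : 0 < S) (hST : S ≤ T) (hcT : Real.cos (a * T) = 0) :
    (∫ s in S..T, 4 * Real.sin (a * s) * ∫ t in (0:ℝ)..δ, Real.sin (s * t) * g t)
    = 4 * Real.sin (a * T) * (∫ t in Set.Ioc 0 δ, (g t * (t / (a ^ 2 - t ^ 2))) * Real.cos (T * t))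
      - 4 * ∫ t in Set.Ioc 0 δ, g t * FF a t S := by
  have hFub : Integrable (Function.uncurry fun s t => Real.sin (a * s) * (Real.sin (s * t) * g t))
      ((volume.restrict (Set.Ioc S T)).prod (volume.restrict (Set.Ioc 0 δ))) := by
    have hconst : Integrable (fun _ : ℝ => T) (volume.restrict (Set.Ioc S T)) :=
      (integrableOn_const_iff).mpr (Or.inr measure_Ioc_lt_top)
    refine Integrable.mono' (hconst.mul_prod hw) ?_ ?_
    · apply Measurable.aestronglyMeasurable
      apply Measurable.mul
      · exact Real.measurable_sin.comp (measurable_fst.const_mul a)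
      · exact (Real.measurable_sin.comp (measurable_fst.mul measurable_snd)).mul
          (hgm.comp measurable_snd)
    · rw [Measure.prod_restrict, ae_restrict_iff' (measurableSet_Ioc.prod measurableSet_Ioc)]
      filter_upwards with p hp
      obtain ⟨hp1, hp2⟩ := hp
      rw [Function.uncurry]
      simp only [Real.norm_eq_abs]
      have e1 : |Real.sin (a * p.1)| ≤ 1 := Real.abs_sin_le_one _
      have e2 : |Real.sin (p.1 * p.2)| ≤ p.1 * p.2 := by
        have := Real.abs_sin_le_abs (x := p.1 * p.2)
        rwa [abs_of_pos (mul_pos (hS.trans hp1.1) hp2.1)] at this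
      rw [abs_mul, abs_mul]
      have h0 : (0:ℝ) < p.1 := hS.trans hp1.1
      calc |Real.sin (a * p.1)| * (|Real.sin (p.1 * p.2)| * |g p.2|)
          ≤ 1 * ((p.1 * p.2) * |g p.2|) := by
            refine mul_le_mul e1 (mul_le_mul_of_nonneg_right e2 (abs_nonneg _))
              (by positivity) zero_le_one
        _ = p.1 * (p.2 * |g p.2|) := by ring
        _ ≤ T * (|g p.2| * p.2) := by
            have h5 := mul_le_mul_of_nonneg_right hp1.2
              (mul_nonneg hp2.1.le (abs_nonneg (g p.2)))
            nlinarith [h5]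
  have pull4 : (∫ s in S..T, 4 * Real.sin (a * s) * ∫ t in (0:ℝ)..δ, Real.sin (s * t) * g t)
      = 4 * ∫ s in S..T, Real.sin (a * s) * ∫ t in (0:ℝ)..δ, Real.sin (s * t) * g t := by
    rw [← intervalIntegral.integral_const_mul]
    apply intervalIntegral.integral_congr
    intro s _
    dsimp only
    ring
  have step0 : (∫ s in S..T, Real.sin (a * s) * ∫ t in (0:ℝ)..δ, Real.sin (s * t) * g t)
      = ∫ s in Set.Ioc S T, ∫ t in Set.Ioc 0 δ, Real.sin (a * s) * (Real.sin (s * t) * g t) := by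
    rw [intervalIntegral.integral_of_le hST]
    apply setIntegral_congr_fun measurableSet_Ioc
    intro s _
    dsimp only
    rw [intervalIntegral.integral_of_le hδ.le, ← MeasureTheory.integral_const_mul]
  rw [pull4, step0, MeasureTheory.integral_integral_swap hFub]
  have step2 : (∫ t in Set.Ioc 0 δ, ∫ s in Set.Ioc S T, Real.sin (a * s) * (Real.sin (s * t) * g t))
      = ∫ t in Set.Ioc 0 δ, g t * (FF a t T - FF a t S) := by
    apply setIntegral_congr_fun measurableSet_Ioc
    intro t ht
    have h1 := hat1 ha ht
    have h2 := hat2 ha ht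
    dsimp only
    calc (∫ s in Set.Ioc S T, Real.sin (a * s) * (Real.sin (s * t) * g t))
        = ∫ s in S..T, (Real.sin (a * s) * Real.sin (t * s)) * g t := by
          rw [intervalIntegral.integral_of_le hST]
          apply setIntegral_congr_fun measurableSet_Ioc
          intro s _
          dsimp only
          rw [mul_comm s t]; ring
      _ = (∫ s in S..T, Real.sin (a * s) * Real.sin (t * s)) * g t :=
          intervalIntegral.integral_mul_const _ _
      _ = g t * (FF a t T - FF a t S) := by
          rw [integral_sin_mul_sin a t S T h1 h2]; ring
  rw [step2]
  have hsplit : (∫ t in Set.Ioc 0 δ, g t * (FF a t T - FF a t S))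
      = (∫ t in Set.Ioc 0 δ, g t * FF a t T) - ∫ t in Set.Ioc 0 δ, g t * FF a t S := by
    rw [← MeasureTheory.integral_sub (int_gFF_T hδ hgm hw ha T hcT)
      (int_gFF_S hgm hw ha S hS.le)]
    apply setIntegral_congr_fun measurableSet_Ioc
    intro t _
    dsimp only
    ring
  rw [hsplit]
  have step3 : (∫ t in Set.Ioc 0 δ, g t * FF a t T)
      = Real.sin (a * T) * ∫ t in Set.Ioc 0 δ, (g t * (t / (a ^ 2 - t ^ 2))) * Real.cos (T * t) := by
    rw [← MeasureTheory.integral_const_mul]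
    apply setIntegral_congr_fun measurableSet_Ioc
    intro t ht
    dsimp only
    rw [FF_T a t T hcT (hat1 ha ht) (hat2 ha ht)]
    ring
  rw [step3]
  ring

theorem pv_key (δ : ℝ) (hδ : 0 < δ) (g : ℝ → ℝ) (hgm : Measurable g)
    (hw : IntegrableOn (fun t => |g t| * t) (Set.Ioc 0 δ))
    (a : ℝ) (ha : δ < |a|) (x c : ℝ) (hxc : x - c = a)
    (S T : ℝ) (hS : 0 < S) (hST : S ≤ T) (hcT : Real.cos (a * T) = 0) :
    (∫ s in (-T)..(-S), Complex.exp (Complex.I * x * s) *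
        ((-2 : ℂ) * Complex.I * Complex.exp (-(Complex.I * s * c)) *
          ((∫ t in (0:ℝ)..δ, Real.sin (s * t) * g t : ℝ) : ℂ)))
      + (∫ s in S..T, Complex.exp (Complex.I * x * s) *
        ((-2 : ℂ) * Complex.I * Complex.exp (-(Complex.I * s * c)) *
          ((∫ t in (0:ℝ)..δ, Real.sin (s * t) * g t : ℝ) : ℂ)))
    = ((4 * Real.sin (a * T)
          * (∫ t in Set.Ioc 0 δ, (g t * (t / (a ^ 2 - t ^ 2))) * Real.cos (T * t))
        - 4 * ∫ t in Set.Ioc 0 δ, g t * FF a t S : ℝ) : ℂ) := by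
  have hIcont := Icont hδ hgm hw
  have hIneg : ∀ s : ℝ, (∫ t in (0:ℝ)..δ, Real.sin (-s * t) * g t)
      = -∫ t in (0:ℝ)..δ, Real.sin (s * t) * g t := by
    intro s
    rw [← intervalIntegral.integral_neg]
    apply intervalIntegral.integral_congr
    intro t _
    dsimp only
    rw [neg_mul, Real.sin_neg, neg_mul]
  exact (sum_eq_ofReal (fun s => ∫ t in (0:ℝ)..δ, Real.sin (s * t) * g t) hIcont hIneg
      a x c hxc S T).trans
    (congrArg Complex.ofReal (real_side δ hδ g hgm hw a ha S T hS hST hcT))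

lemma Q_bound {δ : ℝ} {g : ℝ → ℝ}
    (hw : IntegrableOn (fun t => |g t| * t) (Set.Ioc 0 δ))
    {a : ℝ} (ha : δ < |a|) (S : ℝ) (hS : 0 ≤ S) :
    |∫ t in Set.Ioc 0 δ, g t * FF a t S|
      ≤ (∫ t in Set.Ioc 0 δ, |g t| * t) * (S ^ 2 / 2) := by
  have h := norm_integral_le_of_norm_le (μ := volume.restrict (Set.Ioc 0 δ))
    (f := fun t => g t * FF a t S)
    (g := fun t => (|g t| * t) * (S ^ 2 / 2)) (hw.mul_const _) ?_
  · rw [Real.norm_eq_abs] at h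
    rwa [MeasureTheory.integral_mul_const] at h
  · rw [ae_restrict_iff' measurableSet_Ioc]
    filter_upwards with t ht
    have hb := FF_small a t S hS ht.1.le (hat1 ha ht) (hat2 ha ht)
    rw [Real.norm_eq_abs, abs_mul]
    calc |g t| * |FF a t S| ≤ |g t| * (t * S ^ 2 / 2) :=
          mul_le_mul_of_nonneg_left hb (abs_nonneg _)
      _ = (|g t| * t) * (S ^ 2 / 2) := by ring

lemma int_psi {δ : ℝ} (hδ : 0 < δ) {g : ℝ → ℝ} (hgm : Measurable g)
    (hw : IntegrableOn (fun t => |g t| * t) (Set.Ioc 0 δ))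
    {a : ℝ} (ha : δ < |a|) :
    IntegrableOn (fun t => g t * (t / (a ^ 2 - t ^ 2))) (Set.Ioc 0 δ) := by
  refine Integrable.mono' (hw.const_mul ((a ^ 2 - δ ^ 2)⁻¹)) ?_ ?_
  · exact (hgm.mul (by fun_prop : Measurable fun t : ℝ => t / (a ^ 2 - t ^ 2))).aestronglyMeasurable
  · rw [ae_restrict_iff' measurableSet_Ioc]
    filter_upwards with t ht
    obtain ⟨hq1, hq2⟩ := hsq hδ.le ha ht
    rw [Real.norm_eq_abs, abs_mul, abs_div, abs_of_pos ht.1,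
      abs_of_pos (show (0:ℝ) < a ^ 2 - t ^ 2 by linarith)]
    have hd : t / (a ^ 2 - t ^ 2) ≤ (a ^ 2 - δ ^ 2)⁻¹ * t := by
      rw [div_le_iff₀ (by linarith), inv_mul_eq_div, div_mul_eq_mul_div,
        le_div_iff₀ (by linarith)]
      nlinarith [ht.1.le]
    calc |g t| * (t / (a ^ 2 - t ^ 2)) ≤ |g t| * ((a ^ 2 - δ ^ 2)⁻¹ * t) :=
          mul_le_mul_of_nonneg_left hd (abs_nonneg _)
      _ = (a ^ 2 - δ ^ 2)⁻¹ * (|g t| * t) := by ring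

lemma P1_tendsto {δ : ℝ} (hδ : 0 < δ) {g : ℝ → ℝ} (hgm : Measurable g)
    (hw : IntegrableOn (fun t => |g t| * t) (Set.Ioc 0 δ))
    {a : ℝ} (ha : δ < |a|) (Tn : ℕ → ℝ) (hTn : Tendsto Tn atTop atTop) :
    Tendsto (fun n : ℕ =>
        ∫ t in Set.Ioc 0 δ, (g t * (t / (a ^ 2 - t ^ 2))) * Real.cos (Tn n * t))
      atTop (nhds 0) := by
  set φ : ℝ → ℝ := (Set.Ioc 0 δ).indicator (fun t => g t * (t / (a ^ 2 - t ^ 2))) with hφdef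
  have hφ : Integrable φ := by
    rw [hφdef, integrable_indicator_iff measurableSet_Ioc]
    exact int_psi hδ hgm hw ha
  have heq : ∀ T : ℝ, (∫ t in Set.Ioc 0 δ, (g t * (t / (a ^ 2 - t ^ 2))) * Real.cos (T * t))
      = ∫ t : ℝ, φ t * Real.cos (T * t) := by
    intro T
    rw [← MeasureTheory.integral_indicator measurableSet_Ioc]
    congr 1
    funext t
    by_cases ht : t ∈ Set.Ioc 0 δ <;>
      simp [hφdef, Set.indicator_of_mem, Set.indicator_of_notMem, ht]
  have := (RL_cos φ hφ).comp hTn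
  refine this.congr fun n => ?_
  simp only [Function.comp_apply]
  rw [heq]

lemma Tn_tendsto {A : ℝ} (hA : 0 < A) :
    Tendsto (fun n : ℕ => (2 * (n : ℝ) + 1) * Real.pi / (2 * A)) atTop atTop := by
  apply Tendsto.atTop_div_const (by linarith)
  apply Tendsto.atTop_mul_const Real.pi_pos
  apply tendsto_atTop_add_const_right
  exact (tendsto_natCast_atTop_atTop (R := ℝ)).const_mul_atTop two_pos


/-- Principal value transforms: for `f` odd about `c` with `∫_c^{c+δ} |f(t)||t-c| dt < ∞`,
principal value Fourier transform `f̂(s) = -2i e^{-isc} ∫_0^δ sin(st) f(c+t) dt`, and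
`x ∉ [c-δ, c+δ]`, with `T_n = (2n+1)π/(2|x-c|)` one has
`lim_{n→∞, S→0⁺} ∫_{S<|s|<T_n} e^{ixs} f̂(s) ds = 0`, where the integral over
`{S<|s|<T_n}` is `∫_{-T_n}^{-S} + ∫_S^{T_n}`. -/
theorem pv_fourier_inversion_vanishes (c δ : ℝ) (hδ : 0 < δ)
    (f : ℝ → ℝ) (hmeas : Measurable f)
    (hodd : ∀ t : ℝ, f (c + t) = - f (c - t))
    (hint : MeasureTheory.IntegrableOn (fun t : ℝ => |f t| * |t - c|) (Set.Icc c (c + δ)))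
    (x : ℝ) (hx : x ∉ Set.Icc (c - δ) (c + δ)) :
    Filter.Tendsto
      (fun P : ℕ × ℝ =>
        (∫ s in (-((2 * (P.1 : ℝ) + 1) * Real.pi / (2 * |x - c|)))..(-P.2),
          Complex.exp (Complex.I * x * s) *
            ((-2 : ℂ) * Complex.I * Complex.exp (-(Complex.I * s * c)) *
              ((∫ t in (0:ℝ)..δ, Real.sin (s * t) * f (c + t) : ℝ) : ℂ))) +
        ∫ s in P.2..((2 * (P.1 : ℝ) + 1) * Real.pi / (2 * |x - c|)),
          Complex.exp (Complex.I * x * s) *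
            ((-2 : ℂ) * Complex.I * Complex.exp (-(Complex.I * s * c)) *
              ((∫ t in (0:ℝ)..δ, Real.sin (s * t) * f (c + t) : ℝ) : ℂ)))
      (Filter.atTop ×ˢ nhdsWithin 0 (Set.Ioi 0))
      (nhds 0) := by
  set a := x - c with ha_def
  have hxc : x - c = a := rfl
  have ha : δ < |a| := by
    rw [Set.mem_Icc, not_and_or] at hx
    rcases hx with h | h
    · push_neg at h
      rw [abs_of_neg (show a < 0 by rw [ha_def]; linarith)]
      rw [ha_def]; linarith
    · push_neg at h
      rw [abs_of_pos (show 0 < a by rw [ha_def]; linarith)]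
      rw [ha_def]; linarith
  have ha0 : a ≠ 0 := by
    intro h
    rw [h] at ha
    simp at ha
    linarith
  have hA : (0:ℝ) < |a| := abs_pos.mpr ha0
  have hgm : Measurable (fun t => f (c + t)) := hmeas.comp (by fun_prop)
  -- integrability of |f(c+t)| * t on Ioc 0 δ
  have hw : IntegrableOn (fun t => |f (c + t)| * t) (Set.Ioc 0 δ) := by
    have h1 : IntervalIntegrable (fun t => |f t| * |t - c|) volume c (c + δ) := by
      rw [intervalIntegrable_iff, Set.uIoc_of_le (by linarith)]
      exact hint.mono_set Set.Ioc_subset_Icc_self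
    have h2 := h1.comp_add_left c
    rw [intervalIntegrable_iff] at h2
    simp only [sub_self, add_sub_cancel_left] at h2
    rw [Set.uIoc_of_le hδ.le] at h2
    refine (IntegrableOn.congr_fun h2 ?_ measurableSet_Ioc)
    intro t ht
    simp only
    rw [abs_of_pos ht.1]
  set Cw := ∫ t in Set.Ioc 0 δ, |f (c + t)| * t with hCw_def
  have hCw0 : 0 ≤ Cw := by
    apply setIntegral_nonneg measurableSet_Ioc
    intro t ht
    exact mul_nonneg (abs_nonneg _) ht.1.le
  have hT0 : 0 < Real.pi / (2 * |a|) := by positivity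
  refine squeeze_zero_norm'
    (a := fun P : ℕ × ℝ =>
      4 * |∫ t in Set.Ioc 0 δ, (f (c + t) * (t / (a ^ 2 - t ^ 2)))
        * Real.cos (((2 * (P.1 : ℝ) + 1) * Real.pi / (2 * |a|)) * t)| + 2 * Cw * P.2 ^ 2) ?_ ?_
  · -- eventual bound
    have hev : ∀ᶠ P : ℕ × ℝ in Filter.atTop ×ˢ nhdsWithin 0 (Set.Ioi 0),
        P.2 ∈ Set.Ioo 0 (Real.pi / (2 * |a|)) :=
      Filter.Eventually.prod_inr
        (Ioo_mem_nhdsGT_of_mem ⟨le_refl (0:ℝ), hT0⟩) _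
    filter_upwards [hev] with P hP
    obtain ⟨n, S⟩ := P
    simp only at hP ⊢
    have hS0 : 0 < S := hP.1
    have hcT : Real.cos (a * ((2 * (n:ℝ) + 1) * Real.pi / (2 * |a|))) = 0 := cos_aT a ha0 n
    have hST : S ≤ (2 * (n:ℝ) + 1) * Real.pi / (2 * |a|) := by
      have h1 : Real.pi / (2 * |a|) ≤ (2 * (n:ℝ) + 1) * Real.pi / (2 * |a|) := by
        apply div_le_div_of_nonneg_right ?_ (by positivity) |>.trans_eq rfl
        nlinarith [Real.pi_pos, (Nat.cast_nonneg n : (0:ℝ) ≤ (n:ℝ))]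
      linarith [hP.2]
    rw [pv_key δ hδ (fun t => f (c + t)) hgm hw a ha x c hxc S
      ((2 * (n:ℝ) + 1) * Real.pi / (2 * |a|)) hS0 hST hcT]
    rw [Complex.norm_real, Real.norm_eq_abs]
    set P1v := ∫ t in Set.Ioc 0 δ, (f (c + t) * (t / (a ^ 2 - t ^ 2)))
        * Real.cos (((2 * (n:ℝ) + 1) * Real.pi / (2 * |a|)) * t) with hP1v
    set Qv := ∫ t in Set.Ioc 0 δ, f (c + t) * FF a t S with hQv
    have hQ : |Qv| ≤ Cw * (S ^ 2 / 2) := Q_bound hw ha S hS0.le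
    have habsin := abs_sin_aT a _ hcT
    have e1 : |4 * Real.sin (a * ((2 * (n:ℝ) + 1) * Real.pi / (2 * |a|))) * P1v|
        = 4 * |P1v| := by
      rw [abs_mul, abs_mul, habsin]
      norm_num
    calc |4 * Real.sin (a * ((2 * (n:ℝ) + 1) * Real.pi / (2 * |a|))) * P1v - 4 * Qv|
        ≤ |4 * Real.sin (a * ((2 * (n:ℝ) + 1) * Real.pi / (2 * |a|))) * P1v| + |4 * Qv| :=
          abs_sub _ _
      _ ≤ 4 * |P1v| + 2 * Cw * S ^ 2 := by
          rw [e1, abs_mul]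
          have : |(4:ℝ)| * |Qv| ≤ 4 * (Cw * (S ^ 2 / 2)) := by
            rw [abs_of_nonneg (by norm_num : (0:ℝ) ≤ 4)]
            linarith
          rw [abs_of_nonneg (by norm_num : (0:ℝ) ≤ 4)] at this ⊢
          linarith
  · -- the bound tends to zero
    have t1 : Tendsto (fun n : ℕ =>
        4 * |∫ t in Set.Ioc 0 δ, (f (c + t) * (t / (a ^ 2 - t ^ 2)))
          * Real.cos (((2 * (n : ℝ) + 1) * Real.pi / (2 * |a|)) * t)|) atTop (nhds 0) := by
      have := ((P1_tendsto hδ hgm hw ha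
        (fun n : ℕ => (2 * (n : ℝ) + 1) * Real.pi / (2 * |a|)) (Tn_tendsto hA)).abs).const_mul 4
      simpa using this
    have t2 : Tendsto (fun S : ℝ => 2 * Cw * S ^ 2) (nhdsWithin 0 (Set.Ioi 0)) (nhds 0) := by
      have h : Tendsto (fun S : ℝ => 2 * Cw * S ^ 2) (nhds 0) (nhds 0) := by
        have hcont : Continuous (fun S : ℝ => 2 * Cw * S ^ 2) :=
          continuous_const.mul (continuous_pow 2)
        have := hcont.tendsto (0:ℝ)
        simpa using this
      exact h.mono_left nhdsWithin_le_nhds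
    have := (t1.comp (tendsto_fst (f := Filter.atTop) (g := nhdsWithin 0 (Set.Ioi 0)))).add
      (t2.comp (tendsto_snd (f := Filter.atTop) (g := nhdsWithin 0 (Set.Ioi 0))))
    simpa using this
end

section
/- Let 0 < α < 2 and let f(x) = sgn(x)|x|^{-α} for x ≠ 0, f(0) = 0. Let C_α = lim_{R→∞} ∫_0^R sin(t)·t^{-α} dt (this improper integral exists). Then for each real s ≠ 0 the principal value Fourier transform of f exists: lim_{ε→0⁺, R→∞} ∫_{ε<|t|<R} e^{-ist} sgn(t)|t|^{-α} dt = −2i·sgn(s)·|s|^{α−1}·C_α, where the double limit means: for every η > 0 there exist ε₀ > 0 and M > 0 such that the integral is within η of the right-hand side whenever 0 < ε < ε₀ and R > M. -/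
open MeasureTheory intervalIntegral Filter Set

namespace PVFaux

noncomputable def h (α : ℝ) (u : ℝ) : ℝ := Real.sin u * u ^ (-α)

noncomputable def F0 (α : ℝ) (x : ℝ) : ℝ := ∫ u in (0:ℝ)..x, h α u

lemma h_intble {α : ℝ} (hα2 : α < 2) {b : ℝ} (hb : 0 ≤ b) :
    IntervalIntegrable (h α) MeasureTheory.volume 0 b := by
  have hg : IntervalIntegrable (fun u : ℝ => u ^ (1 - α)) MeasureTheory.volume 0 b :=
    intervalIntegrable_rpow' (by linarith)
  refine hg.mono_fun ?_ ?_
  · exact (Real.measurable_sin.mul (measurable_id.pow_const (-α))).aestronglyMeasurable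
  · filter_upwards [MeasureTheory.ae_restrict_mem measurableSet_uIoc] with u hu
    rw [Set.uIoc_of_le hb] at hu
    have hu0 : 0 < u := hu.1
    rw [Real.norm_eq_abs, Real.norm_eq_abs, h, abs_mul,
      abs_of_pos (Real.rpow_pos_of_pos hu0 _),
      abs_of_pos (Real.rpow_pos_of_pos hu0 _)]
    calc |Real.sin u| * u ^ (-α) ≤ u * u ^ (-α) := by
          apply mul_le_mul_of_nonneg_right _ (Real.rpow_pos_of_pos hu0 _).le
          simpa [abs_of_pos hu0] using Real.abs_sin_le_abs (x := u)
      _ = u ^ (1 - α) := by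
          rw [show (1:ℝ) - α = 1 + -α by ring, Real.rpow_add hu0, Real.rpow_one]

lemma h_intble' {α : ℝ} (hα2 : α < 2) {a b : ℝ} (ha : 0 ≤ a) (hb : 0 ≤ b) :
    IntervalIntegrable (h α) MeasureTheory.volume a b :=
  (h_intble hα2 ha).symm.trans (h_intble hα2 hb)

lemma F0_tendsto_zero {α : ℝ} (hα0 : 0 < α) (hα2 : α < 2) :
    Tendsto (F0 α) (nhdsWithin 0 (Set.Ioi 0)) (nhds 0) := by
  have hb : Tendsto (fun ε : ℝ => ε ^ (2 - α) / (2 - α)) (nhdsWithin 0 (Set.Ioi 0)) (nhds 0) := by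
    have hc : ContinuousAt (fun x : ℝ => x ^ (2 - α) / (2 - α)) 0 :=
      (Real.continuousAt_rpow_const 0 (2 - α) (Or.inr (by linarith))).div_const _
    have h' : Tendsto (fun x : ℝ => x ^ (2 - α) / (2 - α)) (nhdsWithin 0 (Set.Ioi 0))
        (nhds ((0:ℝ) ^ (2 - α) / (2 - α))) := hc.tendsto.mono_left nhdsWithin_le_nhds
    simpa [Real.zero_rpow (by linarith : (2:ℝ) - α ≠ 0)] using h' 
  apply squeeze_zero_norm' _ hb
  filter_upwards [self_mem_nhdsWithin] with ε (hε : (0:ℝ) < ε)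
  have hii := h_intble hα2 (α := α) hε.le
  have hrp : IntervalIntegrable (fun u : ℝ => u ^ (1 - α)) MeasureTheory.volume 0 ε :=
    intervalIntegrable_rpow' (by linarith)
  have h1 : |F0 α ε| ≤ ∫ u in (0:ℝ)..ε, |h α u| :=
    intervalIntegral.abs_integral_le_integral_abs hε.le
  have h2 : (∫ u in (0:ℝ)..ε, |h α u|) ≤ ∫ u in (0:ℝ)..ε, u ^ (1 - α) := by
    apply intervalIntegral.integral_mono_on hε.le hii.abs hrp
    intro u hu
    rcases eq_or_lt_of_le hu.1 with h0 | h0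
    · rw [← h0]
      have : h α 0 = 0 := by simp [h, Real.zero_rpow (by linarith : -α ≠ 0)]
      rw [this, abs_zero]
      exact Real.rpow_nonneg le_rfl _
    · rw [h, abs_mul, abs_of_pos (Real.rpow_pos_of_pos h0 _)]
      calc |Real.sin u| * u ^ (-α) ≤ u * u ^ (-α) := by
            apply mul_le_mul_of_nonneg_right _ (Real.rpow_pos_of_pos h0 _).le
            simpa [abs_of_pos h0] using Real.abs_sin_le_abs (x := u)
        _ = u ^ (1 - α) := by
            rw [show (1:ℝ) - α = 1 + -α by ring, Real.rpow_add h0, Real.rpow_one]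
  have h3 : (∫ u in (0:ℝ)..ε, u ^ (1 - α)) = ε ^ (2 - α) / (2 - α) := by
    rw [integral_rpow (Or.inl (by linarith))]
    rw [show (1:ℝ) - α + 1 = 2 - α by ring,
      Real.zero_rpow (by linarith : (2:ℝ) - α ≠ 0)]
    ring
  rw [Real.norm_eq_abs]
  linarith [h1, h2, h3.le, h3.ge]

lemma cos_tail_intble {α : ℝ} (hα0 : 0 < α) :
    MeasureTheory.IntegrableOn (fun x : ℝ => Real.cos x * x ^ (-α - 1)) (Set.Ioi 1)
      MeasureTheory.volume := by
  have h1 : MeasureTheory.IntegrableOn (fun x : ℝ => x ^ (-α - 1)) (Set.Ioi 1)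
      MeasureTheory.volume := integrableOn_Ioi_rpow_of_lt (by linarith) one_pos
  refine MeasureTheory.Integrable.mono h1
    (Real.measurable_cos.mul (measurable_id.pow_const (-α - 1))).aestronglyMeasurable ?_
  · filter_upwards [MeasureTheory.ae_restrict_mem measurableSet_Ioi] with x hx
    rw [Real.norm_eq_abs, Real.norm_eq_abs, abs_mul]
    exact mul_le_of_le_one_left (abs_nonneg _) (Real.abs_cos_le_one x)

lemma parts {α : ℝ} (hα0 : 0 < α) {R : ℝ} (hR : 1 ≤ R) :
    (∫ u in (1:ℝ)..R, h α u)
      = Real.cos 1 - Real.cos R * R ^ (-α)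
        - α * ∫ x in (1:ℝ)..R, Real.cos x * x ^ (-α - 1) := by
  have hpos : ∀ x ∈ Set.uIcc (1:ℝ) R, (0:ℝ) < x := by
    intro x hx
    rw [Set.uIcc_of_le hR] at hx
    linarith [hx.1]
  have hu : ∀ x ∈ Set.uIcc (1:ℝ) R,
      HasDerivAt (fun y : ℝ => y ^ (-α)) (-α * x ^ (-α - 1)) x := by
    intro x hx
    simpa using Real.hasDerivAt_rpow_const (x := x) (p := -α) (Or.inl (hpos x hx).ne')
  have hv : ∀ x ∈ Set.uIcc (1:ℝ) R,
      HasDerivAt (fun y : ℝ => -Real.cos y) (Real.sin x) x := by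
    intro x _
    have hd := (Real.hasDerivAt_cos x).neg
    rw [neg_neg] at hd
    exact hd
  have hu' : IntervalIntegrable (fun x : ℝ => -α * x ^ (-α - 1)) MeasureTheory.volume 1 R := by
    apply ContinuousOn.intervalIntegrable
    apply continuousOn_const.mul
    intro x hx
    exact (Real.continuousAt_rpow_const x _ (Or.inl (hpos x hx).ne')).continuousWithinAt
  have hv' : IntervalIntegrable Real.sin MeasureTheory.volume 1 R :=
    Real.continuous_sin.intervalIntegrable _ _
  have key := intervalIntegral.integral_mul_deriv_eq_deriv_mul hu hv hu' hv'
  have e1 : (∫ u in (1:ℝ)..R, h α u) = ∫ x in (1:ℝ)..R, x ^ (-α) * Real.sin x :=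
    intervalIntegral.integral_congr fun x _ => mul_comm _ _
  have e2 : (∫ x in (1:ℝ)..R, -α * x ^ (-α - 1) * -Real.cos x)
      = α * ∫ x in (1:ℝ)..R, Real.cos x * x ^ (-α - 1) := by
    rw [← intervalIntegral.integral_const_mul]
    exact intervalIntegral.integral_congr fun x _ => by ring
  rw [e1, key, e2, Real.one_rpow]
  ring

lemma F0_tendsto {α : ℝ} (hα0 : 0 < α) (hα2 : α < 2) :
    Tendsto (F0 α) atTop
      (nhds (F0 α 1 + Real.cos 1
        - α * ∫ x in Set.Ioi (1:ℝ), Real.cos x * x ^ (-α - 1))) := by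
  have hK := MeasureTheory.intervalIntegral_tendsto_integral_Ioi 1 (cos_tail_intble hα0)
    tendsto_id
  have h1 : Tendsto (fun R : ℝ => Real.cos R * R ^ (-α)) atTop (nhds 0) := by
    apply squeeze_zero_norm' _ (tendsto_rpow_neg_atTop hα0)
    filter_upwards [eventually_gt_atTop (0:ℝ)] with R hR
    rw [Real.norm_eq_abs, abs_mul]
    calc |Real.cos R| * |R ^ (-α)| ≤ |R ^ (-α)| :=
          mul_le_of_le_one_left (abs_nonneg _) (Real.abs_cos_le_one R)
      _ = R ^ (-α) := abs_of_pos (Real.rpow_pos_of_pos hR _)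
  have h2 : Tendsto (fun R : ℝ => F0 α 1 + (Real.cos 1 - Real.cos R * R ^ (-α)
      - α * ∫ x in (1:ℝ)..R, Real.cos x * x ^ (-α - 1))) atTop
      (nhds (F0 α 1 + (Real.cos 1 - 0
        - α * ∫ x in Set.Ioi (1:ℝ), Real.cos x * x ^ (-α - 1)))) :=
    tendsto_const_nhds.add (((tendsto_const_nhds.sub h1)).sub (hK.const_mul α))
  have heq : (fun R : ℝ => F0 α 1 + (Real.cos 1 - Real.cos R * R ^ (-α)
      - α * ∫ x in (1:ℝ)..R, Real.cos x * x ^ (-α - 1))) =ᶠ[atTop] F0 α := by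
    filter_upwards [eventually_ge_atTop (1:ℝ)] with R hR
    have hsplit : F0 α 1 + (∫ u in (1:ℝ)..R, h α u) = F0 α R := by
      apply intervalIntegral.integral_add_adjacent_intervals (h_intble hα2 zero_le_one)
      exact h_intble' hα2 zero_le_one (by linarith)
    rw [← hsplit, parts hα0 hR]
  have := (Tendsto.congr' heq h2)
  simpa [sub_zero, add_sub_assoc] using this

lemma key_eq {α : ℝ} (hα0 : 0 < α) (hα2 : α < 2) {s : ℝ} (hs : s ≠ 0)
    {ε R : ℝ} (hε : 0 < ε) (hR : 0 < R) :
    ((∫ t in (-R)..(-ε), Complex.exp (-(Complex.I * s * t)) *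
        ((Real.sign t * |t| ^ (-α) : ℝ) : ℂ)) +
      ∫ t in ε..R, Complex.exp (-(Complex.I * s * t)) *
        ((Real.sign t * |t| ^ (-α) : ℝ) : ℂ))
    = ((-2 : ℂ) * Complex.I * ((Real.sign s : ℝ) : ℂ) * ((|s| ^ (α - 1) : ℝ) : ℂ)) *
        ((F0 α (|s| * R) - F0 α (|s| * ε) : ℝ) : ℂ) := by
  set c := |s| with hcdef
  have hc : 0 < c := abs_pos.mpr hs
  have hpos : ∀ t ∈ Set.uIcc ε R, (0:ℝ) < t := fun t ht =>
    lt_of_lt_of_le (lt_min hε hR) ht.1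
  set g : ℝ → ℂ := fun t =>
    Complex.exp (-(Complex.I * s * t)) * ((Real.sign t * |t| ^ (-α) : ℝ) : ℂ) with hg
  -- continuity helper
  have hcont : ∀ b : ℝ, ContinuousOn (fun t : ℝ => ((t ^ (-α) : ℝ) : ℂ)) (Set.uIcc ε R) := by
    intro _ t ht
    exact (Complex.continuous_ofReal.continuousAt.comp
      (Real.continuousAt_rpow_const t _ (Or.inl (hpos t ht).ne'))).continuousWithinAt
  have hint1 : IntervalIntegrable
      (fun t : ℝ => Complex.exp (((s * t : ℝ) : ℂ) * Complex.I) * ((t ^ (-α) : ℝ) : ℂ))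
      MeasureTheory.volume ε R := by
    apply ContinuousOn.intervalIntegrable
    exact ((Complex.continuous_exp.comp ((Complex.continuous_ofReal.comp
      (continuous_const.mul continuous_id)).mul continuous_const)).continuousOn).mul (hcont 0)
  have hint2 : IntervalIntegrable
      (fun t : ℝ => Complex.exp (-((s * t : ℝ) : ℂ) * Complex.I) * ((t ^ (-α) : ℝ) : ℂ))
      MeasureTheory.volume ε R := by
    apply ContinuousOn.intervalIntegrable
    exact ((Complex.continuous_exp.comp (((Complex.continuous_ofReal.comp
      (continuous_const.mul continuous_id)).neg).mul continuous_const)).continuousOn).mul (hcont 0)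
  have e1 : (∫ t in (-R)..(-ε), g t) = ∫ t in ε..R, g (-t) :=
    (intervalIntegral.integral_comp_neg g).symm
  have e2 : (∫ t in ε..R, g (-t))
      = ∫ t in ε..R, -(Complex.exp (((s * t : ℝ) : ℂ) * Complex.I) * ((t ^ (-α) : ℝ) : ℂ)) := by
    apply intervalIntegral.integral_congr
    intro t ht
    have ht0 := hpos t ht
    have hsgn : Real.sign (-t) = -1 := Real.sign_of_neg (by linarith)
    rw [hg]
    simp only [hsgn, abs_neg, abs_of_pos ht0]
    rw [show -(Complex.I * s * ((-t : ℝ) : ℂ)) = ((s * t : ℝ) : ℂ) * Complex.I by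
      push_cast; ring]
    push_cast
    ring
  have e3 : (∫ t in ε..R, g t)
      = ∫ t in ε..R, Complex.exp (-((s * t : ℝ) : ℂ) * Complex.I) * ((t ^ (-α) : ℝ) : ℂ) := by
    apply intervalIntegral.integral_congr
    intro t ht
    have ht0 := hpos t ht
    rw [hg]
    simp only [Real.sign_of_pos ht0, abs_of_pos ht0]
    rw [show -(Complex.I * s * (t : ℂ)) = -((s * t : ℝ) : ℂ) * Complex.I by push_cast; ring]
    push_cast
    ring
  have e4 : (∫ t in ε..R, g (-t)) + (∫ t in ε..R, g t)
      = ∫ t in ε..R, ((-2 : ℂ) * Complex.I) * ((Real.sin (s * t) * t ^ (-α) : ℝ) : ℂ) := by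
    rw [e2, e3, intervalIntegral.integral_neg, neg_add_eq_sub,
      ← intervalIntegral.integral_sub hint2 hint1]
    apply intervalIntegral.integral_congr
    intro t ht
    simp only [Complex.exp_mul_I, Complex.cos_neg, Complex.sin_neg]
    push_cast [Complex.ofReal_sin]
    ring
  -- real substitution
  have r1 : (∫ t in ε..R, Real.sin (s * t) * t ^ (-α))
      = Real.sign s * (c ^ α * (c⁻¹ * ∫ u in c * ε..c * R, h α u)) := by
    have congr1 : ∀ t ∈ Set.uIcc ε R,
        Real.sin (s * t) * t ^ (-α) = Real.sign s * (c ^ α * h α (c * t)) := by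
      intro t ht
      have ht0 := hpos t ht
      have hsin : Real.sin (s * t) = Real.sign s * Real.sin (c * t) := by
        rcases hs.lt_or_gt with hneg | hposs
        · rw [Real.sign_of_neg hneg, hcdef, abs_of_neg hneg,
            show s * t = -(-s * t) by ring, Real.sin_neg]
          ring
        · rw [Real.sign_of_pos hposs, hcdef, abs_of_pos hposs, one_mul]
      have hccancel : c ^ α * c ^ (-α) = 1 := by
        rw [← Real.rpow_add hc]
        simp
      rw [hsin, h, Real.mul_rpow hc.le ht0.le,
        show Real.sign s * (c ^ α * (Real.sin (c * t) * (c ^ (-α) * t ^ (-α))))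
          = Real.sign s * Real.sin (c * t) * t ^ (-α) * (c ^ α * c ^ (-α)) by ring,
        hccancel, mul_one]
    rw [intervalIntegral.integral_congr congr1, intervalIntegral.integral_const_mul,
      intervalIntegral.integral_const_mul,
      intervalIntegral.integral_comp_mul_left (h α) hc.ne', smul_eq_mul]
  have r2 : (∫ u in c * ε..c * R, h α u) = F0 α (c * R) - F0 α (c * ε) :=
    (intervalIntegral.integral_interval_sub_left (h_intble hα2 (by positivity))
      (h_intble hα2 (by positivity))).symm
  have hpow : c ^ (α - 1) = c ^ α * c⁻¹ := by
    rw [show α - 1 = α + (-1) by ring, Real.rpow_add hc, Real.rpow_neg_one]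
  calc (∫ t in (-R)..(-ε), g t) + (∫ t in ε..R, g t)
      = (∫ t in ε..R, g (-t)) + (∫ t in ε..R, g t) := by rw [e1]
    _ = ∫ t in ε..R, ((-2 : ℂ) * Complex.I) * ((Real.sin (s * t) * t ^ (-α) : ℝ) : ℂ) := e4
    _ = ((-2 : ℂ) * Complex.I) * ∫ t in ε..R, ((Real.sin (s * t) * t ^ (-α) : ℝ) : ℂ) :=
        intervalIntegral.integral_const_mul _ _
    _ = ((-2 : ℂ) * Complex.I) * (((∫ t in ε..R, Real.sin (s * t) * t ^ (-α) : ℝ)) : ℂ) := by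
        rw [intervalIntegral.integral_ofReal]
    _ = ((-2 : ℂ) * Complex.I * ((Real.sign s : ℝ) : ℂ) * ((c ^ (α - 1) : ℝ) : ℂ)) *
        ((F0 α (c * R) - F0 α (c * ε) : ℝ) : ℂ) := by
        rw [r1, r2, hpow]
        push_cast
        ring

end PVFaux

/-- Principal value Fourier transform of `sgn(x)|x|^{-α}` for `0 < α < 2`: with
`C_α = lim_{R→∞} ∫_0^R sin(t) t^{-α} dt` (which exists), for each `s ≠ 0`,
`lim_{ε→0⁺, R→∞} ∫_{ε<|t|<R} e^{-ist} sgn(t)|t|^{-α} dt = -2i sgn(s) |s|^{α-1} C_α`,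
where the integral over `{ε<|t|<R}` is `∫_{-R}^{-ε} + ∫_ε^R`. -/
theorem pv_fourier_transform_sign_rpow (α : ℝ) (hα0 : 0 < α) (hα2 : α < 2) :
    ∃ C : ℝ,
      Filter.Tendsto (fun R : ℝ => ∫ t in (0:ℝ)..R, Real.sin t * t ^ (-α))
        Filter.atTop (nhds C) ∧
      ∀ s : ℝ, s ≠ 0 →
        Filter.Tendsto
          (fun P : ℝ × ℝ =>
            (∫ t in (-P.2)..(-P.1), Complex.exp (-(Complex.I * s * t)) *
              ((Real.sign t * |t| ^ (-α) : ℝ) : ℂ)) +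
            ∫ t in P.1..P.2, Complex.exp (-(Complex.I * s * t)) *
              ((Real.sign t * |t| ^ (-α) : ℝ) : ℂ))
          (nhdsWithin 0 (Set.Ioi 0) ×ˢ Filter.atTop)
          (nhds ((-2 : ℂ) * Complex.I * ((Real.sign s : ℝ) : ℂ) *
            ((|s| ^ (α - 1) : ℝ) : ℂ) * (C : ℂ))) := by
  refine ⟨PVFaux.F0 α 1 + Real.cos 1
      - α * ∫ x in Set.Ioi (1:ℝ), Real.cos x * x ^ (-α - 1), ?_, ?_⟩
  · exact PVFaux.F0_tendsto hα0 hα2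
  · intro s hs
    set C : ℝ := PVFaux.F0 α 1 + Real.cos 1
      - α * ∫ x in Set.Ioi (1:ℝ), Real.cos x * x ^ (-α - 1) with hC
    set c : ℝ := |s| with hcdef
    have hc : 0 < c := abs_pos.mpr hs
    have hmul : Tendsto (fun x : ℝ => c * x) (nhdsWithin 0 (Set.Ioi 0))
        (nhdsWithin 0 (Set.Ioi 0)) := by
      apply tendsto_nhdsWithin_of_tendsto_nhds_of_eventually_within
      · have : Tendsto (fun x : ℝ => c * x) (nhds 0) (nhds (c * 0)) :=
          (continuous_const.mul continuous_id).tendsto 0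
        simpa using this.mono_left nhdsWithin_le_nhds
      · filter_upwards [self_mem_nhdsWithin] with x hx
        exact mul_pos hc hx
    have ht2 : Tendsto (fun P : ℝ × ℝ => PVFaux.F0 α (c * P.2))
        (nhdsWithin 0 (Set.Ioi 0) ×ˢ Filter.atTop) (nhds C) :=
      (PVFaux.F0_tendsto hα0 hα2).comp
        ((tendsto_id.const_mul_atTop hc).comp tendsto_snd)
    have ht1 : Tendsto (fun P : ℝ × ℝ => PVFaux.F0 α (c * P.1))
        (nhdsWithin 0 (Set.Ioi 0) ×ˢ Filter.atTop) (nhds 0) :=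
      (PVFaux.F0_tendsto_zero hα0 hα2).comp (hmul.comp tendsto_fst)
    have hr : Tendsto (fun P : ℝ × ℝ => PVFaux.F0 α (c * P.2) - PVFaux.F0 α (c * P.1))
        (nhdsWithin 0 (Set.Ioi 0) ×ˢ Filter.atTop) (nhds C) := by
      simpa using ht2.sub ht1
    have hT : Tendsto (fun P : ℝ × ℝ =>
        ((-2 : ℂ) * Complex.I * ((Real.sign s : ℝ) : ℂ) * ((c ^ (α - 1) : ℝ) : ℂ)) *
          ((PVFaux.F0 α (c * P.2) - PVFaux.F0 α (c * P.1) : ℝ) : ℂ))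
        (nhdsWithin 0 (Set.Ioi 0) ×ˢ Filter.atTop)
        (nhds (((-2 : ℂ) * Complex.I * ((Real.sign s : ℝ) : ℂ) * ((c ^ (α - 1) : ℝ) : ℂ)) *
          (C : ℂ))) :=
      ((Complex.continuous_ofReal.tendsto C).comp hr).const_mul _
    have hev : (fun P : ℝ × ℝ =>
        ((-2 : ℂ) * Complex.I * ((Real.sign s : ℝ) : ℂ) * ((c ^ (α - 1) : ℝ) : ℂ)) *
          ((PVFaux.F0 α (c * P.2) - PVFaux.F0 α (c * P.1) : ℝ) : ℂ))
        =ᶠ[nhdsWithin 0 (Set.Ioi 0) ×ˢ Filter.atTop]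
        (fun P : ℝ × ℝ =>
          (∫ t in (-P.2)..(-P.1), Complex.exp (-(Complex.I * s * t)) *
            ((Real.sign t * |t| ^ (-α) : ℝ) : ℂ)) +
          ∫ t in P.1..P.2, Complex.exp (-(Complex.I * s * t)) *
            ((Real.sign t * |t| ^ (-α) : ℝ) : ℂ)) := by
      have h1 : ∀ᶠ P : ℝ × ℝ in nhdsWithin 0 (Set.Ioi 0) ×ˢ Filter.atTop, 0 < P.1 :=
        Filter.Eventually.prod_inl (eventually_mem_nhdsWithin) _
      have h2 : ∀ᶠ P : ℝ × ℝ in nhdsWithin 0 (Set.Ioi 0) ×ˢ Filter.atTop, 0 < P.2 :=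
        Filter.Eventually.prod_inr (eventually_gt_atTop 0) _
      filter_upwards [h1, h2] with P hP1 hP2
      exact (PVFaux.key_eq hα0 hα2 hs hP1 hP2).symm
    have := hT.congr' hev
    convert this using 2
end

section
/- For every x ∈ ℝ, (1/(2π)) · lim_{T→∞, S→0⁺} ∫_{S<|s|<T} e^{ixs} · iπ(1 − e^{−|s|})/s ds = arctan(x) − (π/2)·sgn(x), where the double limit means: for every ε > 0 there exist M > 0 and η > 0 such that the integral over {s : S < |s| < T} is within ε of the right-hand side (times 2π) whenever T > M and 0 < S < η. Consequently the principal value inversion formula returns arctan(x) = (1/(2π)) lim_{T→∞,S→0⁺} ∫_{S<|s|<T} e^{ixs} iπ(1−e^{−|s|})/s ds + (π/2)·sgn(x) at each x ∈ ℝ. -/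
open MeasureTheory intervalIntegral Real Filter Set

noncomputable def pvA (x t s : ℝ) : ℝ :=
  Real.exp (-(t * s)) * (-(t * Real.sin (x * s)) - x * Real.cos (x * s)) / (t ^ 2 + x ^ 2)

lemma pvA_denom_pos {x : ℝ} (hx : x ≠ 0) (t : ℝ) : 0 < t ^ 2 + x ^ 2 := by
  have h := pow_two_pos_of_ne_zero hx
  nlinarith [sq_nonneg t]

lemma hasDerivAt_pvA {x : ℝ} (hx : x ≠ 0) (t s : ℝ) :
    HasDerivAt (fun s => pvA x t s) (Real.exp (-(t * s)) * Real.sin (x * s)) s := by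
  have hd := (pvA_denom_pos hx t).ne'
  have he : HasDerivAt (fun s : ℝ => Real.exp (-(t * s))) (Real.exp (-(t * s)) * (-t)) s := by
    have h1 : HasDerivAt (fun s : ℝ => -(t * s)) (-t) s := by
      simpa [Pi.neg_def] using ((hasDerivAt_id s).const_mul t).neg
    exact h1.exp
  have hsin : HasDerivAt (fun s : ℝ => Real.sin (x * s)) (Real.cos (x * s) * x) s := by
    have h1 : HasDerivAt (fun s : ℝ => x * s) x s := by
      simpa using (hasDerivAt_id s).const_mul x
    exact h1.sin
  have hcos : HasDerivAt (fun s : ℝ => Real.cos (x * s)) (-Real.sin (x * s) * x) s := by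
    have h1 : HasDerivAt (fun s : ℝ => x * s) x s := by
      simpa using (hasDerivAt_id s).const_mul x
    exact h1.cos
  have hN : HasDerivAt (fun s : ℝ => -(t * Real.sin (x * s)) - x * Real.cos (x * s))
      (-(t * (Real.cos (x * s) * x)) - x * (-Real.sin (x * s) * x)) s :=
    ((hsin.const_mul t).neg).sub (hcos.const_mul x)
  have h : HasDerivAt (fun s => pvA x t s) _ s := (he.mul hN).div_const (t ^ 2 + x ^ 2)
  convert h using 1
  field_simp
  ring

lemma continuous_pvA {x : ℝ} (hx : x ≠ 0) :
    Continuous (fun p : ℝ × ℝ => pvA x p.1 p.2) := by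
  apply Continuous.div
  · fun_prop
  · fun_prop
  · exact fun p => (pvA_denom_pos hx p.1).ne'

lemma integral_pvA {x : ℝ} (hx : x ≠ 0) (t S T : ℝ) :
    ∫ s in S..T, Real.exp (-(t * s)) * Real.sin (x * s) = pvA x t T - pvA x t S := by
  refine integral_eq_sub_of_hasDerivAt (fun s _ => hasDerivAt_pvA hx t s) ?_
  exact (Continuous.intervalIntegrable (by fun_prop) S T)

lemma integral_exp_inner {s : ℝ} (hs : s ≠ 0) :
    ∫ t in (0:ℝ)..1, Real.exp (-(t * s)) = (1 - Real.exp (-s)) / s := by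
  have key : ∀ t : ℝ, HasDerivAt (fun t : ℝ => -Real.exp (-(t * s)) / s)
      (Real.exp (-(t * s))) t := by
    intro t
    have h1 : HasDerivAt (fun t : ℝ => -(t * s)) (-s) t := by
      simpa [Pi.neg_def, mul_comm] using ((hasDerivAt_id t).const_mul s).neg
    have : HasDerivAt (fun t : ℝ => -Real.exp (-(t * s)) / s) _ t := ((h1.exp).neg).div_const s
    convert this using 1
    field_simp
  rw [integral_eq_sub_of_hasDerivAt (fun t _ => key t)
    (Continuous.intervalIntegrable (by fun_prop) 0 1)]
  field_simp
  rw [mul_zero, neg_zero, Real.exp_zero]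
  ring

lemma pv_fubini {x : ℝ} (hx : x ≠ 0) {S T : ℝ} (hS : 0 < S) (hST : S ≤ T) :
    ∫ s in S..T, Real.sin (x * s) * (1 - Real.exp (-|s|)) / s
      = ∫ t in (0:ℝ)..1, (pvA x t T - pvA x t S) := by
  have h1 : ∫ s in S..T, Real.sin (x * s) * (1 - Real.exp (-|s|)) / s
      = ∫ s in S..T, ∫ t in (0:ℝ)..1, Real.exp (-(t * s)) * Real.sin (x * s) := by
    refine integral_congr fun s hs => ?_
    rw [uIcc_of_le hST] at hs
    have hs0 : 0 < s := lt_of_lt_of_le hS hs.1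
    rw [abs_of_pos hs0]
    rw [intervalIntegral.integral_mul_const, integral_exp_inner hs0.ne']
    field_simp
  rw [h1]
  -- swap via Fubini
  have hInt : IntegrableOn (fun p : ℝ × ℝ => Real.exp (-(p.2 * p.1)) * Real.sin (x * p.1))
      ((Ioc S T) ×ˢ (Ioc (0:ℝ) 1)) (volume.prod volume) := by
    have hc : Continuous (fun p : ℝ × ℝ => Real.exp (-(p.2 * p.1)) * Real.sin (x * p.1)) := by
      fun_prop
    exact (hc.continuousOn.integrableOn_compact (isCompact_Icc.prod isCompact_Icc)).mono_set
      (Set.prod_mono Ioc_subset_Icc_self Ioc_subset_Icc_self)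
  have swap := MeasureTheory.integral_integral_swap
    (f := fun s t => Real.exp (-(t * s)) * Real.sin (x * s))
    (μ := volume.restrict (Ioc S T)) (ν := volume.restrict (Ioc (0:ℝ) 1)) ?_
  · rw [integral_of_le hST, integral_of_le (zero_le_one)]
    calc ∫ s in Ioc S T, ∫ t in (0:ℝ)..1, Real.exp (-(t * s)) * Real.sin (x * s)
        = ∫ s in Ioc S T, ∫ t in Ioc (0:ℝ) 1, Real.exp (-(t * s)) * Real.sin (x * s) := by
          refine setIntegral_congr_fun measurableSet_Ioc fun s _ => ?_
          rw [intervalIntegral.integral_of_le zero_le_one]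
      _ = ∫ t in Ioc (0:ℝ) 1, ∫ s in Ioc S T, Real.exp (-(t * s)) * Real.sin (x * s) := swap
      _ = ∫ t in Ioc (0:ℝ) 1, (pvA x t T - pvA x t S) := by
          refine setIntegral_congr_fun measurableSet_Ioc fun t _ => ?_
          rw [← intervalIntegral.integral_of_le hST, integral_pvA hx]
  · rw [Measure.prod_restrict]
    exact hInt

-- L1 : integral of A tends to 0 as T → ∞
lemma pv_L1 {x : ℝ} (hx : x ≠ 0) :
    Tendsto (fun T => ∫ t in (0:ℝ)..1, pvA x t T) atTop (nhds 0) := by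
  set C : ℝ := (1 + |x|) / x ^ 2 with hC
  have hCpos : 0 < C := div_pos (by positivity) (pow_two_pos_of_ne_zero hx)
  apply squeeze_zero_norm' (a := fun T => C * T⁻¹)
  · filter_upwards [eventually_ge_atTop (1:ℝ)] with T hT
    have hT0 : 0 < T := lt_of_lt_of_le one_pos hT
    have hbound : ∀ t ∈ Icc (0:ℝ) 1, |pvA x t T| ≤ C * Real.exp (-(t * T)) := by
      intro t ht
      have hd := pvA_denom_pos hx t
      have hx2 : (0:ℝ) < x ^ 2 := pow_two_pos_of_ne_zero hx
      rw [pvA, abs_div, abs_of_pos hd, abs_mul, Real.abs_exp]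
      rw [div_le_iff₀ hd, hC]
      have h1 : |(-(t * Real.sin (x * T)) - x * Real.cos (x * T))| ≤ 1 + |x| := by
        rw [sub_eq_add_neg]
        refine le_trans (abs_add_le _ _) ?_
        rw [abs_neg, abs_neg, abs_mul, abs_mul, abs_of_nonneg ht.1]
        nlinarith [Real.abs_sin_le_one (x * T), Real.abs_cos_le_one (x * T), ht.2, ht.1,
          abs_nonneg x, abs_nonneg (Real.sin (x * T)), abs_nonneg (Real.cos (x * T))]
      have h2 : x ^ 2 ≤ t ^ 2 + x ^ 2 := by nlinarith [sq_nonneg t]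
      calc Real.exp (-(t * T)) * |(-(t * Real.sin (x * T)) - x * Real.cos (x * T))|
          ≤ Real.exp (-(t * T)) * (1 + |x|) := by
            gcongr
        _ = ((1 + |x|) / x ^ 2) * Real.exp (-(t * T)) * x ^ 2 := by field_simp
        _ ≤ ((1 + |x|) / x ^ 2) * Real.exp (-(t * T)) * (t ^ 2 + x ^ 2) := by
            gcongr
    have step1 : |∫ t in (0:ℝ)..1, pvA x t T| ≤ ∫ t in (0:ℝ)..1, |pvA x t T| :=
      intervalIntegral.abs_integral_le_integral_abs zero_le_one
    have step2 : ∫ t in (0:ℝ)..1, |pvA x t T| ≤ ∫ t in (0:ℝ)..1, C * Real.exp (-(t * T)) := by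
      apply intervalIntegral.integral_mono_on zero_le_one
      · exact (Continuous.intervalIntegrable (by
          have := continuous_pvA hx
          fun_prop) 0 1).abs
      · exact Continuous.intervalIntegrable (by fun_prop) 0 1
      · exact hbound
    have step3 : ∫ t in (0:ℝ)..1, C * Real.exp (-(t * T)) = C * ((1 - Real.exp (-T)) / T) := by
      rw [intervalIntegral.integral_const_mul, integral_exp_inner hT0.ne']
    have step4 : C * ((1 - Real.exp (-T)) / T) ≤ C * T⁻¹ := by
      rw [div_eq_mul_inv]
      have : 1 - Real.exp (-T) ≤ 1 := by nlinarith [Real.exp_pos (-T)]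
      nlinarith [inv_pos.mpr hT0, Real.exp_pos (-T), mul_pos (inv_pos.mpr hT0) (Real.exp_pos (-T))]
    rw [Real.norm_eq_abs]
    linarith [step1, step2]
  · simpa using tendsto_inv_atTop_zero.const_mul C

-- L2 : continuity in S
lemma pv_L2 {x : ℝ} (hx : x ≠ 0) :
    Tendsto (fun S => ∫ t in (0:ℝ)..1, pvA x t S) (nhdsWithin 0 (Set.Ioi 0))
      (nhds (∫ t in (0:ℝ)..1, pvA x t 0)) := by
  have hc2 : Continuous (fun p : ℝ × ℝ => pvA x p.2 p.1) := by
    have h := (continuous_pvA hx).comp (continuous_swap (X := ℝ) (Y := ℝ))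
    exact h
  have hc : Continuous (fun S : ℝ => ∫ t in (0:ℝ)..1, pvA x t S) := by
    exact intervalIntegral.continuous_parametric_intervalIntegral_of_continuous'
      (f := fun S t => pvA x t S) hc2 0 1
  exact (hc.tendsto 0).mono_left nhdsWithin_le_nhds

-- L3 : value at 0
lemma pv_L3 {x : ℝ} (hx : x ≠ 0) :
    ∫ t in (0:ℝ)..1, pvA x t 0 = -Real.arctan x⁻¹ := by
  have key : ∀ t : ℝ, HasDerivAt (fun t : ℝ => -Real.arctan (t * x⁻¹)) (pvA x t 0) t := by
    intro t
    have hd := (pvA_denom_pos hx t).ne'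
    have hlin : HasDerivAt (fun t : ℝ => t * x⁻¹) x⁻¹ t := by
      simpa using (hasDerivAt_id t).mul_const x⁻¹
    have h : HasDerivAt (fun t : ℝ => -Real.arctan (t * x⁻¹)) _ t := (hlin.arctan).neg
    convert h using 1
    rw [pvA]
    simp only [mul_zero, neg_zero, Real.exp_zero, Real.sin_zero, Real.cos_zero]
    have h0 : (1 : ℝ) + (t * x⁻¹) ^ 2 ≠ 0 := by positivity
    field_simp
    ring
  rw [integral_eq_sub_of_hasDerivAt (fun t _ => key t)
    (((continuous_pvA hx).comp (continuous_id.prodMk continuous_const)).intervalIntegrable 0 1)]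
  simp

lemma pv_arctan_sign {x : ℝ} (hx : x ≠ 0) :
    -Real.arctan x⁻¹ = Real.arctan x - Real.pi / 2 * Real.sign x := by
  rcases hx.lt_or_gt with h | h
  · rw [Real.arctan_inv_of_neg h, Real.sign_of_neg h]; ring
  · rw [Real.arctan_inv_of_pos h, Real.sign_of_pos h]; ring

lemma pv_key_real (x : ℝ) :
    Tendsto (fun P : ℝ × ℝ => -∫ s in P.2..P.1, Real.sin (x * s) * (1 - Real.exp (-|s|)) / s)
      (atTop ×ˢ nhdsWithin 0 (Set.Ioi 0))
      (nhds (Real.arctan x - Real.pi / 2 * Real.sign x)) := by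
  rcases eq_or_ne x 0 with rfl | hx
  · simp only [zero_mul, Real.sin_zero, zero_mul, zero_div, intervalIntegral.integral_zero,
      neg_zero, Real.arctan_zero, Real.sign_zero, mul_zero, sub_zero]
    exact tendsto_const_nhds
  · have hev : ∀ᶠ P : ℝ × ℝ in atTop ×ˢ nhdsWithin 0 (Set.Ioi 0),
        ((∫ t in (0:ℝ)..1, pvA x t P.2) - ∫ t in (0:ℝ)..1, pvA x t P.1)
          = -∫ s in P.2..P.1, Real.sin (x * s) * (1 - Real.exp (-|s|)) / s := by
      have h2 : ∀ᶠ S in nhdsWithin (0:ℝ) (Set.Ioi 0), S ∈ Ioo (0:ℝ) 1 :=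
        Ioo_mem_nhdsGT one_pos
      have hcont1 : ∀ s : ℝ, Continuous (fun t => pvA x t s) := by
        intro s
        have h := (continuous_pvA hx).comp ((continuous_id (X := ℝ)).prodMk
          (continuous_const (y := s)))
        exact h
      filter_upwards [((eventually_ge_atTop (1:ℝ)).prod_inl (nhdsWithin 0 (Set.Ioi 0))),
        (h2.prod_inr atTop)] with P hP1 hP2
      have hS : 0 < P.2 := hP2.1
      have hST : P.2 ≤ P.1 := le_trans hP2.2.le hP1
      rw [pv_fubini hx hS hST, intervalIntegral.integral_sub
        ((hcont1 P.1).intervalIntegrable 0 1) ((hcont1 P.2).intervalIntegrable 0 1)]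
      ring
    have hlim : Tendsto (fun P : ℝ × ℝ =>
        ((∫ t in (0:ℝ)..1, pvA x t P.2) - ∫ t in (0:ℝ)..1, pvA x t P.1))
        (atTop ×ˢ nhdsWithin 0 (Set.Ioi 0))
        (nhds ((-Real.arctan x⁻¹) - 0)) := by
      refine Tendsto.sub ?_ ?_
      · exact (pv_L3 hx ▸ pv_L2 hx).comp tendsto_snd
      · exact (pv_L1 hx).comp tendsto_fst
    rw [sub_zero, pv_arctan_sign hx] at hlim
    exact hlim.congr' hev

lemma pv_pointwise (x : ℝ) {s : ℝ} (hs : 0 < s) :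
    (1 / (2 * (Real.pi : ℂ))) *
      (Complex.exp (Complex.I * x * (-s : ℝ)) *
          (Complex.I * (Real.pi : ℂ) * (1 - ((Real.exp (-|(-s : ℝ)|) : ℝ) : ℂ)) / ((-s : ℝ) : ℂ)) +
        Complex.exp (Complex.I * x * s) *
          (Complex.I * (Real.pi : ℂ) * (1 - ((Real.exp (-|s|) : ℝ) : ℂ)) / (s : ℂ)))
      = ((-(Real.sin (x * s) * (1 - Real.exp (-|s|)) / s) : ℝ) : ℂ) := by
  have hsC : (s : ℂ) ≠ 0 := Complex.ofReal_ne_zero.mpr hs.ne'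
  have hπ : ((Real.pi : ℝ) : ℂ) ≠ 0 := Complex.ofReal_ne_zero.mpr Real.pi_ne_zero
  rw [abs_neg, abs_of_pos hs]
  push_cast
  rw [Complex.sin]
  rw [show ((-((x:ℂ) * s)) * Complex.I) = Complex.I * x * (-(s:ℂ)) by ring]
  rw [show ((((x:ℂ) * s) * Complex.I)) = Complex.I * x * (s:ℂ) by ring]
  rw [show Complex.I * (x:ℂ) * (-(s:ℂ)) = -(Complex.I * x * s) by ring, Complex.exp_neg]
  have hE : Complex.exp (Complex.I * x * s) ≠ 0 := Complex.exp_ne_zero _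
  field_simp
  ring

lemma pv_complex_identity (x : ℝ) {S T : ℝ} (hS : 0 < S) (hT : 0 < T) :
    (1 / (2 * (Real.pi : ℂ))) *
      ((∫ s in (-T)..(-S), Complex.exp (Complex.I * x * s) *
          (Complex.I * (Real.pi : ℂ) * (1 - ((Real.exp (-|s|) : ℝ) : ℂ)) / (s : ℂ))) +
        ∫ s in S..T, Complex.exp (Complex.I * x * s) *
          (Complex.I * (Real.pi : ℂ) * (1 - ((Real.exp (-|s|) : ℝ) : ℂ)) / (s : ℂ)))
      = ((-∫ s in S..T, Real.sin (x * s) * (1 - Real.exp (-|s|)) / s : ℝ) : ℂ) := by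
  set f : ℝ → ℂ := fun s => Complex.exp (Complex.I * x * s) *
    (Complex.I * (Real.pi : ℂ) * (1 - ((Real.exp (-|s|) : ℝ) : ℂ)) / (s : ℂ)) with hf
  have hpos : ∀ s ∈ Set.uIcc S T, 0 < s := by
    intro s hs
    rcases Set.mem_uIcc.mp hs with h | h
    · exact lt_of_lt_of_le hS h.1
    · exact lt_of_lt_of_le hT h.1
  have hfc : ContinuousOn f {s : ℝ | s ≠ 0} := by
    apply ContinuousOn.mul
    · fun_prop
    · apply ContinuousOn.div
      · fun_prop
      · fun_prop
      · exact fun s hs => Complex.ofReal_ne_zero.mpr hs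
  have hInt2 : IntervalIntegrable f volume S T :=
    (hfc.mono fun s hs => (hpos s hs).ne').intervalIntegrable
  have hInt1 : IntervalIntegrable (fun s => f (-s)) volume S T := by
    apply ContinuousOn.intervalIntegrable
    apply hfc.comp continuous_neg.continuousOn
    intro s hs
    exact (neg_ne_zero.mpr (hpos s hs).ne' : -s ≠ 0)
  have hneg : (∫ s in (-T)..(-S), f s) = ∫ s in S..T, f (-s) :=
    (intervalIntegral.integral_comp_neg f).symm
  rw [hneg, ← intervalIntegral.integral_add hInt1 hInt2]
  rw [← intervalIntegral.integral_neg, ← intervalIntegral.integral_ofReal,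
    ← intervalIntegral.integral_const_mul]
  refine intervalIntegral.integral_congr fun s hs => ?_
  have h := pv_pointwise x (hpos s hs)
  simpa [hf] using h

/-- Principal value Fourier inversion of `ĝ(s) = iπ(1-e^{-|s|})/s`: for every `x`,
`(1/(2π)) lim_{T→∞,S→0⁺} ∫_{S<|s|<T} e^{ixs} iπ(1-e^{-|s|})/s ds
 = arctan(x) - (π/2) sgn(x)`, where the integral over `{S<|s|<T}` is
`∫_{-T}^{-S} + ∫_S^T`. -/
theorem pv_fourier_inversion_arctan (x : ℝ) :
    Filter.Tendsto
      (fun P : ℝ × ℝ => (1 / (2 * (Real.pi : ℂ))) *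
        ((∫ s in (-P.1)..(-P.2), Complex.exp (Complex.I * x * s) *
            (Complex.I * (Real.pi : ℂ) * (1 - ((Real.exp (-|s|) : ℝ) : ℂ)) / (s : ℂ))) +
          ∫ s in P.2..P.1, Complex.exp (Complex.I * x * s) *
            (Complex.I * (Real.pi : ℂ) * (1 - ((Real.exp (-|s|) : ℝ) : ℂ)) / (s : ℂ))))
      (Filter.atTop ×ˢ nhdsWithin 0 (Set.Ioi 0))
      (nhds ((Real.arctan x - Real.pi / 2 * Real.sign x : ℝ) : ℂ)) := by
  have hten : Tendsto (fun P : ℝ × ℝ =>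
      ((-∫ s in P.2..P.1, Real.sin (x * s) * (1 - Real.exp (-|s|)) / s : ℝ) : ℂ))
      (Filter.atTop ×ˢ nhdsWithin 0 (Set.Ioi 0))
      (nhds ((Real.arctan x - Real.pi / 2 * Real.sign x : ℝ) : ℂ)) :=
    (Complex.continuous_ofReal.tendsto _).comp (pv_key_real x)
  refine hten.congr' ?_
  have h1 : ∀ᶠ P : ℝ × ℝ in Filter.atTop ×ˢ nhdsWithin 0 (Set.Ioi 0), 0 < P.1 :=
    (eventually_gt_atTop (0:ℝ)).prod_inl _
  have h2 : ∀ᶠ P : ℝ × ℝ in Filter.atTop ×ˢ nhdsWithin 0 (Set.Ioi 0), P.2 ∈ Set.Ioi (0:ℝ) :=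
    (eventually_mem_nhdsWithin).prod_inr _
  filter_upwards [h1, h2] with P hP1 hP2
  exact (pv_complex_identity x hP2 hP1).symm
end

section
/- Let p : ℝ → ℝ be a polynomial with p(0) = 0 and p'(0) = 0, and define g(x) = p(x)·tanh(x) − sgn(x)·p(x), which is Lebesgue integrable on ℝ, with Fourier transform ĝ(s) = ∫_{-∞}^{∞} e^{-ist} g(t) dt. Then ĝ is Lebesgue integrable on ℝ, and for every x ∈ ℝ, p(x)·tanh(x) = (1/(2π)) ∫_{-∞}^{∞} e^{ixs} ĝ(s) ds + sgn(x)·p(x). -/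
open MeasureTheory Real Set Filter Polynomial Asymptotics
open scoped FourierTransform Topology

noncomputable section

namespace FIPT


def th (t : ℝ) : ℂ := (Real.tanh t : ℂ)

lemma real_tanh_hasDerivAt (t : ℝ) : HasDerivAt Real.tanh (1 - Real.tanh t ^ 2) t := by
  have hc : Real.cosh t ≠ 0 := (Real.cosh_pos t).ne'
  have h := (Real.hasDerivAt_sinh t).div (Real.hasDerivAt_cosh t) hc
  have heq : (fun x => Real.sinh x / Real.cosh x) = Real.tanh := by
    funext x; rw [Real.tanh_eq_sinh_div_cosh]
  rw [show (Real.sinh / Real.cosh) = Real.tanh from heq] at h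
  refine h.congr_deriv ?_
  have h2 := Real.cosh_sq_sub_sinh_sq t
  rw [Real.tanh_eq_sinh_div_cosh]
  field_simp

lemma th_hasDerivAt (t : ℝ) : HasDerivAt th (1 - th t ^ 2) t := by
  have := (real_tanh_hasDerivAt t).ofReal_comp
  convert this using 1
  · rfl
  · unfold th; push_cast; ring

lemma poly_hasDerivAt (P : Polynomial ℝ) (t : ℝ) :
    HasDerivAt (fun s : ℝ => ((P.eval s : ℝ) : ℂ)) ((P.derivative.eval t : ℝ) : ℂ) t :=
  (P.hasDerivAt t).ofReal_comp

-- bounds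
lemma abs_tanh_le_one (t : ℝ) : |Real.tanh t| ≤ 1 := by
  rw [Real.tanh_eq_sinh_div_cosh, abs_div, abs_of_pos (Real.cosh_pos t),
    div_le_one (Real.cosh_pos t), abs_le]
  constructor
  · have := Real.sinh_lt_cosh (x := -t); rw [Real.sinh_neg, Real.cosh_neg] at this; linarith
  · exact (Real.sinh_lt_cosh t).le

lemma norm_th_le_one (t : ℝ) : ‖th t‖ ≤ 1 := by
  rw [show th t = ((Real.tanh t : ℝ) : ℂ) from rfl, Complex.norm_real, Real.norm_eq_abs]
  exact abs_tanh_le_one t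

lemma half_exp_le_cosh (t : ℝ) : Real.exp t / 2 ≤ Real.cosh t := by
  rw [Real.cosh_eq]
  have := (Real.exp_pos (-t)).le
  linarith

lemma norm_th_sub_one (t : ℝ) : ‖th t - 1‖ ≤ 2 * Real.exp (-2 * t) := by
  have h1 : th t - 1 = ((Real.tanh t - 1 : ℝ) : ℂ) := by push_cast [th]; ring
  rw [h1, Complex.norm_real, Real.norm_eq_abs]
  have hc := Real.cosh_pos t
  have h2 : Real.tanh t - 1 = -(Real.exp (-t) / Real.cosh t) := by
    rw [Real.tanh_eq_sinh_div_cosh, ← Real.cosh_sub_sinh]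
    field_simp
    ring
  rw [h2, abs_neg, abs_of_pos (by positivity), div_le_iff₀ hc]
  have h3 := half_exp_le_cosh t
  have he : Real.exp (-2*t) * Real.exp t = Real.exp (-t) := by
    rw [← Real.exp_add]; ring_nf
  nlinarith [Real.exp_pos t, Real.exp_pos (-2*t)]

lemma norm_one_sub_th_sq (t : ℝ) : ‖1 - th t ^ 2‖ ≤ 4 * Real.exp (-2 * t) := by
  have h1 : 1 - th t ^ 2 = ((1 - Real.tanh t ^ 2 : ℝ) : ℂ) := by push_cast [th]; ring
  rw [h1, Complex.norm_real, Real.norm_eq_abs]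
  have hc := Real.cosh_pos t
  have h2 : 1 - Real.tanh t ^ 2 = 1 / Real.cosh t ^ 2 := by
    rw [Real.tanh_eq_sinh_div_cosh]
    field_simp
    exact Real.cosh_sq_sub_sinh_sq t
  rw [h2, abs_of_pos (by positivity), div_le_iff₀ (by positivity)]
  have h3 := half_exp_le_cosh t
  have h4 : (Real.exp t / 2) ^ 2 ≤ Real.cosh t ^ 2 := by nlinarith [Real.exp_pos t]
  have he2 : Real.exp (-2*t) * (Real.exp t * Real.exp t) = 1 := by
    rw [← Real.exp_add, ← Real.exp_add]; ring_nf; exact Real.exp_zero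
  nlinarith [Real.exp_pos t, Real.exp_pos (-2*t)]



def A (P : Polynomial ℝ) (t : ℝ) : ℂ := ((P.eval t : ℝ) : ℂ) * (th t - 1)
def B (P : Polynomial ℝ) (t : ℝ) : ℂ := ((P.eval t : ℝ) : ℂ) * (1 - th t ^ 2)
def Cf (P : Polynomial ℝ) (t : ℝ) : ℂ := ((P.eval t : ℝ) : ℂ) * (-2 * th t * (1 - th t ^ 2))
def D (P : Polynomial ℝ) (t : ℝ) : ℂ :=
  A P.derivative.derivative t + 2 * B P.derivative t + Cf P t

lemma real_tanh_continuous : Continuous Real.tanh := by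
  have h : Real.tanh = fun x => Real.sinh x / Real.cosh x := funext Real.tanh_eq_sinh_div_cosh
  rw [h]
  exact Real.continuous_sinh.div Real.continuous_cosh fun x => (Real.cosh_pos x).ne'

lemma th_continuous : Continuous th :=
  Complex.continuous_ofReal.comp real_tanh_continuous

lemma A_continuous (P : Polynomial ℝ) : Continuous (A P) := by
  unfold A
  exact (Complex.continuous_ofReal.comp P.continuous).mul (th_continuous.sub continuous_const)

lemma B_continuous (P : Polynomial ℝ) : Continuous (B P) := by
  unfold B
  exact (Complex.continuous_ofReal.comp P.continuous).mul
    (continuous_const.sub (th_continuous.pow 2))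

lemma Cf_continuous (P : Polynomial ℝ) : Continuous (Cf P) := by
  unfold Cf
  exact (Complex.continuous_ofReal.comp P.continuous).mul
    (((continuous_const.mul th_continuous)).mul (continuous_const.sub (th_continuous.pow 2)))

lemma D_continuous (P : Polynomial ℝ) : Continuous (D P) := by
  unfold D
  exact ((A_continuous _).add (continuous_const.mul (B_continuous _))).add (Cf_continuous _)

lemma A_hasDerivAt (P : Polynomial ℝ) (t : ℝ) :
    HasDerivAt (A P) (A P.derivative t + B P t) t := by
  exact (poly_hasDerivAt P t).mul ((th_hasDerivAt t).sub_const 1)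

lemma B_hasDerivAt (P : Polynomial ℝ) (t : ℝ) :
    HasDerivAt (B P) (B P.derivative t + Cf P t) t := by
  have hsq : HasDerivAt (fun s : ℝ => 1 - th s ^ 2) (-2 * th t * (1 - th t ^ 2)) t := by
    have h := ((th_hasDerivAt t).mul (th_hasDerivAt t)).const_sub 1
    have heq : (fun s : ℝ => 1 - th s ^ 2) = fun s => 1 - th s * th s := by
      funext s; ring
    rw [heq]
    refine h.congr_deriv ?_
    ring
  exact (poly_hasDerivAt P t).mul hsq

lemma norm_A_le (P : Polynomial ℝ) (t : ℝ) :
    ‖A P t‖ ≤ 8 * |P.eval t| * Real.exp (-2 * t) := by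
  unfold A
  rw [norm_mul, Complex.norm_real, Real.norm_eq_abs]
  calc |P.eval t| * ‖th t - 1‖ ≤ |P.eval t| * (2 * Real.exp (-2*t)) :=
        mul_le_mul_of_nonneg_left (norm_th_sub_one t) (abs_nonneg _)
    _ ≤ 8 * |P.eval t| * Real.exp (-2*t) := by nlinarith [abs_nonneg (P.eval t), Real.exp_pos (-2*t)]

lemma norm_B_le (P : Polynomial ℝ) (t : ℝ) :
    ‖B P t‖ ≤ 8 * |P.eval t| * Real.exp (-2 * t) := by
  unfold B
  rw [norm_mul, Complex.norm_real, Real.norm_eq_abs]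
  calc |P.eval t| * ‖1 - th t ^ 2‖ ≤ |P.eval t| * (4 * Real.exp (-2*t)) :=
        mul_le_mul_of_nonneg_left (norm_one_sub_th_sq t) (abs_nonneg _)
    _ ≤ 8 * |P.eval t| * Real.exp (-2*t) := by nlinarith [abs_nonneg (P.eval t), Real.exp_pos (-2*t)]

lemma norm_Cf_le (P : Polynomial ℝ) (t : ℝ) :
    ‖Cf P t‖ ≤ 8 * |P.eval t| * Real.exp (-2 * t) := by
  unfold Cf
  rw [norm_mul, Complex.norm_real, Real.norm_eq_abs]
  have h1 : ‖(-2 : ℂ) * th t * (1 - th t ^ 2)‖ ≤ 8 * Real.exp (-2*t) := by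
    rw [norm_mul, norm_mul]
    have ht := norm_th_le_one t
    have hs := norm_one_sub_th_sq t
    have h2 : ‖(-2:ℂ)‖ = 2 := by norm_num
    rw [h2]
    nlinarith [norm_nonneg (th t), norm_nonneg (1 - th t ^ 2), Real.exp_pos (-2*t)]
  calc |P.eval t| * ‖(-2:ℂ) * th t * (1 - th t ^ 2)‖ ≤ |P.eval t| * (8 * Real.exp (-2*t)) :=
        mul_le_mul_of_nonneg_left h1 (abs_nonneg _)
    _ = 8 * |P.eval t| * Real.exp (-2*t) := by ring

lemma poly_isBigO (Q : Polynomial ℝ) : (fun t : ℝ => Q.eval t) =O[atTop] Real.exp := by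
  have heq : (fun t : ℝ => Q.eval t)
      = fun t => ∑ i ∈ Finset.range (Q.natDegree + 1), Q.coeff i * t ^ i := by
    funext t; rw [Polynomial.eval_eq_sum_range]
  rw [heq]
  apply Asymptotics.IsBigO.fun_sum
  intro i _
  exact (Real.isLittleO_pow_exp_atTop.isBigO).const_mul_left _

lemma decay_isBigO {f : ℝ → ℂ} (Q : Polynomial ℝ) (K : ℝ)
    (h : ∀ t, ‖f t‖ ≤ K * |Q.eval t| * Real.exp (-2 * t)) :
    f =O[atTop] fun t => Real.exp (-t) := by
  obtain ⟨C, hC⟩ := (poly_isBigO Q).bound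
  rw [Asymptotics.isBigO_iff]
  refine ⟨|K| * C, ?_⟩
  filter_upwards [hC] with t ht
  have h2 : |Q.eval t| ≤ C * Real.exp t := by
    simpa [Real.norm_eq_abs, abs_of_pos (Real.exp_pos t)] using ht
  have hC0 : 0 ≤ C * Real.exp t := le_trans (abs_nonneg _) h2
  have he : Real.exp t * Real.exp (-2*t) = Real.exp (-t) := by
    rw [← Real.exp_add]; ring_nf
  calc ‖f t‖ ≤ K * |Q.eval t| * Real.exp (-2*t) := h t
    _ ≤ |K| * |Q.eval t| * Real.exp (-2*t) :=
        mul_le_mul_of_nonneg_right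
          (mul_le_mul_of_nonneg_right (le_abs_self K) (abs_nonneg _)) (Real.exp_pos _).le
    _ ≤ |K| * (C * Real.exp t) * Real.exp (-2*t) :=
        mul_le_mul_of_nonneg_right
          (mul_le_mul_of_nonneg_left h2 (abs_nonneg K)) (Real.exp_pos _).le
    _ = |K| * C * (Real.exp t * Real.exp (-2*t)) := by ring
    _ = |K| * C * Real.exp (-t) := by rw [he]
    _ ≤ |K| * C * ‖Real.exp (-t)‖ := by
        rw [Real.norm_eq_abs, abs_of_pos (Real.exp_pos _)]

lemma tendsto_of_decay {f : ℝ → ℂ} (hO : f =O[atTop] fun t => Real.exp (-t)) :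
    Tendsto f atTop (𝓝 0) := by
  apply hO.trans_tendsto
  exact Real.tendsto_exp_atBot.comp tendsto_neg_atTop_atBot

lemma integrableOn_of_decay {f : ℝ → ℂ} (hc : Continuous f)
    (hO : f =O[atTop] fun t => Real.exp (-t)) :
    IntegrableOn f (Ioi (0:ℝ)) := by
  have hn : IntegrableOn (fun t => ‖f t‖) (Ioi (0:ℝ)) := by
    apply integrable_of_isBigO_exp_neg (b := 1) one_pos
    · exact (hc.norm).continuousOn
    · simpa [neg_mul, one_mul] using hO.norm_left
  exact (integrable_norm_iff (hc.aestronglyMeasurable.restrict)).mp hn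



lemma A_isBigO (P : Polynomial ℝ) : A P =O[atTop] fun t => Real.exp (-t) :=
  decay_isBigO P 8 (norm_A_le P)
lemma B_isBigO (P : Polynomial ℝ) : B P =O[atTop] fun t => Real.exp (-t) :=
  decay_isBigO P 8 (norm_B_le P)
lemma Cf_isBigO (P : Polynomial ℝ) : Cf P =O[atTop] fun t => Real.exp (-t) :=
  decay_isBigO P 8 (norm_Cf_le P)
lemma D_isBigO (P : Polynomial ℝ) : D P =O[atTop] fun t => Real.exp (-t) := by
  unfold D
  exact ((A_isBigO _).add ((B_isBigO _).const_mul_left 2)).add (Cf_isBigO _)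

lemma norm_exp_unit {c : ℂ} (hc : c.re = 0) (t : ℝ) : ‖Complex.exp (-(c * t))‖ = 1 := by
  rw [Complex.norm_exp]
  simp [Complex.mul_re, hc]

lemma exp_c_continuous (c : ℂ) : Continuous (fun t : ℝ => Complex.exp (-(c * t))) := by
  fun_prop

lemma exp_c_hasDerivAt (c : ℂ) (t : ℝ) :
    HasDerivAt (fun s : ℝ => Complex.exp (-(c * s))) (-c * Complex.exp (-(c * t))) t := by
  have h1 : HasDerivAt (fun s : ℝ => ((s : ℝ) : ℂ)) ((1:ℝ):ℂ) t := (hasDerivAt_id t).ofReal_comp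
  have h2 := ((h1.const_mul c).neg).cexp
  convert h2 using 1
  · rfl
  · show _ = Complex.exp (-(c * t)) * -(c * ((1:ℝ):ℂ))
    push_cast; ring

lemma unit_mul_integrableOn {c : ℂ} (hc : c.re = 0) {f : ℝ → ℂ} {s : Set ℝ}
    (hf : IntegrableOn f s) :
    IntegrableOn (fun t : ℝ => Complex.exp (-(c * t)) * f t) s := by
  refine hf.bdd_mul ((exp_c_continuous c).aestronglyMeasurable.restrict) (c := 1) (Filter.Eventually.of_forall fun t => ?_)
  exact (norm_exp_unit hc t).le

lemma core (P : Polynomial ℝ) (hP0 : P.eval 0 = 0) (hP1 : P.derivative.eval 0 = 0)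
    (c : ℂ) (hc : c.re = 0) :
    ∫ t in Ioi (0:ℝ), Complex.exp (-(c * t)) * D P t
      = c ^ 2 * ∫ t in Ioi (0:ℝ), Complex.exp (-(c * t)) * A P t := by
  set F : ℝ → ℂ := fun t => Complex.exp (-(c * t)) * ((A P.derivative t + B P t) + c * A P t)
    with hF
  have hderiv : ∀ t : ℝ, HasDerivAt F (Complex.exp (-(c * t)) * (D P t - c ^ 2 * A P t)) t := by
    intro t
    have hin : HasDerivAt (fun s => (A P.derivative s + B P s) + c * A P s)
        ((A P.derivative.derivative t + B P.derivative t) + (B P.derivative t + Cf P t)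
          + c * (A P.derivative t + B P t)) t :=
      ((A_hasDerivAt P.derivative t).add (B_hasDerivAt P t)).add ((A_hasDerivAt P t).const_mul c)
    have h := (exp_c_hasDerivAt c t).mul hin
    refine h.congr_deriv ?_
    unfold D; ring
  have hA : IntegrableOn (fun t : ℝ => Complex.exp (-(c * t)) * A P t) (Ioi (0:ℝ)) :=
    unit_mul_integrableOn hc (integrableOn_of_decay (A_continuous P) (A_isBigO P))
  have hD : IntegrableOn (fun t : ℝ => Complex.exp (-(c * t)) * D P t) (Ioi (0:ℝ)) :=
    unit_mul_integrableOn hc (integrableOn_of_decay (D_continuous P) (D_isBigO P))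
  have hint : IntegrableOn (fun t : ℝ => Complex.exp (-(c * t)) * (D P t - c ^ 2 * A P t)) (Ioi (0:ℝ)) := by
    refine (hD.sub (hA.const_mul (c ^ 2))).congr (Filter.Eventually.of_forall fun t => ?_)
    simp only [Pi.sub_apply]; ring
  have htend : Tendsto F atTop (𝓝 0) := by
    have hin : Tendsto (fun t => (A P.derivative t + B P t) + c * A P t) atTop (𝓝 0) := by
      have h1 := tendsto_of_decay (A_isBigO P.derivative)
      have h2 := tendsto_of_decay (B_isBigO P)
      have h3 := tendsto_of_decay (A_isBigO P)
      have := (h1.add h2).add (h3.const_mul c)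
      simpa using this
    refine squeeze_zero_norm (fun t => ?_) (by simpa using hin.norm)
    show ‖F t‖ ≤ ‖(A P.derivative t + B P t) + c * A P t‖
    rw [hF]
    simp only [norm_mul, norm_exp_unit hc, one_mul]
    exact le_refl _
  have hF0 : F 0 = 0 := by
    rw [hF]
    simp only [Complex.ofReal_zero, mul_zero, neg_zero, Complex.exp_zero, one_mul]
    unfold A B th
    simp [hP0, hP1, Real.tanh_zero]
  have key := integral_Ioi_of_hasDerivAt_of_tendsto' (a := 0)
      (fun x _ => hderiv x) hint htend
  rw [hF0, sub_zero] at key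
  -- key : ∫ t in Ioi 0, exp(-(c t)) * (D P t - c^2 A P t) = 0
  have hsplit : ∫ t in Ioi (0:ℝ), Complex.exp (-(c * t)) * (D P t - c ^ 2 * A P t)
      = (∫ t in Ioi (0:ℝ), Complex.exp (-(c * t)) * D P t)
        - c ^ 2 * ∫ t in Ioi (0:ℝ), Complex.exp (-(c * t)) * A P t := by
    have h2 : c ^ 2 * (∫ t in Ioi (0:ℝ), Complex.exp (-(c * t)) * A P t)
        = ∫ t in Ioi (0:ℝ), c ^ 2 * (Complex.exp (-(c * t)) * A P t) := by
      rw [← smul_eq_mul, ← integral_smul]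
      simp [smul_eq_mul]
    rw [h2, ← integral_sub hD (hA.const_mul (c ^ 2))]
    exact integral_congr_ae (Filter.Eventually.of_forall fun t => by ring)
  rw [hsplit] at key
  linear_combination key


lemma integrableOn_inv_sq_Ioi : IntegrableOn (fun w : ℝ => (w ^ 2)⁻¹) (Ioi (1:ℝ)) := by
  have h := integrableOn_Ioi_rpow_of_lt (a := (-2:ℝ)) (by norm_num) (c := 1) one_pos
  refine h.congr_fun (fun x hx => ?_) measurableSet_Ioi
  have hx0 : (0:ℝ) < x := lt_trans one_pos hx
  beta_reduce
  rw [Real.rpow_neg hx0.le, ← Real.rpow_natCast x 2]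
  norm_num

lemma integrable_of_quad_decay (h : ℝ → ℂ) (hc : Continuous h) (M : ℝ)
    (hM : ∀ w : ℝ, w ≠ 0 → ‖h w‖ ≤ M / w ^ 2) : Integrable h := by
  have tail : ∀ f : ℝ → ℂ, Continuous f → (∀ w : ℝ, w ≠ 0 → ‖f w‖ ≤ M / w ^ 2) →
      IntegrableOn f (Ioi (1:ℝ)) := by
    intro f hfc hfM
    refine Integrable.mono' (integrableOn_inv_sq_Ioi.const_mul M)
      (hfc.aestronglyMeasurable.restrict) ?_
    rw [ae_restrict_iff' measurableSet_Ioi]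
    refine Filter.Eventually.of_forall fun w hw => ?_
    have : w ≠ 0 := ne_of_gt (lt_trans one_pos hw)
    simpa [div_eq_mul_inv] using hfM w this
  have hIoi : IntegrableOn h (Ioi (1:ℝ)) := tail h hc hM
  have hneg : IntegrableOn h (Iic (-1:ℝ)) := by
    rw [← Measure.map_neg_eq_self (volume : Measure ℝ)]
    have m : MeasurableEmbedding fun x : ℝ => -x := (Homeomorph.neg ℝ).measurableEmbedding
    rw [m.integrableOn_map_iff]
    have hcomp : (h ∘ fun x : ℝ => -x) = fun x => h (-x) := rfl
    rw [hcomp]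
    have hpre : (fun x : ℝ => -x) ⁻¹' (Iic (-1:ℝ)) = Ici (1:ℝ) := by
      ext x; simp
    rw [hpre]
    rw [integrableOn_Ici_iff_integrableOn_Ioi]
    refine tail _ (hc.comp continuous_neg) fun w hw => ?_
    have := hM (-w) (neg_ne_zero.mpr hw)
    simpa using this
  have hmid : IntegrableOn h (Icc (-1:ℝ) 1) := hc.integrableOn_Icc
  have h1 : IntegrableOn h (Iic (1:ℝ)) := by
    have := hneg.union hmid
    refine this.congr_set_ae ?_
    rw [Iic_union_Icc_eq_Iic (by norm_num : (-1:ℝ) ≤ 1)]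
    exact Filter.EventuallyEq.rfl
  have h2 : IntegrableOn h (Iic (1:ℝ) ∪ Ioi (1:ℝ)) := h1.union hIoi
  rwa [Iic_union_Ioi, integrableOn_univ] at h2



lemma unit_mul_integrable {μ : Measure ℝ} {c : ℂ} (hc : c.re = 0) {f : ℝ → ℂ}
    (hf : Integrable f μ) : Integrable (fun t : ℝ => Complex.exp (-(c * t)) * f t) μ := by
  refine hf.bdd_mul ((exp_c_continuous c).aestronglyMeasurable) (c := 1) (Filter.Eventually.of_forall fun t => ?_)
  exact (norm_exp_unit hc t).le

def g (p : Polynomial ℝ) : ℝ → ℂ :=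
  fun t => ((p.eval t * Real.tanh t - Real.sign t * p.eval t : ℝ) : ℂ)

def pt (p : Polynomial ℝ) : Polynomial ℝ := p.comp (-Polynomial.X)

lemma pt_eval (p : Polynomial ℝ) (x : ℝ) : (pt p).eval x = p.eval (-x) := by
  simp [pt, Polynomial.eval_comp]

lemma pt_eval0 (p : Polynomial ℝ) (h0 : p.eval 0 = 0) : (pt p).eval 0 = 0 := by
  rw [pt_eval]; simpa using h0

lemma pt_deriv0 (p : Polynomial ℝ) (h1 : p.derivative.eval 0 = 0) : (pt p).derivative.eval 0 = 0 := by
  unfold pt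
  rw [Polynomial.derivative_comp]
  simp [h1]

lemma g_eq_pos (p : Polynomial ℝ) {t : ℝ} (ht : t ∈ Ioi (0:ℝ)) : g p t = A p t := by
  unfold g A th
  rw [Real.sign_of_pos ht]
  push_cast; ring

lemma g_eq_neg (p : Polynomial ℝ) (h0 : p.eval 0 = 0) {t : ℝ} (ht : t ∈ Iic (0:ℝ)) :
    g p t = -A (pt p) (-t) := by
  unfold g A th
  have ht' : t ≤ 0 := ht
  rcases eq_or_lt_of_le ht' with h | h
  · subst h
    simp [h0, Real.sign_zero, pt_eval]
  · rw [Real.sign_of_neg h, pt_eval]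
    simp only [neg_neg, Real.tanh_neg]
    push_cast; ring

-- integrability of g
lemma neg_A_pt_integrableOn (p : Polynomial ℝ) : IntegrableOn (fun t : ℝ => -A (pt p) (-t)) (Iic (0:ℝ)) := by
  rw [← Measure.map_neg_eq_self (volume : Measure ℝ)]
  have m : MeasurableEmbedding fun x : ℝ => -x := (Homeomorph.neg ℝ).measurableEmbedding
  rw [m.integrableOn_map_iff]
  have hcomp : ((fun t : ℝ => -A (pt p) (-t)) ∘ fun x : ℝ => -x) = fun x => -A (pt p) x := by
    funext x; simp
  rw [hcomp]
  have hpre : (fun x : ℝ => -x) ⁻¹' (Iic (0:ℝ)) = Ici (0:ℝ) := by ext x; simp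
  rw [hpre, integrableOn_Ici_iff_integrableOn_Ioi]
  exact (integrableOn_of_decay (A_continuous (pt p)) (A_isBigO (pt p))).neg

lemma g_integrable (p : Polynomial ℝ) (h0 : p.eval 0 = 0) : Integrable (g p) := by
  have hIoi : IntegrableOn (g p) (Ioi (0:ℝ)) := by
    refine (integrableOn_of_decay (A_continuous p) (A_isBigO p)).congr_fun
      (fun t ht => (g_eq_pos p ht).symm) measurableSet_Ioi
  have hIic : IntegrableOn (g p) (Iic (0:ℝ)) := by
    refine (neg_A_pt_integrableOn p).congr_fun (fun t ht => (g_eq_neg p h0 ht).symm)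
      measurableSet_Iic
  have := hIic.union hIoi
  rwa [Iic_union_Ioi, integrableOn_univ] at this

lemma g_continuousAt (p : Polynomial ℝ) (h0 : p.eval 0 = 0) (x : ℝ) : ContinuousAt (g p) x := by
  rcases lt_trichotomy x 0 with h | h | h
  · have hev : g p =ᶠ[𝓝 x] fun t => -A (pt p) (-t) := by
      filter_upwards [Iio_mem_nhds h] with t ht
      exact g_eq_neg p h0 (mem_Iic.mpr (le_of_lt ht))
    exact (((A_continuous (pt p)).comp continuous_neg).neg.continuousAt).congr hev.symm
  · subst h
    have hg0 : g p 0 = 0 := by unfold g; simp [h0]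
    rw [ContinuousAt, hg0]
    have hb : ∀ t : ℝ, ‖g p t‖ ≤ 2 * |p.eval t| := by
      intro t
      unfold g
      rw [Complex.norm_real, Real.norm_eq_abs]
      have h1 : |Real.sign t| ≤ 1 := by
        rcases Real.sign_apply_eq t with h | h | h <;> rw [h] <;> norm_num
      have h2 := abs_tanh_le_one t
      calc |p.eval t * Real.tanh t - Real.sign t * p.eval t|
          ≤ |p.eval t * Real.tanh t| + |Real.sign t * p.eval t| := abs_sub _ _
        _ ≤ |p.eval t| * 1 + 1 * |p.eval t| := by
            rw [abs_mul, abs_mul]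
            have := abs_nonneg (p.eval t)
            gcongr
        _ = 2 * |p.eval t| := by ring
    refine squeeze_zero_norm hb ?_
    have hcont : Continuous fun t : ℝ => 2 * |p.eval t| := by fun_prop
    have := hcont.tendsto 0
    simpa [h0] using this
  · have hev : g p =ᶠ[𝓝 x] A p := by
      filter_upwards [Ioi_mem_nhds h] with t ht
      exact g_eq_pos p ht
    exact ((A_continuous p).continuousAt).congr hev.symm

-- the key Fourier computation
def cw (w : ℝ) : ℂ := ((2 * π * w : ℝ) : ℂ) * Complex.I

lemma cw_re (w : ℝ) : (cw w).re = 0 := by simp [cw]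

lemma fourier_g_eq (p : Polynomial ℝ) (h0 : p.eval 0 = 0) (w : ℝ) :
    𝓕 (g p) w = (∫ t in Ioi (0:ℝ), Complex.exp (-(cw w * t)) * A p t)
      - ∫ t in Ioi (0:ℝ), Complex.exp (-(-(cw w) * t)) * A (pt p) t := by
  rw [Real.fourier_real_eq_integral_exp_smul]
  have hker : ∀ v : ℝ, Complex.exp (((-2 * π * v * w : ℝ) : ℂ) * Complex.I) • g p v
      = Complex.exp (-(cw w * v)) * g p v := by
    intro v
    rw [smul_eq_mul]
    congr 2
    unfold cw; push_cast; ring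
  rw [integral_congr_ae (Filter.Eventually.of_forall hker)]
  have hint : Integrable (fun v : ℝ => Complex.exp (-(cw w * v)) * g p v) :=
    unit_mul_integrable (cw_re w) (g_integrable p h0)
  have hsplit : ∫ v : ℝ, Complex.exp (-(cw w * v)) * g p v
      = (∫ v in Iic (0:ℝ), Complex.exp (-(cw w * v)) * g p v)
        + ∫ v in Ioi (0:ℝ), Complex.exp (-(cw w * v)) * g p v := by
    rw [← setIntegral_univ, ← Iic_union_Ioi (a := (0:ℝ)),
      setIntegral_union (Iic_disjoint_Ioi le_rfl) measurableSet_Ioi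
        hint.integrableOn hint.integrableOn]
  rw [hsplit]
  have hIoi : ∫ v in Ioi (0:ℝ), Complex.exp (-(cw w * v)) * g p v
      = ∫ t in Ioi (0:ℝ), Complex.exp (-(cw w * t)) * A p t := by
    refine setIntegral_congr_fun measurableSet_Ioi fun t ht => ?_
    rw [g_eq_pos p ht]
  have hIic : ∫ v in Iic (0:ℝ), Complex.exp (-(cw w * v)) * g p v
      = -∫ t in Ioi (0:ℝ), Complex.exp (-(-(cw w) * t)) * A (pt p) t := by
    have hcongr : ∫ v in Iic (0:ℝ), Complex.exp (-(cw w * v)) * g p v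
        = ∫ v in Iic (0:ℝ), (fun s : ℝ => Complex.exp (-(-(cw w) * s)) * (-A (pt p) s)) (-v) := by
      refine setIntegral_congr_fun measurableSet_Iic fun v hv => ?_
      rw [g_eq_neg p h0 hv]
      have harg : (-(-(cw w) * (((-v : ℝ)) : ℂ))) = -(cw w * v) := by push_cast; ring
      simp only
      rw [harg]
    rw [hcongr]
    have hneg := integral_comp_neg_Iic (0:ℝ)
      (fun s : ℝ => Complex.exp (-(-(cw w) * s)) * (-A (pt p) s))
    rw [neg_zero] at hneg
    rw [hneg, ← integral_neg]
    refine setIntegral_congr_fun measurableSet_Ioi fun t ht => ?_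
    ring
  rw [hIoi, hIic]
  ring

lemma cw_sq_fourier (p : Polynomial ℝ) (h0 : p.eval 0 = 0) (h1 : p.derivative.eval 0 = 0) (w : ℝ) :
    (cw w) ^ 2 * 𝓕 (g p) w = (∫ t in Ioi (0:ℝ), Complex.exp (-(cw w * t)) * D p t)
      - ∫ t in Ioi (0:ℝ), Complex.exp (-(-(cw w) * t)) * D (pt p) t := by
  rw [fourier_g_eq p h0 w, mul_sub]
  rw [core p h0 h1 (cw w) (cw_re w),
    core (pt p) (pt_eval0 p h0) (pt_deriv0 p h1) (-(cw w)) (by simp [cw_re, Complex.neg_re])]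
  ring



def M (p : Polynomial ℝ) : ℝ :=
  (∫ t in Ioi (0:ℝ), ‖D p t‖) + ∫ t in Ioi (0:ℝ), ‖D (pt p) t‖

lemma norm_int_le (P : Polynomial ℝ) (c : ℂ) (hc : c.re = 0) :
    ‖∫ t in Ioi (0:ℝ), Complex.exp (-(c * t)) * D P t‖ ≤ ∫ t in Ioi (0:ℝ), ‖D P t‖ := by
  refine le_trans (norm_integral_le_integral_norm _) (le_of_eq ?_)
  refine setIntegral_congr_fun measurableSet_Ioi fun t ht => ?_
  rw [norm_mul, norm_exp_unit hc, one_mul]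

lemma fourier_bound (p : Polynomial ℝ) (h0 : p.eval 0 = 0) (h1 : p.derivative.eval 0 = 0)
    (w : ℝ) (hw : w ≠ 0) : ‖𝓕 (g p) w‖ ≤ (M p / (2 * π) ^ 2) / w ^ 2 := by
  have hkey := cw_sq_fourier p h0 h1 w
  have hnorm : ‖(cw w) ^ 2 * 𝓕 (g p) w‖ ≤ M p := by
    rw [hkey]
    refine le_trans (norm_sub_le _ _) ?_
    unfold M
    have g1 := norm_int_le p (cw w) (cw_re w)
    have g2 := norm_int_le (pt p) (-(cw w)) (by simp [cw_re, Complex.neg_re])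
    linarith
  have hcwn : ‖(cw w) ^ 2‖ = (2 * π) ^ 2 * w ^ 2 := by
    rw [norm_pow]
    unfold cw
    rw [norm_mul, Complex.norm_I, mul_one, Complex.norm_real, Real.norm_eq_abs]
    rw [← abs_pow]
    rw [abs_of_nonneg (by positivity)]
    ring
  have hpos : (0:ℝ) < (2 * π) ^ 2 * w ^ 2 := by
    have := Real.pi_pos
    have hw2 : (0:ℝ) < w ^ 2 := by positivity
    positivity
  rw [norm_mul, hcwn] at hnorm
  rw [div_div, le_div_iff₀ (by positivity)]
  calc ‖𝓕 (g p) w‖ * ((2*π)^2 * w^2) = (2*π)^2 * w^2 * ‖𝓕 (g p) w‖ := by ring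
    _ ≤ M p := hnorm

lemma fourier_continuous (p : Polynomial ℝ) (h0 : p.eval 0 = 0) : Continuous (𝓕 (g p)) :=
  VectorFourier.fourierIntegral_continuous Real.continuous_fourierChar continuous_inner
    (g_integrable p h0)

lemma fourier_integrable (p : Polynomial ℝ) (h0 : p.eval 0 = 0)
    (h1 : p.derivative.eval 0 = 0) : Integrable (𝓕 (g p)) :=
  integrable_of_quad_decay _ (fourier_continuous p h0) (M p / (2 * π) ^ 2)
    (fun w hw => fourier_bound p h0 h1 w hw)

lemma inversion (p : Polynomial ℝ) (h0 : p.eval 0 = 0) (h1 : p.derivative.eval 0 = 0)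
    (x : ℝ) : 𝓕⁻ (𝓕 (g p)) x = g p x :=
  (g_integrable p h0).fourierInv_fourier_eq (fourier_integrable p h0 h1) (g_continuousAt p h0 x)


end FIPT

open FIPT in
/-- For a real polynomial `p` with `p(0) = 0` and `p'(0) = 0`, setting
`g(x) = p(x)·tanh(x) - sgn(x)·p(x)` (which is integrable), the Fourier transform
`ĝ(s) = ∫ e^{-ist} g(t) dt` is Lebesgue integrable on `ℝ`, and for every `x`,
`p(x)·tanh(x) = (1/(2π)) ∫ e^{ixs} ĝ(s) ds + sgn(x)·p(x)`. -/
theorem fourier_inversion_poly_tanh (p : Polynomial ℝ)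
    (h0 : p.eval 0 = 0) (h1 : (Polynomial.derivative p).eval 0 = 0) :
    MeasureTheory.Integrable
      (fun s : ℝ => ∫ t : ℝ, Complex.exp (-(Complex.I * s * t)) *
        ((p.eval t * Real.tanh t - Real.sign t * p.eval t : ℝ) : ℂ)) ∧
    ∀ x : ℝ,
      ((p.eval x * Real.tanh x : ℝ) : ℂ) =
        (1 / (2 * (Real.pi : ℂ))) *
          (∫ s : ℝ, Complex.exp (Complex.I * x * s) *
            (∫ t : ℝ, Complex.exp (-(Complex.I * s * t)) *
              ((p.eval t * Real.tanh t - Real.sign t * p.eval t : ℝ) : ℂ))) +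
        ((Real.sign x * p.eval x : ℝ) : ℂ) := by
  have hπ : (π : ℝ) ≠ 0 := Real.pi_ne_zero
  have h2π : (2 * π : ℝ) ≠ 0 := by positivity
  have hπC : ((π : ℝ) : ℂ) ≠ 0 := Complex.ofReal_ne_zero.mpr hπ
  have hGhat : ∀ s : ℝ, (∫ t : ℝ, Complex.exp (-(Complex.I * s * t)) *
      ((p.eval t * Real.tanh t - Real.sign t * p.eval t : ℝ) : ℂ))
      = 𝓕 (g p) ((2 * π)⁻¹ * s) := by
    intro s
    rw [Real.fourier_real_eq_integral_exp_smul]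
    refine integral_congr_ae (Filter.Eventually.of_forall fun t => ?_)
    beta_reduce
    rw [smul_eq_mul]
    have harg : ((-2 * π * t * ((2 * π)⁻¹ * s) : ℝ) : ℂ) * Complex.I
        = -(Complex.I * s * t) := by
      push_cast
      field_simp
    rw [harg]
    rfl
  constructor
  · have hcomp := (fourier_integrable p h0 h1).comp_mul_left' (inv_ne_zero h2π)
    exact hcomp.congr (Filter.Eventually.of_forall fun s => (hGhat s).symm)
  · intro x
    have hout : (∫ s : ℝ, Complex.exp (Complex.I * x * s) *
        (∫ t : ℝ, Complex.exp (-(Complex.I * s * t)) *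
          ((p.eval t * Real.tanh t - Real.sign t * p.eval t : ℝ) : ℂ)))
        = (2 * π : ℝ) • ∫ w : ℝ,
            Complex.exp (Complex.I * x * (2 * (π:ℂ) * w)) * 𝓕 (g p) w := by
      have h1' : ∀ s : ℝ, Complex.exp (Complex.I * x * s) *
          (∫ t : ℝ, Complex.exp (-(Complex.I * s * t)) *
            ((p.eval t * Real.tanh t - Real.sign t * p.eval t : ℝ) : ℂ))
          = (fun w : ℝ => Complex.exp (Complex.I * x * (2 * (π:ℂ) * w)) * 𝓕 (g p) w)
              ((2 * π)⁻¹ * s) := by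
        intro s
        rw [hGhat s]
        show _ = Complex.exp (Complex.I * x * (2 * (π:ℂ) * (((2 * π)⁻¹ * s : ℝ) : ℂ)))
            * 𝓕 (g p) ((2 * π)⁻¹ * s)
        congr 2
        push_cast
        field_simp
      rw [integral_congr_ae (Filter.Eventually.of_forall h1'),
        Measure.integral_comp_inv_mul_left
          (fun w : ℝ => Complex.exp (Complex.I * x * (2 * (π:ℂ) * w)) * 𝓕 (g p) w) (2 * π)]
      rw [abs_of_pos (by positivity)]
    have hinv : (∫ w : ℝ, Complex.exp (Complex.I * x * (2 * (π:ℂ) * w)) * 𝓕 (g p) w)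
        = g p x := by
      rw [← inversion p h0 h1 x, Real.fourierInv_eq_fourier_neg,
        Real.fourier_real_eq_integral_exp_smul]
      refine integral_congr_ae (Filter.Eventually.of_forall fun w => ?_)
      beta_reduce
      rw [smul_eq_mul]
      congr 2
      push_cast
      ring
    rw [hout, hinv, Complex.real_smul]
    unfold g
    push_cast
    field_simp
    ring


end
end

section
/- For s > 0 let F(s) = lim_{R→∞} ∫_e^R sin(st)/log(t) dt (this improper integral exists for every s > 0). Then lim_{s→∞} ( s·F(s) − cos(es) ) = 0. -/
open Real Filter MeasureTheory Set
open scoped FourierTransform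

lemma one_lt_c : 1 < Real.exp 1 := by
  have := Real.exp_one_gt_d9; linarith

lemma integrable_aux :
    IntegrableOn (fun t : ℝ => 1/(t * (Real.log t)^2)) (Set.Ioi (Real.exp 1)) := by
  have hderiv : ∀ x ∈ Set.Ioi (Real.exp 1),
      HasDerivAt (fun t : ℝ => -(Real.log t)⁻¹) (1/(x * (Real.log x)^2)) x := by
    intro x hx
    have hx1 : 1 < x := lt_trans one_lt_c hx
    have hlog : Real.log x ≠ 0 := ne_of_gt (Real.log_pos hx1)
    have h := ((Real.hasDerivAt_log (by positivity)).inv hlog).neg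
    refine h.congr_deriv ?_
    field_simp
  refine integrableOn_Ioi_deriv_of_nonneg ?_ hderiv (fun x hx => ?_) (l := 0) ?_
  · exact (((Real.continuousAt_log (by positivity)).inv₀ (by simp)).neg).continuousWithinAt
  · have hx1 : 1 < x := lt_trans one_lt_c hx
    have := Real.log_pos hx1
    positivity
  · have : Filter.Tendsto (fun t : ℝ => (Real.log t)⁻¹) atTop (nhds 0) :=
      tendsto_inv_atTop_zero.comp Real.tendsto_log_atTop
    simpa using this.neg

lemma contOn_sin (s : ℝ) (R : ℝ) (hR : Real.exp 1 ≤ R) :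
    ContinuousOn (fun t : ℝ => Real.sin (s*t) / Real.log t) (Set.uIcc (Real.exp 1) R) := by
  intro x hx
  rw [Set.uIcc_of_le hR] at hx
  have hx1 : 1 < x := lt_of_lt_of_le one_lt_c hx.1
  exact (((Real.continuous_sin.comp (continuous_const.mul continuous_id)).continuousAt).div
    (Real.continuousAt_log (by positivity)) (ne_of_gt (Real.log_pos hx1))).continuousWithinAt

lemma contOn_cos (s : ℝ) (R : ℝ) (hR : Real.exp 1 ≤ R) :
    ContinuousOn (fun t : ℝ => Real.cos (s*t) / (t * (Real.log t)^2))
      (Set.uIcc (Real.exp 1) R) := by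
  intro x hx
  rw [Set.uIcc_of_le hR] at hx
  have hx1 : 1 < x := lt_of_lt_of_le one_lt_c hx.1
  have hlog := Real.log_pos hx1
  have hx0 : (0:ℝ) < x := by positivity
  exact (((Real.continuous_cos.comp (continuous_const.mul continuous_id)).continuousAt).div
    (continuousAt_id.mul ((Real.continuousAt_log hx0.ne').pow 2))
    (mul_pos hx0 (pow_pos hlog 2)).ne').continuousWithinAt

lemma contOn_cos_Ioi (s : ℝ) :
    ContinuousOn (fun t : ℝ => Real.cos (s*t) / (t * (Real.log t)^2))
      (Set.Ioi (Real.exp 1)) := by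
  intro x hx
  have hx1 : 1 < x := lt_trans one_lt_c hx
  have hlog := Real.log_pos hx1
  have hx0 : (0:ℝ) < x := by positivity
  exact (((Real.continuous_cos.comp (continuous_const.mul continuous_id)).continuousAt).div
    (continuousAt_id.mul ((Real.continuousAt_log hx0.ne').pow 2))
    (mul_pos hx0 (pow_pos hlog 2)).ne').continuousWithinAt

lemma intOn_cos (s : ℝ) :
    IntegrableOn (fun t : ℝ => Real.cos (s*t)/(t*(Real.log t)^2))
      (Set.Ioi (Real.exp 1)) := by
  refine integrable_aux.mono' ((contOn_cos_Ioi s).aestronglyMeasurable measurableSet_Ioi) ?_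
  rw [ae_restrict_iff' measurableSet_Ioi]
  filter_upwards with t ht
  have ht1 : 1 < t := lt_trans one_lt_c ht
  have hlog := Real.log_pos ht1
  have ht0 : (0:ℝ) < t := by positivity
  have hd : (0:ℝ) < t * (Real.log t)^2 := by positivity
  rw [Real.norm_eq_abs, abs_div, abs_of_pos hd, one_div]
  rw [div_eq_mul_inv]
  have := Real.abs_cos_le_one (s*t)
  calc |Real.cos (s*t)| * (t * Real.log t ^ 2)⁻¹ ≤ 1 * (t * Real.log t ^ 2)⁻¹ := by
        gcongr
    _ = (t * Real.log t ^ 2)⁻¹ := one_mul _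

lemma ibp (s : ℝ) (hs : 0 < s) (R : ℝ) (hR : Real.exp 1 ≤ R) :
    ∫ t in (Real.exp 1)..R, Real.sin (s*t) / Real.log t
      = (Real.cos (s*Real.exp 1) - Real.cos (s*R)/Real.log R)/s
        - (1/s) * ∫ t in (Real.exp 1)..R, Real.cos (s*t)/(t*(Real.log t)^2) := by
  have hψ : ∀ x ∈ Set.uIcc (Real.exp 1) R,
      HasDerivAt (fun t : ℝ => -(Real.cos (s*t) / (s * Real.log t)))
        (Real.sin (s*x)/Real.log x + (1/s) * (Real.cos (s*x)/(x*(Real.log x)^2))) x := by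
    intro x hx
    rw [Set.uIcc_of_le hR] at hx
    have hx1 : 1 < x := lt_of_lt_of_le one_lt_c hx.1
    have hx0 : x ≠ 0 := by positivity
    have hlog : 0 < Real.log x := Real.log_pos hx1
    have h1 : HasDerivAt (fun t : ℝ => Real.cos (s*t)) (-Real.sin (s*x) * s) x := by
      exact ((Real.hasDerivAt_cos (s*x)).comp x ((hasDerivAt_id' x).const_mul s)).congr_deriv (by ring)
    have h2 : HasDerivAt (fun t : ℝ => s * Real.log t) (s * x⁻¹) x :=
      (Real.hasDerivAt_log hx0).const_mul s
    have := (h1.div h2 (by positivity)).neg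
    refine this.congr_deriv ?_
    field_simp
    ring
  have hc1 := contOn_sin s R hR
  have hc2 : ContinuousOn (fun x : ℝ => (1/s) * (Real.cos (s*x)/(x*(Real.log x)^2)))
      (Set.uIcc (Real.exp 1) R) := continuousOn_const.mul (contOn_cos s R hR)
  have key := intervalIntegral.integral_eq_sub_of_hasDerivAt hψ
    ((hc1.add hc2).intervalIntegrable)
  rw [intervalIntegral.integral_add (hc1.intervalIntegrable) (hc2.intervalIntegrable),
    intervalIntegral.integral_const_mul] at key
  have hlogc : Real.log (Real.exp 1) = 1 := Real.log_exp 1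
  have hlogR : 0 < Real.log R := by
    have : 1 ≤ Real.log R := by rw [← hlogc]; exact Real.log_le_log (Real.exp_pos 1) hR
    linarith
  rw [hlogc, mul_one] at key
  have halg : (Real.cos (s*Real.exp 1) - Real.cos (s*R)/Real.log R)/s
      = -(Real.cos (s*R) / (s * Real.log R)) - -(Real.cos (s*Real.exp 1)/s) := by
    field_simp
    ring
  rw [halg]
  linarith [key]

noncomputable def T (s : ℝ) : ℝ :=
  ∫ t in Set.Ioi (Real.exp 1), Real.cos (s*t)/(t*(Real.log t)^2)

lemma exp_mul_I_re_aux (θ r : ℝ) :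
    (Complex.exp ((θ:ℂ) * Complex.I) * (r:ℂ)).re = Real.cos θ * r := by
  simp [Complex.mul_re, Complex.exp_ofReal_mul_I_re, Complex.exp_ofReal_mul_I_im]

lemma T_tendsto : Filter.Tendsto T atTop (nhds 0) := by
  set g : ℝ → ℝ := Set.indicator (Set.Ioi (Real.exp 1)) (fun t => 1/(t * (Real.log t)^2))
    with hg
  have hgint : Integrable g := by
    rw [hg, integrable_indicator_iff measurableSet_Ioi]
    exact integrable_aux
  set G : ℝ → ℂ := fun t => (g t : ℂ) with hG
  have hGint : Integrable G := hgint.ofReal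
  have RL := Real.tendsto_integral_exp_smul_cocompact G
  have hmap : Filter.Tendsto (fun s : ℝ => s / (2*π)) atTop (Filter.cocompact ℝ) := by
    rw [cocompact_eq_atBot_atTop]
    exact (tendsto_id.atTop_div_const (by positivity)).mono_right le_sup_right
  have comp := (Complex.continuous_re.tendsto 0).comp (RL.comp hmap)
  simp only [Complex.zero_re] at comp
  refine comp.congr (fun s => ?_)
  show (∫ v : ℝ, 𝐞 (-(v * (s/(2*π)))) • G v).re = T s
  have hInt : Integrable (fun v : ℝ => 𝐞 (-(v * (s/(2*π)))) • G v) := by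
    have h1 : Integrable (fun v : ℝ => (𝐞 (-(v * (s/(2*π)))) : ℂ) * G v) :=
      hGint.bdd_mul (Continuous.aestronglyMeasurable (by continuity)) (c := 1) (Filter.Eventually.of_forall fun v => (Circle.norm_coe _).le)
    exact h1.congr (Filter.Eventually.of_forall fun v => (Circle.smul_def _ _).symm)
  rw [← RCLike.re_eq_complex_re, ← integral_re hInt]
  have hpt : ∀ v : ℝ, RCLike.re (𝐞 (-(v * (s/(2*π)))) • G v)
      = Set.indicator (Set.Ioi (Real.exp 1))
          (fun t => Real.cos (s*t)/(t*(Real.log t)^2)) v := by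
    intro v
    rw [RCLike.re_eq_complex_re, Circle.smul_def, Real.fourierChar_apply]
    have h2 : 2 * π * -(v * (s / (2*π))) = -(s * v) := by
      field_simp
    rw [h2]
    by_cases hv : v ∈ Set.Ioi (Real.exp 1)
    · rw [hG]
      simp only [hg, Set.indicator_of_mem hv]
      rw [smul_eq_mul, exp_mul_I_re_aux, Real.cos_neg, div_eq_mul_one_div (Real.cos (s*v))]
    · rw [hG]
      simp [hg, Set.indicator_of_notMem hv]
  rw [MeasureTheory.integral_congr_ae (Filter.Eventually.of_forall hpt),
    MeasureTheory.integral_indicator measurableSet_Ioi]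
  rfl

lemma limF (s : ℝ) (hs : 0 < s) :
    Filter.Tendsto (fun R : ℝ => ∫ t in (Real.exp 1)..R, Real.sin (s*t) / Real.log t)
      atTop (nhds (Real.cos (s*Real.exp 1)/s - (1/s) * T s)) := by
  have h1 : Filter.Tendsto (fun R : ℝ => Real.cos (s*R)/Real.log R) atTop (nhds 0) := by
    apply squeeze_zero_norm' ?_ (tendsto_inv_atTop_zero.comp Real.tendsto_log_atTop)
    filter_upwards [eventually_ge_atTop (Real.exp 1)] with R hR
    have hlogR : 0 < Real.log R := by
      have : 1 ≤ Real.log R := by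
        rw [← Real.log_exp 1]; exact Real.log_le_log (Real.exp_pos 1) hR
      linarith
    show ‖Real.cos (s*R)/Real.log R‖ ≤ (Real.log R)⁻¹
    rw [Real.norm_eq_abs, abs_div, abs_of_pos hlogR, div_eq_mul_inv]
    calc |Real.cos (s*R)| * (Real.log R)⁻¹ ≤ 1 * (Real.log R)⁻¹ := by
          gcongr; exact Real.abs_cos_le_one _
      _ = (Real.log R)⁻¹ := one_mul _
  have h2 := MeasureTheory.intervalIntegral_tendsto_integral_Ioi (Real.exp 1)
    (intOn_cos s) tendsto_id
  have h3 : Filter.Tendsto (fun R : ℝ =>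
      (Real.cos (s*Real.exp 1) - Real.cos (s*R)/Real.log R)/s
        - (1/s) * ∫ t in (Real.exp 1)..R, Real.cos (s*t)/(t*(Real.log t)^2)) atTop
      (nhds ((Real.cos (s*Real.exp 1) - 0)/s - (1/s) * T s)) :=
    ((tendsto_const_nhds.sub h1).div_const s).sub (h2.const_mul (1/s))
  rw [sub_zero] at h3
  refine h3.congr' ?_
  filter_upwards [eventually_ge_atTop (Real.exp 1)] with R hR
  exact (ibp s hs R hR).symm

/-- For `s > 0` the improper integral `F(s) = lim_{R→∞} ∫_e^R sin(st)/log(t) dt` exists,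
and `s·F(s) - cos(es) → 0` as `s → ∞`. -/
theorem asymptotics_F_atTop :
    (∀ s : ℝ, 0 < s → ∃ L : ℝ, Filter.Tendsto
      (fun R : ℝ => ∫ t in (Real.exp 1)..R, Real.sin (s * t) / Real.log t)
      Filter.atTop (nhds L)) ∧
    ∀ F : ℝ → ℝ,
      (∀ s : ℝ, 0 < s → Filter.Tendsto
        (fun R : ℝ => ∫ t in (Real.exp 1)..R, Real.sin (s * t) / Real.log t)
        Filter.atTop (nhds (F s))) →
      Filter.Tendsto (fun s : ℝ => s * F s - Real.cos (Real.exp 1 * s))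
        Filter.atTop (nhds 0) := by
  constructor
  · intro s hs
    exact ⟨_, limF s hs⟩
  · intro F hF
    have hFeq : ∀ s : ℝ, 0 < s → F s = Real.cos (s*Real.exp 1)/s - (1/s) * T s :=
      fun s hs => tendsto_nhds_unique (hF s hs) (limF s hs)
    have hT : Filter.Tendsto (fun s : ℝ => -T s) atTop (nhds 0) := by
      simpa using T_tendsto.neg
    refine hT.congr' ?_
    filter_upwards [eventually_gt_atTop 0] with s hs
    rw [hFeq s hs, mul_comm (Real.exp 1) s]
    field_simp
    ring
end
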